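/- arXiv:1710.01560 — 17 statements merged into one kernel-verified Lean document; each statement's English description precedes it below -/
import Mathlib

section
/- Let d : ℕ → ℚ be defined by d(N) = Σ_{j=1}^∞ ‖N/2^j‖, where ‖x‖ denotes the distance from x to the nearest integer. Then d satisfies the recurrence d(0) = 0, d(1) = 1, d(2N) = d(N), and d(2N+1) = (d(N) + d(N+1) + 1)/2 for all N ≥ 0. -/
/-!
Doubling `N` shifts the series by one term, and the dropped term `‖N‖` vanishes. For odd
arguments, the first term is `‖(2N+1)/2‖ = 1/2`, and every later term is `‖·‖` at the midpoint of
`N/2^(j+1)` and `(N+1)/2^(j+1)`. These two consecutive multiples of `1/2^(j+1)` lie in one interval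
`[q/2, (q+1)/2]` with `q = ⌊N/2^j⌋`, and `‖·‖` is affine on each such interval, so the term is the
average of the corresponding terms for `N` and `N+1`.
-/

/-- Distance from a real number to the nearest integer. -/
noncomputable def distNearestInt (x : ℝ) : ℝ := |x - (round x : ℤ)|

/-- `d N = ∑_{j=1}^∞ ‖N/2^j‖`. -/
noncomputable def dVdC (N : ℕ) : ℝ := ∑' j : ℕ, distNearestInt ((N : ℝ) / 2 ^ (j + 1))

theorem distNearestInt_le_abs_sub (x : ℝ) (k : ℤ) : distNearestInt x ≤ |x - k| :=
  round_le x k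

theorem distNearestInt_eq_abs_sub {x : ℝ} {k : ℤ} (h : |x - k| ≤ 1 / 2) :
    distNearestInt x = |x - k| := by
  refine (distNearestInt_le_abs_sub x k).antisymm (not_lt.mp fun hlt => hlt.ne ?_)
  have hround : round x = k := by
    have hclose : |((round x - k : ℤ) : ℝ)| < 1 := by
      push_cast
      calc |(round x : ℝ) - k| ≤ |(round x : ℝ) - x| + |x - k| := abs_sub_le _ _ _
        _ < 1 := by rw [abs_sub_comm]; unfold distNearestInt at hlt; linarith
    rw [← Int.cast_abs, ← Int.cast_one, Int.cast_lt, abs_lt] at hclose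
    omega
  rw [distNearestInt, hround]

theorem distNearestInt_natCast (n : ℕ) : distNearestInt n = 0 := by
  simpa using distNearestInt_eq_abs_sub (x := n) (k := n) (by simp)

theorem distNearestInt_le_abs (x : ℝ) : distNearestInt x ≤ |x| := by
  simpa using distNearestInt_le_abs_sub x 0

theorem distNearestInt_eq_sub_of_mem_Icc {x : ℝ} {k : ℤ}
    (hx : x ∈ Set.Icc (k : ℝ) (k + 1 / 2)) : distNearestInt x = x - k := by
  rw [distNearestInt_eq_abs_sub (k := k) (abs_le.2 ⟨by linarith [hx.1], by linarith [hx.2]⟩),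
    abs_of_nonneg (by linarith [hx.1])]

theorem distNearestInt_eq_add_one_sub_of_mem_Icc {x : ℝ} {k : ℤ}
    (hx : x ∈ Set.Icc (k + 1 / 2 : ℝ) (k + 1)) : distNearestInt x = k + 1 - x := by
  have hclose : |x - ((k + 1 : ℤ) : ℝ)| ≤ 1 / 2 := by
    push_cast
    exact abs_le.2 ⟨by linarith [hx.1], by linarith [hx.2]⟩
  rw [distNearestInt_eq_abs_sub hclose, abs_of_nonpos (by push_cast; linarith [hx.2])]
  push_cast
  ring

theorem distNearestInt_midpoint {x y : ℝ} (n : ℤ) (hx : x ∈ Set.Icc (n / 2 : ℝ) ((n + 1) / 2))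
    (hy : y ∈ Set.Icc (n / 2 : ℝ) ((n + 1) / 2)) :
    distNearestInt ((x + y) / 2) = (distNearestInt x + distNearestInt y) / 2 := by
  obtain ⟨hx₀, hx₁⟩ := hx
  obtain ⟨hy₀, hy₁⟩ := hy
  obtain ⟨k, rfl | rfl⟩ := Int.even_or_odd' n
  · rw [distNearestInt_eq_sub_of_mem_Icc (k := k) ?_, distNearestInt_eq_sub_of_mem_Icc (k := k) ?_,
      distNearestInt_eq_sub_of_mem_Icc (k := k) ?_]
    · ring
    all_goals push_cast at hx₀ hx₁ hy₀ hy₁; exact ⟨by linarith, by linarith⟩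
  · rw [distNearestInt_eq_add_one_sub_of_mem_Icc (k := k) ?_,
      distNearestInt_eq_add_one_sub_of_mem_Icc (k := k) ?_,
      distNearestInt_eq_add_one_sub_of_mem_Icc (k := k) ?_]
    · ring
    all_goals push_cast at hx₀ hx₁ hy₀ hy₁; exact ⟨by linarith, by linarith⟩

theorem summable_distNearestInt_div_two_pow (x : ℝ) :
    Summable fun j : ℕ => distNearestInt (x / 2 ^ (j + 1)) := by
  refine (summable_geometric_two' |x|).of_nonneg_of_le (fun j => abs_nonneg _) (fun j => ?_)
  calc distNearestInt (x / 2 ^ (j + 1)) ≤ |x / 2 ^ (j + 1)| := distNearestInt_le_abs _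
    _ = |x| / 2 / 2 ^ j := by
      rw [abs_div, abs_of_pos (by positivity : (0 : ℝ) < 2 ^ (j + 1)), pow_succ]
      ring

theorem distNearestInt_odd_div_two_pow (N j : ℕ) :
    distNearestInt ((2 * N + 1) / 2 ^ (j + 2)) =
      (distNearestInt (N / 2 ^ (j + 1)) + distNearestInt ((N + 1) / 2 ^ (j + 1))) / 2 := by
  obtain ⟨q, r, hr, rfl⟩ : ∃ q r : ℕ, r < 2 ^ j ∧ N = 2 ^ j * q + r :=
    ⟨N / 2 ^ j, N % 2 ^ j, Nat.mod_lt _ (by positivity), (Nat.div_add_mod N _).symm⟩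
  have hr' : (r : ℝ) + 1 ≤ 2 ^ j := by exact_mod_cast hr
  rw [← distNearestInt_midpoint q]
  · congr 1
    field_simp
    ring
  all_goals
    push_cast
    constructor <;> rw [div_le_div_iff₀ (by positivity) (by positivity)] <;>
      (rw [pow_succ]; nlinarith)

theorem dVdC_zero : dVdC 0 = 0 := by
  simp [dVdC, distNearestInt]

theorem dVdC_one : dVdC 1 = 1 := by
  have hterm (j : ℕ) : distNearestInt (((1 : ℕ) : ℝ) / 2 ^ (j + 1)) = 1 / 2 / 2 ^ j := by
    have hmem : (1 : ℝ) / 2 ^ (j + 1) ∈ Set.Icc ((0 : ℤ) : ℝ) ((0 : ℤ) + 1 / 2) := by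
      rw [Int.cast_zero, zero_add]
      exact ⟨by positivity,
        one_div_le_one_div_of_le two_pos (le_self_pow₀ one_le_two j.succ_ne_zero)⟩
    rw [Nat.cast_one, distNearestInt_eq_sub_of_mem_Icc hmem, Int.cast_zero, sub_zero, pow_succ',
      ← div_div]
  rw [dVdC, tsum_congr hterm, tsum_geometric_two']

theorem dVdC_two_mul (N : ℕ) : dVdC (2 * N) = dVdC N := by
  have hterm (j : ℕ) : distNearestInt (((2 * N : ℕ) : ℝ) / 2 ^ (j + 1)) =
      distNearestInt ((N : ℝ) / 2 ^ j) := by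
    congr 1
    push_cast
    rw [pow_succ, mul_comm, mul_div_mul_right _ _ two_ne_zero]
  rw [dVdC, tsum_congr hterm, tsum_eq_zero_add' (f := fun j => distNearestInt ((N : ℝ) / 2 ^ j))
    (summable_distNearestInt_div_two_pow N), pow_zero, div_one,
    distNearestInt_natCast, zero_add, dVdC]

theorem dVdC_two_mul_add_one (N : ℕ) :
    dVdC (2 * N + 1) = (dVdC N + dVdC (N + 1) + 1) / 2 := by
  have hhead : distNearestInt (((2 * N + 1 : ℕ) : ℝ) / 2 ^ (0 + 1)) = 1 / 2 := by
    rw [distNearestInt_eq_sub_of_mem_Icc (k := N) ⟨by push_cast; linarith, by push_cast; linarith⟩]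
    push_cast
    ring
  have htail (j : ℕ) : distNearestInt (((2 * N + 1 : ℕ) : ℝ) / 2 ^ (j + 1 + 1)) =
      (distNearestInt ((N : ℝ) / 2 ^ (j + 1)) +
        distNearestInt (((N + 1 : ℕ) : ℝ) / 2 ^ (j + 1))) / 2 := by
    push_cast
    exact distNearestInt_odd_div_two_pow N j
  rw [dVdC, (summable_distNearestInt_div_two_pow _).tsum_eq_zero_add, hhead, tsum_congr htail,
    tsum_div_const, (summable_distNearestInt_div_two_pow _).tsum_add
      (summable_distNearestInt_div_two_pow _), dVdC, dVdC]
  ring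

theorem vdc_recurrence :
    dVdC 0 = 0 ∧ dVdC 1 = 1 ∧
    (∀ N : ℕ, dVdC (2 * N) = dVdC N) ∧
    (∀ N : ℕ, dVdC (2 * N + 1) = (dVdC N + dVdC (N + 1) + 1) / 2) :=
  ⟨dVdC_zero, dVdC_one, dVdC_two_mul, dVdC_two_mul_add_one⟩
end

section
/- Define d : ℕ → ℚ by d(0) = 0, d(1) = 1, d(2N) = d(N), d(2N+1) = (d(N) + d(N+1) + 1)/2. For every nonnegative integer N, (1/2)·|N|_{01} ≤ d(N) ≤ 2·|N|_{01}, where |N|_{01} denotes the number of (possibly overlapping) occurrences of the block '01' in the binary expansion of N read with a leading zero (equivalently, the number of maximal blocks of consecutive 1s in the binary expansion of N). -/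
/-!
Both bounds follow by induction along the binary recursion `n ↦ 2n, 2n + 1`, carried on the
pair `(n, n + 1)` because `d (2n + 1)` involves `d n` and `d (n + 1)`. Writing `b` for
`blockCount`, one has `b (2n) = b n`, `b (2n + 1) = b n + 1 - n % 2`, and adding one changes
the block count by little: `b n ≤ b (n + 1) + n % 2 ≤ b n + 1`. This suffices for the lower bound
`b ≤ 2d`; the upper bound `d ≤ 2b` needs the sharper companion `d (n + 1) + n % 2 ≤ b n + b (n + 1)`.
-/

/-- The number of occurrences of the block `01` in the binary expansion of `N`
(read with a leading zero), i.e. the number of maximal blocks of consecutive 1s. -/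
def blockCount (N : ℕ) : ℕ :=
  ((Finset.range (N + 1)).filter fun i => N.testBit i ∧ ¬ N.testBit (i + 1)).card

open Finset

lemma blockCount_eq_card_filter_range {N K : ℕ} (hK : N ≤ K) :
    blockCount N = #{i ∈ range K | N.testBit i ∧ ¬ N.testBit (i + 1)} := by
  have lt_of_testBit {i : ℕ} (h : N.testBit i) : i < N :=
    Nat.lt_two_pow_self.trans_le (Nat.ge_two_pow_of_testBit h)
  rw [blockCount]
  congr 1
  ext i
  simp only [mem_filter, mem_range]
  exact ⟨fun ⟨_, h⟩ => ⟨by have := lt_of_testBit h.1; omega, h⟩,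
    fun ⟨_, h⟩ => ⟨by have := lt_of_testBit h.1; omega, h⟩⟩

lemma blockCount_eq_blockCount_div_two_add (N : ℕ) :
    blockCount N = blockCount (N / 2) + if N.testBit 0 ∧ ¬ N.testBit 1 then 1 else 0 := by
  rw [blockCount, card_filter, sum_range_succ', ← card_filter,
    blockCount_eq_card_filter_range (Nat.div_le_self N 2)]
  simp only [Nat.testBit_succ]

lemma blockCount_two_mul (n : ℕ) : blockCount (2 * n) = blockCount n := by
  rw [blockCount_eq_blockCount_div_two_add, Nat.testBit_zero]
  simp

lemma blockCount_two_mul_add_one (n : ℕ) :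
    blockCount (2 * n + 1) + n % 2 = blockCount n + 1 := by
  rw [blockCount_eq_blockCount_div_two_add, Nat.testBit_zero, Nat.testBit_succ, Nat.testBit_zero,
    show (2 * n + 1) / 2 = n by omega]
  split_ifs with h <;> simp at h <;> omega

lemma blockCount_succ_add_mod_two_mem_Icc (n : ℕ) :
    blockCount (n + 1) + n % 2 ∈ Set.Icc (blockCount n) (blockCount n + 1) := by
  induction n using Nat.evenOddRec with
  | h0 => decide
  | h_even n _ =>
    have := blockCount_two_mul_add_one n
    rw [blockCount_two_mul, Set.mem_Icc]
    omega
  | h_odd n ih =>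
    have := blockCount_two_mul_add_one n
    rw [show 2 * n + 1 + 1 = 2 * (n + 1) by ring, blockCount_two_mul, Set.mem_Icc]
    rw [Set.mem_Icc] at ih
    omega

lemma cast_blockCount_two_mul_add_one (n : ℕ) :
    (blockCount (2 * n + 1) : ℚ) = blockCount n + 1 - (n % 2 : ℕ) := by
  rw [eq_sub_iff_add_eq]
  exact_mod_cast blockCount_two_mul_add_one n

lemma cast_blockCount_le_succ_add_mod_two (n : ℕ) :
    (blockCount n : ℚ) ≤ blockCount (n + 1) + (n % 2 : ℕ) ∧
      (blockCount (n + 1) : ℚ) + (n % 2 : ℕ) ≤ blockCount n + 1 := by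
  obtain ⟨hlo, hhi⟩ := blockCount_succ_add_mod_two_mem_Icc n
  exact ⟨by exact_mod_cast hlo, by exact_mod_cast hhi⟩

section Recurrence

variable {d : ℕ → ℚ}

lemma blockCount_le_two_mul_of_recurrence (h0 : d 0 = 0) (h1 : d 1 = 1)
    (heven : ∀ N : ℕ, d (2 * N) = d N)
    (hodd : ∀ N : ℕ, d (2 * N + 1) = (d N + d (N + 1) + 1) / 2) (n : ℕ) :
    (blockCount n : ℚ) ≤ 2 * d n ∧ (blockCount (n + 1) : ℚ) ≤ 2 * d (n + 1) := by
  induction n using Nat.evenOddRec with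
  | h0 => norm_num [h0, h1, show blockCount 0 = 0 by decide, show blockCount 1 = 1 by decide]
  | h_even n ih =>
    have hlo := (cast_blockCount_le_succ_add_mod_two n).1
    rw [blockCount_two_mul, heven, hodd, cast_blockCount_two_mul_add_one]
    constructor <;> linarith [ih.1, ih.2]
  | h_odd n ih =>
    have hlo := (cast_blockCount_le_succ_add_mod_two n).1
    rw [show 2 * n + 1 + 1 = 2 * (n + 1) by ring, blockCount_two_mul, heven, hodd,
      cast_blockCount_two_mul_add_one]
    constructor <;> linarith [ih.1, ih.2]

lemma le_two_mul_blockCount_of_recurrence (h0 : d 0 = 0) (h1 : d 1 = 1)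
    (heven : ∀ N : ℕ, d (2 * N) = d N)
    (hodd : ∀ N : ℕ, d (2 * N + 1) = (d N + d (N + 1) + 1) / 2) (n : ℕ) :
    d n ≤ 2 * blockCount n ∧ d (n + 1) + (n % 2 : ℕ) ≤ blockCount n + blockCount (n + 1) := by
  induction n using Nat.evenOddRec with
  | h0 => norm_num [h0, h1, show blockCount 0 = 0 by decide, show blockCount 1 = 1 by decide]
  | h_even n ih =>
    have hhi := (cast_blockCount_le_succ_add_mod_two n).2
    rw [blockCount_two_mul, heven, hodd, cast_blockCount_two_mul_add_one, Nat.mul_mod_right]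
    constructor <;> push_cast <;> linarith [ih.1, ih.2]
  | h_odd n ih =>
    have hhi := (cast_blockCount_le_succ_add_mod_two n).2
    have hp : ((n % 2 : ℕ) : ℚ) ≤ 1 := by exact_mod_cast Nat.le_of_lt_succ (Nat.mod_lt n two_pos)
    rw [show 2 * n + 1 + 1 = 2 * (n + 1) by ring, blockCount_two_mul, heven, hodd,
      cast_blockCount_two_mul_add_one, Nat.mul_add_mod]
    constructor <;> push_cast <;> linarith [ih.1, ih.2]

end Recurrence

theorem discrepancy_blockCount_bounds (d : ℕ → ℚ)
    (h0 : d 0 = 0) (h1 : d 1 = 1)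
    (heven : ∀ N : ℕ, d (2 * N) = d N)
    (hodd : ∀ N : ℕ, d (2 * N + 1) = (d N + d (N + 1) + 1) / 2)
    (N : ℕ) :
    (blockCount N : ℚ) / 2 ≤ d N ∧ d N ≤ 2 * (blockCount N : ℚ) := by
  constructor
  · linarith [(blockCount_le_two_mul_of_recurrence h0 h1 heven hodd N).1]
  · exact (le_two_mul_blockCount_of_recurrence h0 h1 heven hodd N).1
end

section
/- For integers k ≥ 0 and ℓ ≥ 1, the number of integers n in [2^k, 2^{k+1}) whose binary expansion contains exactly ℓ maximal blocks of consecutive 1s equals the binomial coefficient C(k+1, 2ℓ−1). -/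
/-!
Read the bits of `n` upwards, followed by infinitely many zeros, and let `bitChanges n` be the
number of positions where consecutive bits differ. Each block of 1s has two boundaries, except
that the lowest block loses its lower one when `n` is odd, so `2 * blockCount n = bitChanges n +
n % 2`. The two children `2 * m`, `2 * m + 1` of `m` have `bitChanges m` and `bitChanges m + 1`
in some order, so the number of `n < 2 ^ k` with `j` bit changes obeys Pascal's rule and equals
`k.choose j`. Hence `(k + 1).choose (2 * ℓ)` numbers below `2 ^ k` have `ℓ` blocks, and the
count on `[2 ^ k, 2 ^ (k + 1))` is `(k + 2).choose (2 * ℓ) - (k + 1).choose (2 * ℓ)`.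
-/

open Finset

lemma Nat.testBit_eq_false_of_le {n i : ℕ} (h : n ≤ i) : n.testBit i = false :=
  testBit_lt_two_pow (h.trans_lt i.lt_two_pow_self)

def adjacentBitCount (P : Bool → Bool → Prop) [DecidableRel P] (n : ℕ) : ℕ :=
  #{i ∈ range (n + 1) | P (n.testBit i) (n.testBit (i + 1))}

def bitChanges (n : ℕ) : ℕ := adjacentBitCount (· ≠ ·) n

section adjacentBitCount

variable {P : Bool → Bool → Prop} [DecidableRel P]

lemma adjacentBitCount_eq_card_range (hP : ¬ P false false) {n M : ℕ} (h : n ≤ M) :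
    adjacentBitCount P n = #{i ∈ range M | P (n.testBit i) (n.testBit (i + 1))} := by
  unfold adjacentBitCount
  congr 1
  ext i
  simp only [mem_filter, mem_range]
  refine ⟨fun ⟨hi, hPi⟩ => ⟨?_, hPi⟩, fun ⟨hi, hPi⟩ => ⟨?_, hPi⟩⟩ <;>
  · by_contra! hni
    rw [Nat.testBit_eq_false_of_le (by omega), Nat.testBit_eq_false_of_le (by omega)] at hPi
    exact hP hPi

lemma adjacentBitCount_eq_div_two_add (hP : ¬ P false false) (n : ℕ) :
    adjacentBitCount P n =
      adjacentBitCount P (n / 2) + if P (n.testBit 0) (n.testBit 1) then 1 else 0 := by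
  rw [adjacentBitCount, card_filter, sum_range_succ',
    adjacentBitCount_eq_card_range hP (n.div_le_self 2), card_filter]
  simp only [Nat.testBit_div_two]

end adjacentBitCount

lemma blockCount_eq_div_two_add (n : ℕ) :
    blockCount n = blockCount (n / 2) + if n.testBit 0 ∧ ¬ n.testBit 1 then 1 else 0 :=
  adjacentBitCount_eq_div_two_add (P := fun a b => a ∧ ¬ b) (by simp) n

lemma bitChanges_eq_div_two_add (n : ℕ) :
    bitChanges n = bitChanges (n / 2) + if n.testBit 0 ≠ n.testBit 1 then 1 else 0 :=
  adjacentBitCount_eq_div_two_add (by simp) n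

lemma two_mul_blockCount (n : ℕ) : 2 * blockCount n = bitChanges n + n % 2 := by
  induction n using Nat.strong_induction_on with
  | _ n ih =>
    rcases n.eq_zero_or_pos with rfl | hn
    · rfl
    · have := ih (n / 2) (Nat.div_lt_self hn one_lt_two)
      rw [blockCount_eq_div_two_add, bitChanges_eq_div_two_add, ← Nat.testBit_div_two,
        Nat.testBit_zero, Nat.testBit_zero]
      split_ifs <;> simp_all <;> omega

lemma bitChanges_two_mul (m : ℕ) :
    bitChanges (2 * m) = bitChanges m + if m.testBit 0 then 1 else 0 := by
  rw [bitChanges_eq_div_two_add, ← Nat.testBit_div_two, Nat.mul_div_cancel_left m two_pos,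
    Nat.testBit_zero, Nat.mul_mod_right]
  simp [eq_comm]

lemma bitChanges_two_mul_add_one (m : ℕ) :
    bitChanges (2 * m + 1) = bitChanges m + if m.testBit 0 then 0 else 1 := by
  rw [bitChanges_eq_div_two_add, ← Nat.testBit_div_two, show (2 * m + 1) / 2 = m by omega,
    Nat.testBit_zero, Nat.mul_add_mod]
  simp [eq_comm]

lemma Finset.sum_range_two_mul {M : Type*} [AddCommMonoid M] (f : ℕ → M) (a : ℕ) :
    ∑ n ∈ range (2 * a), f n = ∑ m ∈ range a, (f (2 * m) + f (2 * m + 1)) := by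
  induction a with
  | zero => simp
  | succ a ih => rw [mul_add_one, sum_range_succ, sum_range_succ, sum_range_succ, ih, add_assoc]

lemma card_filter_range_two_pow_bitChanges (k j : ℕ) :
    #{n ∈ range (2 ^ k) | bitChanges n = j} = k.choose j := by
  induction k generalizing j with
  | zero => cases j <;> rfl
  | succ k ih =>
    have hchildren : #{n ∈ range (2 ^ (k + 1)) | bitChanges n = j} =
        #{m ∈ range (2 ^ k) | bitChanges m = j} + #{m ∈ range (2 ^ k) | bitChanges m + 1 = j} := by
      simp only [card_filter, pow_succ', sum_range_two_mul, ← sum_add_distrib]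
      refine sum_congr rfl fun m _ => ?_
      rw [bitChanges_two_mul, bitChanges_two_mul_add_one]
      cases m.testBit 0 <;> simp [add_comm]
    rw [hchildren, ih]
    cases j with
    | zero => simp
    | succ i => simp [ih, Nat.choose_succ_succ', add_comm]

lemma card_filter_range_two_pow_blockCount (k : ℕ) {ℓ : ℕ} (hℓ : 1 ≤ ℓ) :
    #{n ∈ range (2 ^ k) | blockCount n = ℓ} = (k + 1).choose (2 * ℓ) := by
  have hsplit (n : ℕ) : blockCount n = ℓ ↔ bitChanges n = 2 * ℓ - 1 ∨ bitChanges n = 2 * ℓ := by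
    have := two_mul_blockCount n
    omega
  rw [filter_congr fun n _ => hsplit n, filter_or, card_union_of_disjoint
    (disjoint_filter.2 fun n _ h => by omega), card_filter_range_two_pow_bitChanges,
    card_filter_range_two_pow_bitChanges]
  obtain ⟨i, hi⟩ : ∃ i, 2 * ℓ = i + 1 := ⟨2 * ℓ - 1, by omega⟩
  rw [hi, Nat.add_sub_cancel, Nat.choose_succ_succ']

theorem count_blockCount_eq_choose (k ℓ : ℕ) (hℓ : 1 ≤ ℓ) :
    ((Finset.Ico (2 ^ k) (2 ^ (k + 1))).filter fun n => blockCount n = ℓ).card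
      = (k + 1).choose (2 * ℓ - 1) := by
  have hle : 2 ^ k ≤ 2 ^ (k + 1) := Nat.pow_le_pow_right two_pos k.le_succ
  have hsum := sum_range_add_sum_Ico (fun n => if blockCount n = ℓ then 1 else 0) hle
  simp only [← card_filter, card_filter_range_two_pow_blockCount _ hℓ] at hsum
  obtain ⟨i, hi⟩ : ∃ i, 2 * ℓ = i + 1 := ⟨2 * ℓ - 1, by omega⟩
  rw [hi, Nat.choose_succ_succ' (k + 1)] at hsum
  rw [hi, Nat.add_sub_cancel]
  omega
end

section
/- Assume k, ℓ ≥ 1 are integers and α, β ∈ (0, 1/e] are real numbers with α·k ≤ ℓ ≤ β·k. Then (1/(3√k))·(α^{−α}/(1−α)^{1−β})^k ≤ C(k, ℓ) ≤ (β^{−β}/(1−β)^{1−α})^k, where C(k, ℓ) is the binomial coefficient. -/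
open Real

/-- `t * log t` is antitone on `(0, 1/e]`. -/
lemma aux_mul_log_anti {a b : ℝ} (ha : 0 < a) (hab : a ≤ b) (hb : b ≤ (Real.exp 1)⁻¹) :
    b * Real.log b ≤ a * Real.log a := by
  have hmain : AntitoneOn (fun t : ℝ => t * Real.log t) (Set.Icc a (Real.exp 1)⁻¹) := by
    apply antitoneOn_of_deriv_nonpos (convex_Icc _ _)
    · apply ContinuousOn.mul continuousOn_id
      apply Real.continuousOn_log.mono
      intro t ht
      simp only [Set.mem_compl_iff, Set.mem_singleton_iff]
      have := ht.1
      intro h; rw [h] at this; linarith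
    · intro t ht
      rw [interior_Icc] at ht
      have ht0 : t ≠ 0 := by have := ht.1; intro h; rw [h] at this; linarith
      exact (Real.hasDerivAt_mul_log ht0).differentiableAt.differentiableWithinAt
    · intro t ht
      rw [interior_Icc] at ht
      have ht0 : 0 < t := lt_trans ha ht.1
      rw [(Real.hasDerivAt_mul_log ht0.ne').deriv]
      have : Real.log t ≤ Real.log (Real.exp 1)⁻¹ := Real.log_le_log ht0 ht.2.le
      rw [Real.log_inv, Real.log_exp] at this
      linarith
  exact hmain ⟨le_refl a, hab.trans hb⟩ ⟨hab, hb⟩ hab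

lemma aux_stirling_le (n : ℕ) (hn : 1 ≤ n) :
    Stirling.stirlingSeq n ≤ Real.exp 1 / Real.sqrt 2 := by
  have h1 : Nat.succ (n - 1) = n := by omega
  have := Stirling.stirlingSeq'_antitone (Nat.zero_le (n - 1))
  simp only [Function.comp_apply, h1] at this
  rwa [Stirling.stirlingSeq_one] at this

lemma aux_le_stirling (n : ℕ) (hn : 1 ≤ n) : Real.sqrt π ≤ Stirling.stirlingSeq n := by
  refine le_of_tendsto Stirling.tendsto_stirlingSeq_sqrt_pi ?_
  filter_upwards [Filter.eventually_ge_atTop n] with m hm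
  have h1 : Nat.succ (n - 1) = n := by omega
  have h2 : Nat.succ (m - 1) = m := by omega
  have := Stirling.stirlingSeq'_antitone (show n - 1 ≤ m - 1 by omega)
  simpa only [Function.comp_apply, h1, h2] using this

lemma aux_log_factorial_le (n : ℕ) (hn : 1 ≤ n) :
    Real.log (n.factorial : ℝ) ≤ 1 + 1/2 * Real.log n + n * (Real.log n - 1) := by
  have hn0 : (0:ℝ) < n := by exact_mod_cast hn
  have hf : Real.log (Stirling.stirlingSeq n) =
      Real.log (n.factorial : ℝ) - 1/2 * Real.log (2 * n) - n * Real.log (n / Real.exp 1) :=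
    Stirling.log_stirlingSeq_formula n
  have hpos : 0 < Stirling.stirlingSeq n := by
    have := Stirling.stirlingSeq'_pos (n - 1)
    rwa [show n - 1 + 1 = n by omega] at this
  have h2 : Real.log (Stirling.stirlingSeq n) ≤ Real.log (Real.exp 1 / Real.sqrt 2) :=
    Real.log_le_log hpos (aux_stirling_le n hn)
  have h3 : Real.log (Real.exp 1 / Real.sqrt 2) = 1 - 1/2 * Real.log 2 := by
    rw [Real.log_div (Real.exp_ne_zero 1) (by positivity), Real.log_exp,
      Real.log_sqrt (by norm_num)]
    ring
  have h4 : Real.log (2 * n) = Real.log 2 + Real.log n :=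
    Real.log_mul (by norm_num) hn0.ne'
  have h5 : Real.log ((n : ℝ) / Real.exp 1) = Real.log n - 1 := by
    rw [Real.log_div hn0.ne' (Real.exp_ne_zero 1), Real.log_exp]
  rw [h3] at h2
  rw [hf, h4, h5] at h2
  nlinarith [h2]

lemma aux_log_factorial_ge (n : ℕ) (hn : 1 ≤ n) :
    1/2 * Real.log 2 + 1/2 * Real.log π + 1/2 * Real.log n + n * (Real.log n - 1)
      ≤ Real.log (n.factorial : ℝ) := by
  have hn0 : (0:ℝ) < n := by exact_mod_cast hn
  have hf : Real.log (Stirling.stirlingSeq n) =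
      Real.log (n.factorial : ℝ) - 1/2 * Real.log (2 * n) - n * Real.log (n / Real.exp 1) :=
    Stirling.log_stirlingSeq_formula n
  have h2 : Real.log (Real.sqrt π) ≤ Real.log (Stirling.stirlingSeq n) :=
    Real.log_le_log (Real.sqrt_pos.mpr Real.pi_pos) (aux_le_stirling n hn)
  have h3 : Real.log (Real.sqrt π) = 1/2 * Real.log π := by
    rw [Real.log_sqrt Real.pi_pos.le]; ring
  have h4 : Real.log (2 * n) = Real.log 2 + Real.log n :=
    Real.log_mul (by norm_num) hn0.ne'
  have h5 : Real.log ((n : ℝ) / Real.exp 1) = Real.log n - 1 := by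
    rw [Real.log_div hn0.ne' (Real.exp_ne_zero 1), Real.log_exp]
  rw [h3, hf, h4, h5] at h2
  nlinarith [h2]

set_option maxHeartbeats 1000000 in
theorem binomial_large_deviation (k ℓ : ℕ) (hk : 1 ≤ k) (hℓ : 1 ≤ ℓ)
    (α β : ℝ) (hα0 : 0 < α) (hα1 : α ≤ 1 / Real.exp 1)
    (hβ0 : 0 < β) (hβ1 : β ≤ 1 / Real.exp 1)
    (hlow : α * k ≤ (ℓ : ℝ)) (hhigh : (ℓ : ℝ) ≤ β * k) :
    1 / (3 * Real.sqrt k) * (α ^ (-α) / (1 - α) ^ ((1 : ℝ) - β)) ^ k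
      ≤ (k.choose ℓ : ℝ) ∧
    (k.choose ℓ : ℝ) ≤ (β ^ (-β) / (1 - β) ^ ((1 : ℝ) - α)) ^ k := by
  have he0 : (0:ℝ) < Real.exp 1 := Real.exp_pos 1
  have he2 : (2:ℝ) ≤ Real.exp 1 := by have := Real.add_one_le_exp (1:ℝ); linarith
  have he1 : (1:ℝ) < Real.exp 1 := by linarith
  have he3 : Real.exp 1 < 2.7182818286 := Real.exp_one_lt_d9
  have hπ3 : (3:ℝ) < π := Real.pi_gt_three
  have hK0 : (0:ℝ) < (k:ℝ) := by exact_mod_cast hk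
  have hL0 : (0:ℝ) < (ℓ:ℝ) := by exact_mod_cast hℓ
  have hL1 : (1:ℝ) ≤ (ℓ:ℝ) := by exact_mod_cast hℓ
  have hie : 1 / Real.exp 1 ≤ 1/2 := by
    rw [div_le_div_iff₀ he0 (by norm_num)]; linarith
  have hβ1' : β < 1 := lt_of_le_of_lt hβ1 (by linarith)
  have hα1' : α < 1 := lt_of_le_of_lt hα1 (by linarith)
  have hβh : β ≤ 1/2 := hβ1.trans hie
  have hlk : ℓ < k := by
    have hb' : (0:ℝ) < 1 - β := by linarith
    have : (ℓ:ℝ) < k := lt_of_le_of_lt hhigh (by nlinarith only [mul_pos hb' hK0])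
    exact_mod_cast this
  set m := k - ℓ with hmdef
  have hmk : k = ℓ + m := by omega
  have hm1 : 1 ≤ m := by omega
  have hM0 : (0:ℝ) < (m:ℝ) := by exact_mod_cast hm1
  have hKM : (k:ℝ) = (ℓ:ℝ) + (m:ℝ) := by rw [hmk]; push_cast; ring
  -- cast of choose
  have hC : (k.choose ℓ : ℝ) = (k.factorial : ℝ) / ((ℓ.factorial : ℝ) * (m.factorial : ℝ)) :=
    Nat.cast_choose ℝ hlk.le
  have hfk : ((k.factorial : ℝ)) ≠ 0 := by positivity
  have hfl : ((ℓ.factorial : ℝ)) ≠ 0 := by positivity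
  have hfm : ((m.factorial : ℝ)) ≠ 0 := by positivity
  have hCpos : (0:ℝ) < (k.choose ℓ : ℝ) := by
    exact_mod_cast Nat.choose_pos hlk.le
  have logC : Real.log (k.choose ℓ : ℝ)
      = Real.log (k.factorial : ℝ) - (Real.log (ℓ.factorial : ℝ) + Real.log (m.factorial : ℝ)) := by
    rw [hC, Real.log_div hfk (mul_ne_zero hfl hfm), Real.log_mul hfl hfm]
  -- the ratio x = ℓ/k
  set x : ℝ := (ℓ:ℝ) / (k:ℝ) with hxdef
  have hx0 : 0 < x := div_pos hL0 hK0
  have hxα : α ≤ x := (le_div_iff₀ hK0).mpr hlow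
  have hxβ : x ≤ β := (div_le_iff₀ hK0).mpr hhigh
  have hxe : x ≤ (Real.exp 1)⁻¹ := by rw [← one_div]; exact hxβ.trans hβ1
  have hαe : α ≤ (Real.exp 1)⁻¹ := by rw [← one_div]; exact hα1
  have hβe : β ≤ (Real.exp 1)⁻¹ := by rw [← one_div]; exact hβ1
  have hx1 : x < 1 := lt_of_le_of_lt hxβ hβ1'
  have h1x : 0 < 1 - x := by linarith
  have h1α : 0 < 1 - α := by linarith
  have h1β : 0 < 1 - β := by linarith
  have hLx : (ℓ:ℝ) = x * (k:ℝ) := by rw [hxdef]; field_simp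
  have hMx : (m:ℝ) = (1 - x) * (k:ℝ) := by
    rw [sub_mul, one_mul, ← hLx]; linarith
  have hlogL : Real.log (ℓ:ℝ) = Real.log x + Real.log (k:ℝ) := by
    rw [hLx, Real.log_mul hx0.ne' hK0.ne']
  have hlogM : Real.log (m:ℝ) = Real.log (1 - x) + Real.log (k:ℝ) := by
    rw [hMx, Real.log_mul h1x.ne' hK0.ne']
  have hT : (k:ℝ) * Real.log (k:ℝ) - (ℓ:ℝ) * Real.log (ℓ:ℝ) - (m:ℝ) * Real.log (m:ℝ)
      = (k:ℝ) * (x * (-Real.log x) + (1 - x) * (-Real.log (1 - x))) := by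
    rw [hlogL, hlogM, hLx, hMx]; ring
  -- entropy comparisons
  have E1u : β * Real.log β ≤ x * Real.log x := aux_mul_log_anti hx0 hxβ hβe
  have E1l : x * Real.log x ≤ α * Real.log α := aux_mul_log_anti hα0 hxα hxe
  have hlog1x : Real.log (1 - x) ≤ 0 := Real.log_nonpos (by linarith) (by linarith)
  have hlog1α : Real.log (1 - α) ≤ 0 := Real.log_nonpos (by linarith) (by linarith)
  have hlxβ : Real.log (1 - β) ≤ Real.log (1 - x) := Real.log_le_log h1β (by linarith)
  have hlxα : Real.log (1 - x) ≤ Real.log (1 - α) := Real.log_le_log h1x (by linarith)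
  have E2u : (1 - x) * (-Real.log (1 - x)) ≤ (1 - α) * (-Real.log (1 - β)) :=
    mul_le_mul (by linarith) (by linarith) (by linarith) (by linarith)
  have E2l : (1 - β) * (-Real.log (1 - α)) ≤ (1 - x) * (-Real.log (1 - x)) :=
    mul_le_mul (by linarith) (by linarith) (by linarith) (by linarith)
  have TU : (k:ℝ) * Real.log (k:ℝ) - (ℓ:ℝ) * Real.log (ℓ:ℝ) - (m:ℝ) * Real.log (m:ℝ)
      ≤ (k:ℝ) * (β * (-Real.log β) + (1 - α) * (-Real.log (1 - β))) := by
    rw [hT]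
    apply mul_le_mul_of_nonneg_left _ hK0.le
    have : x * (-Real.log x) ≤ β * (-Real.log β) := by linarith
    linarith
  have TL : (k:ℝ) * (α * (-Real.log α) + (1 - β) * (-Real.log (1 - α)))
      ≤ (k:ℝ) * Real.log (k:ℝ) - (ℓ:ℝ) * Real.log (ℓ:ℝ) - (m:ℝ) * Real.log (m:ℝ) := by
    rw [hT]
    apply mul_le_mul_of_nonneg_left _ hK0.le
    have : α * (-Real.log α) ≤ x * (-Real.log x) := by linarith
    linarith
  -- bounds on ℓ, m sizes
  have hLhalf : (ℓ:ℝ) ≤ (k:ℝ)/2 := by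
    have := mul_le_mul_of_nonneg_right hβh hK0.le
    linarith
  have hMhalf : (k:ℝ)/2 ≤ (m:ℝ) := by linarith
  have hMK : (m:ℝ) ≤ (k:ℝ) := by linarith
  -- Stirling bounds
  have SUk := aux_log_factorial_le k hk
  have SLk := aux_log_factorial_ge k hk
  have SUl := aux_log_factorial_le ℓ hℓ
  have SLl := aux_log_factorial_ge ℓ hℓ
  have SUm := aux_log_factorial_le m hm1
  have SLm := aux_log_factorial_ge m hm1
  constructor
  · -- lower bound
    have hnum' : Real.exp 1 ^ 4 * ((ℓ:ℝ) * (m:ℝ)) ≤ 2 * π * (3^2 * (k:ℝ)^2) := by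
      have ha2 : Real.exp 1 ^ 2 ≤ 7.389057 := by nlinarith only [he3, he0.le]
      have he4 : Real.exp 1 ^ 4 ≤ 55 := by nlinarith only [ha2, sq_nonneg (Real.exp 1)]
      have hLMu : (ℓ:ℝ) * (m:ℝ) ≤ ((k:ℝ)/2) * (k:ℝ) :=
        mul_le_mul hLhalf hMK hM0.le (by linarith)
      have c1 : Real.exp 1 ^ 4 * ((ℓ:ℝ) * (m:ℝ)) ≤ 55 * (((k:ℝ)/2) * (k:ℝ)) :=
        mul_le_mul he4 hLMu (by positivity) (by norm_num)
      nlinarith only [c1, hπ3, sq_nonneg (k:ℝ)]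
    have hnum : Real.log (Real.exp 1 ^ 4 * ((ℓ:ℝ) * (m:ℝ)))
        ≤ Real.log (2 * π * (3^2 * (k:ℝ)^2)) :=
      Real.log_le_log (by positivity) hnum'
    have e1 : Real.log (Real.exp 1 ^ 4 * ((ℓ:ℝ) * (m:ℝ)))
        = 4 + Real.log (ℓ:ℝ) + Real.log (m:ℝ) := by
      rw [Real.log_mul (by positivity) (by positivity), Real.log_mul hL0.ne' hM0.ne',
        Real.log_pow, Real.log_exp]
      ring
    have e2 : Real.log (2 * π * (3^2 * (k:ℝ)^2))
        = Real.log 2 + Real.log π + 2 * Real.log 3 + 2 * Real.log (k:ℝ) := by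
      rw [Real.log_mul (by positivity) (by positivity),
        Real.log_mul (by norm_num) Real.pi_pos.ne',
        Real.log_mul (by positivity) (by positivity),
        Real.log_pow, Real.log_pow]
      push_cast; ring
    rw [e1, e2] at hnum
    -- key log inequality
    have keyL : -(Real.log 3 + 1/2 * Real.log (k:ℝ))
        + (k:ℝ) * (α * (-Real.log α) + (1 - β) * (-Real.log (1 - α)))
        ≤ Real.log (k.choose ℓ : ℝ) := by
      rw [logC]; linarith only [SLk, SUl, SUm, TL, hKM, hnum]
    -- transfer to the original statement
    have hE0 : (0:ℝ) < α ^ (-α) / (1 - α) ^ ((1:ℝ) - β) :=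
      div_pos (Real.rpow_pos_of_pos hα0 _) (Real.rpow_pos_of_pos h1α _)
    have hsq : (0:ℝ) < Real.sqrt (k:ℝ) := Real.sqrt_pos.mpr hK0
    have hLHS0 : (0:ℝ) < 1 / (3 * Real.sqrt (k:ℝ)) * (α ^ (-α) / (1 - α) ^ ((1:ℝ) - β)) ^ k := by
      positivity
    rw [← Real.log_le_log_iff hLHS0 hCpos]
    have eL : Real.log (1 / (3 * Real.sqrt (k:ℝ)) * (α ^ (-α) / (1 - α) ^ ((1:ℝ) - β)) ^ k)
        = -(Real.log 3 + 1/2 * Real.log (k:ℝ))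
          + (k:ℝ) * ((-α) * Real.log α - (1 - β) * Real.log (1 - α)) := by
      rw [Real.log_mul (by positivity) (by positivity), Real.log_pow,
        Real.log_div one_ne_zero (by positivity),
        Real.log_mul (by norm_num) hsq.ne',
        Real.log_sqrt hK0.le,
        Real.log_div (Real.rpow_pos_of_pos hα0 _).ne' (Real.rpow_pos_of_pos h1α _).ne',
        Real.log_rpow hα0, Real.log_rpow h1α, Real.log_one]
      ring
    rw [eL]
    have : (k:ℝ) * ((-α) * Real.log α - (1 - β) * Real.log (1 - α))
        = (k:ℝ) * (α * (-Real.log α) + (1 - β) * (-Real.log (1 - α))) := by ring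
    rw [this]
    exact keyL
  · -- upper bound
    have hnum' : Real.exp 1 ^ 2 * (k:ℝ) ≤ (2 * π * (ℓ:ℝ)) * (2 * π * (m:ℝ)) := by
      have he9 : Real.exp 1 ^ 2 ≤ 9 := by nlinarith only [he3, he0.le]
      have hLM : (k:ℝ)/2 ≤ (ℓ:ℝ) * (m:ℝ) := by nlinarith only [hL1, hMhalf, hM0.le]
      have hπ2 : (9:ℝ) ≤ π^2 := by nlinarith only [hπ3]
      have c1 : Real.exp 1 ^ 2 * (k:ℝ) ≤ 9 * (k:ℝ) := mul_le_mul_of_nonneg_right he9 hK0.le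
      have c3 : 36 * ((k:ℝ)/2) ≤ 36 * ((ℓ:ℝ) * (m:ℝ)) := by linarith
      have c4 : 36 * ((ℓ:ℝ) * (m:ℝ)) ≤ 4 * π^2 * ((ℓ:ℝ) * (m:ℝ)) :=
        mul_le_mul_of_nonneg_right (by linarith only [hπ2]) (mul_pos hL0 hM0).le
      nlinarith only [c1, c3, c4]
    have hnum : Real.log (Real.exp 1 ^ 2 * (k:ℝ))
        ≤ Real.log ((2 * π * (ℓ:ℝ)) * (2 * π * (m:ℝ))) :=
      Real.log_le_log (by positivity) hnum'
    have e1 : Real.log (Real.exp 1 ^ 2 * (k:ℝ)) = 2 + Real.log (k:ℝ) := by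
      rw [Real.log_mul (by positivity) hK0.ne', Real.log_pow, Real.log_exp]; ring
    have e2 : Real.log ((2 * π * (ℓ:ℝ)) * (2 * π * (m:ℝ)))
        = Real.log 2 + Real.log π + Real.log (ℓ:ℝ)
          + (Real.log 2 + Real.log π + Real.log (m:ℝ)) := by
      rw [Real.log_mul (by positivity) (by positivity),
        Real.log_mul (by positivity) hL0.ne',
        Real.log_mul (by norm_num) Real.pi_pos.ne',
        Real.log_mul (by positivity) hM0.ne',
        Real.log_mul (by norm_num) Real.pi_pos.ne']
    rw [e1, e2] at hnum
    have keyU : Real.log (k.choose ℓ : ℝ)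
        ≤ (k:ℝ) * (β * (-Real.log β) + (1 - α) * (-Real.log (1 - β))) := by
      rw [logC]; linarith only [SUk, SLl, SLm, TU, hKM, hnum]
    have hR0 : (0:ℝ) < β ^ (-β) / (1 - β) ^ ((1:ℝ) - α) :=
      div_pos (Real.rpow_pos_of_pos hβ0 _) (Real.rpow_pos_of_pos h1β _)
    rw [← Real.log_le_log_iff hCpos (by positivity)]
    have eU : Real.log ((β ^ (-β) / (1 - β) ^ ((1:ℝ) - α)) ^ k)
        = (k:ℝ) * ((-β) * Real.log β - (1 - α) * Real.log (1 - β)) := by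
      rw [Real.log_pow,
        Real.log_div (Real.rpow_pos_of_pos hβ0 _).ne' (Real.rpow_pos_of_pos h1β _).ne',
        Real.log_rpow hβ0, Real.log_rpow h1β]
    rw [eU]
    have : (k:ℝ) * ((-β) * Real.log β - (1 - α) * Real.log (1 - β))
        = (k:ℝ) * (β * (-Real.log β) + (1 - α) * (-Real.log (1 - β))) := by ring
    rw [this]
    exact keyU
end

section
/- Define d : ℕ → ℚ by d(0) = 0, d(1) = 1, d(2N) = d(N), d(2N+1) = (d(N) + d(N+1) + 1)/2. For every ε with 0 < ε and every sufficiently large N, the number of integers n < N such that d(n) ≤ (1/100)·log n is at most N^{0.183}. -/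
/-!
Let `w(n)` be the number of positions at which consecutive binary digits of `n` differ, i.e. the
number of ones of the Gray code `n ^^^ (n / 2)`. Since `w(2n) = w(n) + (n mod 2)`,
`w(2n + 1) = w(n) + 1 - (n mod 2)` and `w(n) ≤ w(n + 1) + 1`, the recursions for `d` give
`w(n) + (n mod 2) ≤ 4 d(n)` by induction. Hence every `n < N` with `d(n) ≤ log n / 100` has a Gray
code below `2 ^ L`, `L = ⌊log₂ N⌋ + 1`, with at most `k = log N / 25` ones, and the Gray code is
injective. The Chernoff-type bound `#{t ⊆ [L] : |t| ≤ k} ≤ p⁻ᵏ (1 - p)^{-(L - k)}`, taken at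
`p = 1/36 ≈ k / L`, is at most `N ^ 0.183` once `log N ≥ 300`.
-/

open Finset Real

def grayCode (n : ℕ) : ℕ := n ^^^ (n / 2)

theorem grayCode_bit (b : Bool) (n : ℕ) :
    grayCode (Nat.bit b n) = Nat.bit (b != n.bodd) (grayCode n) := by
  rw [grayCode, Nat.bit_div_two, grayCode, ← Nat.div2_val]
  conv_lhs => rw [← Nat.bit_bodd_div2 n]
  rw [Nat.xor_bit, Nat.bit_bodd_div2]

theorem grayCode_eq_zero {n : ℕ} : grayCode n = 0 ↔ n = 0 := by
  rw [grayCode, xor_eq_zero_iff]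
  omega

theorem grayCode_injective : Function.Injective grayCode := by
  intro m n h
  induction m using Nat.binaryRec generalizing n with
  | zero => exact (grayCode_eq_zero.1 (h.symm.trans (grayCode_eq_zero.2 rfl))).symm
  | bit b m ih =>
    rw [← Nat.bit_bodd_div2 n, grayCode_bit, grayCode_bit] at h
    rw [← Nat.bit_bodd_div2 n]
    have hm : m = n.div2 := ih (by simpa only [Nat.div2_bit] using congrArg Nat.div2 h)
    have hb := congrArg Nat.bodd h
    simp only [Nat.bodd_bit, hm] at hb
    rw [hm, Bool.bne_left_inj.1 hb]

theorem grayCode_lt_two_pow {n L : ℕ} (h : n < 2 ^ L) : grayCode n < 2 ^ L :=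
  Nat.xor_lt_two_pow h ((Nat.div_le_self n 2).trans_lt h)

def grayWeight (n : ℕ) : ℕ := (grayCode n).bitIndices.length

theorem grayWeight_bit (b : Bool) (n : ℕ) :
    grayWeight (Nat.bit b n) = grayWeight n + (b != n.bodd).toNat := by
  rw [grayWeight, grayCode_bit]
  cases b != n.bodd <;> simp [grayWeight]

theorem grayWeight_two_mul (n : ℕ) : grayWeight (2 * n) = grayWeight n + n % 2 := by
  rw [← Nat.bit_false_apply, grayWeight_bit, Nat.mod_two_of_bodd]
  cases n.bodd <;> rfl

theorem grayWeight_two_mul_add_one (n : ℕ) :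
    grayWeight (2 * n + 1) + n % 2 = grayWeight n + 1 := by
  rw [← Nat.bit_true_apply, grayWeight_bit, Nat.mod_two_of_bodd]
  cases n.bodd <;> rfl

theorem grayWeight_le_grayWeight_succ_add_one (n : ℕ) :
    grayWeight n ≤ grayWeight (n + 1) + 1 := by
  induction n using Nat.strong_induction_on with
  | _ n ih =>
    obtain ⟨m, rfl | rfl⟩ := n.even_or_odd'
    · have := grayWeight_two_mul m
      have := grayWeight_two_mul_add_one m
      omega
    · have := grayWeight_two_mul_add_one m
      have := grayWeight_two_mul (m + 1)
      have := ih m (by omega)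
      rw [show 2 * m + 1 + 1 = 2 * (m + 1) by ring]
      omega

theorem grayWeight_add_mod_two_le {d : ℕ → ℚ} (h1 : d 1 = 1) (heven : ∀ n, d (2 * n) = d n)
    (hodd : ∀ n, d (2 * n + 1) = (d n + d (n + 1) + 1) / 2) {n : ℕ} (hn : 0 < n) :
    ((grayWeight n + n % 2 : ℕ) : ℚ) ≤ 4 * d n := by
  induction n using Nat.strong_induction_on with
  | _ n ih =>
    obtain ⟨m, rfl | rfl⟩ := n.even_or_odd'
    · have hm := ih m (by omega) (by omega)
      rw [heven, grayWeight_two_mul]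
      simpa [Nat.mul_mod_right] using hm
    · rcases m.eq_zero_or_pos with rfl | hm0
      · norm_num [h1, grayWeight, grayCode]
      have hm := ih m (by omega) hm0
      have hm1 := ih (m + 1) (by omega) (by omega)
      have key : 2 * (grayWeight (2 * m + 1) + (2 * m + 1) % 2)
          ≤ (grayWeight m + m % 2) + (grayWeight (m + 1) + (m + 1) % 2) + 4 := by
        have := grayWeight_le_grayWeight_succ_add_one m
        have := grayWeight_two_mul_add_one m
        omega
      rw [hodd]
      have := (Nat.cast_le (α := ℚ)).2 key
      push_cast at this hm hm1 ⊢
      linarith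

theorem card_filter_grayWeight_le_le (L k : ℕ) :
    #{n ∈ range (2 ^ L) | grayWeight n ≤ k} ≤ #{t ∈ (range L).powerset | #t ≤ k} := by
  refine card_le_card_of_injOn (equivBitIndices ∘ grayCode) (fun n hn ↦ ?_)
    (equivBitIndices.injective.comp grayCode_injective).injOn
  obtain ⟨hnL, hw⟩ := mem_filter.1 hn
  have hcard : #(equivBitIndices (grayCode n)) = grayWeight n :=
    List.toFinset_card_of_nodup Nat.bitIndices_nodup
  refine mem_filter.2 ⟨mem_powerset.2 fun i hi ↦ ?_, hcard ▸ hw⟩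
  have := (Nat.two_pow_le_of_mem_bitIndices (List.mem_toFinset.1 hi)).trans_lt
    (grayCode_lt_two_pow (mem_range.1 hnL))
  exact mem_range.2 ((Nat.pow_lt_pow_iff_right one_lt_two).1 this)

theorem pow_mul_pow_sub_le_pow_mul_pow_sub {R : Type*} [CommSemiring R] [PartialOrder R]
    [IsOrderedRing R] {p q : R} (hp : 0 ≤ p) (hpq : p ≤ q) {j k n : ℕ} (hjk : j ≤ k)
    (hkn : k ≤ n) : p ^ k * q ^ (n - k) ≤ p ^ j * q ^ (n - j) := by
  obtain ⟨a, rfl⟩ := Nat.exists_eq_add_of_le hjk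
  have hsplit : n - j = a + (n - (j + a)) := by omega
  calc p ^ (j + a) * q ^ (n - (j + a)) = p ^ j * p ^ a * q ^ (n - (j + a)) := by rw [pow_add]
    _ ≤ p ^ j * q ^ a * q ^ (n - (j + a)) := by gcongr; exact pow_nonneg (hp.trans hpq) _
    _ = p ^ j * q ^ (n - j) := by rw [hsplit, pow_add, mul_assoc]

theorem card_filter_card_le_le_inv_pow {ι : Type*} (s : Finset ι) {p q : ℝ} (hp : 0 < p)
    (hpq : p ≤ q) (hsum : p + q = 1) {k : ℕ} (hk : k ≤ #s) :
    (#{t ∈ s.powerset | #t ≤ k} : ℝ) ≤ p⁻¹ ^ k * q⁻¹ ^ (#s - k) := by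
  have hq : 0 < q := hp.trans_le hpq
  have hmass : (#{t ∈ s.powerset | #t ≤ k} : ℝ) * (p ^ k * q ^ (#s - k)) ≤ 1 :=
    calc (#{t ∈ s.powerset | #t ≤ k} : ℝ) * (p ^ k * q ^ (#s - k))
        = ∑ t ∈ s.powerset with #t ≤ k, p ^ k * q ^ (#s - k) := by rw [sum_const, nsmul_eq_mul]
      _ ≤ ∑ t ∈ s.powerset with #t ≤ k, p ^ #t * q ^ (#s - #t) :=
          sum_le_sum fun t ht ↦ pow_mul_pow_sub_le_pow_mul_pow_sub hp.le hpq (mem_filter.1 ht).2 hk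
      _ ≤ ∑ t ∈ s.powerset, p ^ #t * q ^ (#s - #t) :=
          sum_le_sum_of_subset_of_nonneg (filter_subset _ _) fun _ _ _ ↦ by positivity
      _ = 1 := by rw [sum_pow_mul_eq_add_pow, hsum, one_pow]
  rw [inv_pow, inv_pow, ← mul_inv, ← one_div, le_div_iff₀ (by positivity)]
  exact hmass

theorem Real.log_36_div_35_lt : log (36 / 35) < 0.02819 := by
  have h := abs_log_sub_add_sum_range_le (x := 1 / 36) (by norm_num) 2
  norm_num [sum_range_succ, abs_le] at h
  rw [show (36 / 35 : ℝ) = (35 / 36)⁻¹ by norm_num, log_inv]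
  linarith [h.1]

theorem floor_log_div_le_log_succ (N : ℕ) : ⌊log N / 25⌋₊ ≤ Nat.log 2 N + 1 := by
  refine Nat.floor_le_of_le ?_
  rcases N.eq_zero_or_pos with rfl | hN
  · simp
  have hlog : log N ≤ (Nat.log 2 N + 1 : ℕ) * log 2 := by
    rw [← log_pow]
    exact log_le_log (by positivity) (by exact_mod_cast (Nat.lt_pow_succ_log_self one_lt_two N).le)
  have : 0 ≤ log N := log_natCast_nonneg N
  nlinarith [log_two_lt_d9]

/- The exponent is `log 36 / 25 + log (36 / 35) * (1 / log 2 - 1 / 25) ≈ 0.18288`, which is why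
sharp bounds on the logarithms are needed. -/
theorem inv_pow_mul_inv_pow_le_rpow {N k L : ℕ} (hN : 300 ≤ log N) (hk : (k : ℝ) ≤ log N / 25)
    (hkL : k ≤ L) (hL : 2 ^ L ≤ 2 * N) :
    (1 / 36 : ℝ)⁻¹ ^ k * (35 / 36 : ℝ)⁻¹ ^ (L - k) ≤ (N : ℝ) ^ (0.183 : ℝ) := by
  have hN0 : (0 : ℝ) < N := Nat.cast_pos.2 (Nat.pos_of_ne_zero (by rintro rfl; norm_num at hN))
  have hLN : L * log 2 ≤ log 2 + log N := by
    rw [← log_pow, ← log_mul two_ne_zero hN0.ne']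
    exact log_le_log (by positivity) (by exact_mod_cast hL)
  rw [le_rpow_iff_log_le (by positivity) hN0, log_mul (by positivity) (by positivity),
    log_pow, log_pow, Nat.cast_sub hkL]
  have h36 : log 36 = 2 * log 2 + 2 * log 3 := by
    rw [show (36 : ℝ) = 2 ^ 2 * 3 ^ 2 by norm_num, log_mul (by norm_num) (by norm_num),
      log_pow, log_pow]; push_cast; ring
  norm_num only [inv_div, div_one, one_div, inv_inv]
  have hc0 : 0 ≤ log (36 / 35) := log_nonneg (by norm_num)
  have hL' : (L : ℝ) ≤ 1 + 1.4426951 * log N := by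
    nlinarith [log_two_gt_d9, log_two_lt_d9]
  have hkc : k * (log 36 - log (36 / 35)) ≤ log N / 25 * (log 36 - log (36 / 35)) :=
    mul_le_mul_of_nonneg_right hk (by linarith [log_two_gt_d9, log_three_gt_d9, log_36_div_35_lt])
  have hLc : L * log (36 / 35) ≤ (1 + 1.4426951 * log N) * log (36 / 35) :=
    mul_le_mul_of_nonneg_right hL' hc0
  nlinarith [log_two_lt_d9, log_three_lt_d9, log_36_div_35_lt]

theorem filter_le_log_subset_filter_grayWeight_le {d : ℕ → ℚ} (h1 : d 1 = 1)
    (heven : ∀ n, d (2 * n) = d n) (hodd : ∀ n, d (2 * n + 1) = (d n + d (n + 1) + 1) / 2)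
    (N : ℕ) :
    {n ∈ range N | (d n : ℝ) ≤ log n / 100} ⊆
      {n ∈ range (2 ^ (Nat.log 2 N + 1)) | grayWeight n ≤ ⌊log N / 25⌋₊} := by
  intro n hn
  obtain ⟨hnN, hdn⟩ := mem_filter.1 hn
  have hnN := mem_range.1 hnN
  refine mem_filter.2 ⟨mem_range.2 (hnN.trans (Nat.lt_pow_succ_log_self one_lt_two N)), ?_⟩
  rcases n.eq_zero_or_pos with rfl | hn0
  · simp only [grayWeight, grayCode, Nat.zero_div, Nat.zero_xor, Nat.bitIndices_zero,
      List.length_nil, zero_le]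
  have hw : (grayWeight n : ℝ) ≤ 4 * d n := by
    have := grayWeight_add_mod_two_le h1 heven hodd hn0
    exact_mod_cast (Nat.cast_le.2 (Nat.le_add_right _ _)).trans this
  have hlog : log n ≤ log N := log_le_log (by exact_mod_cast hn0) (by exact_mod_cast hnN.le)
  exact Nat.le_floor (by linarith)

theorem vdc_small_discrepancy_upper_general (d : ℕ → ℚ)
    (h1 : d 1 = 1)
    (heven : ∀ N : ℕ, d (2 * N) = d N)
    (hodd : ∀ N : ℕ, d (2 * N + 1) = (d N + d (N + 1) + 1) / 2) :
    ∃ N₀ : ℕ, ∀ N : ℕ, N₀ ≤ N →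
      (((Finset.range N).filter fun n => (d n : ℝ) ≤ Real.log n / 100).card : ℝ)
        ≤ (N : ℝ) ^ (0.183 : ℝ) := by
  refine ⟨⌈exp 300⌉₊, fun N hN => ?_⟩
  have hN0 : (0 : ℝ) < N := (exp_pos 300).trans_le (Nat.ceil_le.1 hN)
  have hsub := filter_le_log_subset_filter_grayWeight_le h1 heven hodd N
  have hkL := floor_log_div_le_log_succ N
  set L := Nat.log 2 N + 1
  set k := ⌊log N / 25⌋₊
  have hL : 2 ^ L ≤ 2 * N := by
    rw [pow_succ, mul_comm]
    exact Nat.mul_le_mul_left 2 (Nat.pow_log_le_self 2 (Nat.cast_pos.1 hN0).ne')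
  calc (#{n ∈ range N | (d n : ℝ) ≤ log n / 100} : ℝ)
      ≤ #{n ∈ range (2 ^ L) | grayWeight n ≤ k} := by exact_mod_cast card_le_card hsub
    _ ≤ #{t ∈ (range L).powerset | #t ≤ k} := by exact_mod_cast card_filter_grayWeight_le_le L k
    _ ≤ (1 / 36 : ℝ)⁻¹ ^ k * (35 / 36 : ℝ)⁻¹ ^ (L - k) := by
        simpa using card_filter_card_le_le_inv_pow (range L) (p := 1 / 36) (q := 35 / 36)
          (by norm_num) (by norm_num) (by norm_num) (by simpa using hkL)
    _ ≤ (N : ℝ) ^ (0.183 : ℝ) :=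
      inv_pow_mul_inv_pow_le_rpow ((le_log_iff_exp_le hN0).2 (Nat.ceil_le.1 hN))
        (Nat.floor_le (by positivity)) hkL hL

theorem vdc_small_discrepancy_upper (d : ℕ → ℚ)
    (h0 : d 0 = 0) (h1 : d 1 = 1)
    (heven : ∀ N : ℕ, d (2 * N) = d N)
    (hodd : ∀ N : ℕ, d (2 * N + 1) = (d N + d (N + 1) + 1) / 2)
    (ε : ℝ) (hε : 0 < ε) :
    ∃ N₀ : ℕ, ∀ N : ℕ, N₀ ≤ N →
      (((Finset.range N).filter fun n => (d n : ℝ) ≤ Real.log n / 100).card : ℝ)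
        ≤ (N : ℝ) ^ (0.183 : ℝ) :=
  vdc_small_discrepancy_upper_general d h1 heven hodd
end

section
/- Define d : ℕ → ℚ by d(0) = 0, d(1) = 1, d(2N) = d(N), d(2N+1) = (d(N) + d(N+1) + 1)/2, and set S'(N) = d(1) + ⋯ + d(N−1) + d(N)/2. Then S'(2N) = 2·S'(N) + N/2 for all N ≥ 1. -/
/-!
`S'` is the trapezoid-rule sum of `d`, so `S' (n + 1) - S' n = (d n + d (n + 1)) / 2`.
Passing from `N` to `N + 1` therefore adds `d N + d (N + 1)` to `2 * S' N`, and adds the two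
trapezoids `(d (2N) + d (2N+1)) / 2 + (d (2N+1) + d (2N+2)) / 2 = d N + d (N + 1) + 1/2`
to `S' (2 * N)`, by the recurrence for `d`; induct on `N`.
-/

open Finset

theorem sum_Ico_one_add_half_succ {K : Type*} [DivisionRing K] [NeZero (2 : K)] (f : ℕ → K)
    (hf : f 0 = 0) (n : ℕ) :
    (∑ k ∈ Ico 1 (n + 1), f k) + f (n + 1) / 2
      = (∑ k ∈ Ico 1 n, f k) + f n / 2 + (f n + f (n + 1)) / 2 := by
  rcases n.eq_zero_or_pos with rfl | hn
  · simp [hf]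
  · rw [sum_Ico_succ_top hn, add_div]
    nth_rewrite 1 [← add_halves (f n)]
    abel

theorem vdc_partial_sum_recurrence_general (d : ℕ → ℚ)
    (h0 : d 0 = 0)
    (heven : ∀ N : ℕ, d (2 * N) = d N)
    (hodd : ∀ N : ℕ, d (2 * N + 1) = (d N + d (N + 1) + 1) / 2)
    (S' : ℕ → ℚ) (hS' : ∀ N : ℕ, S' N = (∑ k ∈ Finset.Ico 1 N, d k) + d N / 2)
    (N : ℕ) :
    S' (2 * N) = 2 * S' N + N / 2 := by
  have step (n : ℕ) : S' (n + 1) = S' n + (d n + d (n + 1)) / 2 := by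
    rw [hS', hS', sum_Ico_one_add_half_succ d h0]
  induction N with
  | zero => simp [hS', h0]
  | succ n ih =>
    have h₁ := step (2 * n)
    have h₂ := step (2 * n + 1)
    rw [heven, hodd] at h₁
    rw [hodd, show 2 * n + 1 + 1 = 2 * (n + 1) by ring, heven] at h₂
    rw [h₂, h₁, ih, step n]
    push_cast
    ring

theorem vdc_partial_sum_recurrence (d : ℕ → ℚ)
    (h0 : d 0 = 0) (h1 : d 1 = 1)
    (heven : ∀ N : ℕ, d (2 * N) = d N)
    (hodd : ∀ N : ℕ, d (2 * N + 1) = (d N + d (N + 1) + 1) / 2)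
    (S' : ℕ → ℚ) (hS' : ∀ N : ℕ, S' N = (∑ k ∈ Finset.Ico 1 N, d k) + d N / 2)
    (N : ℕ) (hN : 1 ≤ N) :
    S' (2 * N) = 2 * S' N + N / 2 :=
  vdc_partial_sum_recurrence_general d h0 heven hodd S' hS' N
end

section
/- Define d : ℕ → ℚ as before and R(N) = S'(N)/N − (1/4)·log₂ N, where S'(N) = Σ_{k=1}^{N−1} d(k) + d(N)/2. Then R(2N) = R(N) for all N ≥ 1. -/
/-!
Write `T(M) = ∑_{k<M} d k`. Splitting `[0, 2M)` into the pairs `{2j, 2j+1}` and using the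
recursion gives `T(2M) = 2 T(M) + (d M - d 0 + M) / 2`, hence `S'(2N) = 2 S'(N) + N / 2` once
`d 0 = 0`. Dividing by `2N` and using `log₂ (2N) = 1 + log₂ N`, the `N / 2` is exactly cancelled by
the extra `1 / 4` of the logarithm term.
-/

open Finset

theorem sum_Ico_one_eq_sum_range {M : Type*} [AddCommMonoid M] (d : ℕ → M)
    (h0 : d 0 = 0) (n : ℕ) :
    ∑ k ∈ Ico 1 n, d k = ∑ k ∈ range n, d k := by
  rcases n.eq_zero_or_pos with rfl | hn
  · simp
  · rw [sum_range_eq_add_Ico d hn, h0, zero_add]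

section

variable {K : Type*} [Field K] [CharZero K] (d : ℕ → K)

theorem sum_range_two_mul_of_recursion
    (heven : ∀ N : ℕ, d (2 * N) = d N)
    (hodd : ∀ N : ℕ, d (2 * N + 1) = (d N + d (N + 1) + 1) / 2) (M : ℕ) :
    ∑ k ∈ range (2 * M), d k = 2 * ∑ k ∈ range M, d k + (d M - d 0 + M) / 2 := by
  induction M with
  | zero => simp
  | succ m ih =>
    rw [show 2 * (m + 1) = 2 * m + 1 + 1 by ring, sum_range_succ, sum_range_succ, ih,
      heven, hodd, sum_range_succ]
    push_cast
    ring

theorem sum_Ico_one_add_half_two_mul (h0 : d 0 = 0)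
    (heven : ∀ N : ℕ, d (2 * N) = d N)
    (hodd : ∀ N : ℕ, d (2 * N + 1) = (d N + d (N + 1) + 1) / 2) (N : ℕ) :
    ∑ k ∈ Ico 1 (2 * N), d k + d (2 * N) / 2
      = 2 * (∑ k ∈ Ico 1 N, d k + d N / 2) + N / 2 := by
  rw [sum_Ico_one_eq_sum_range d h0, sum_Ico_one_eq_sum_range d h0,
    sum_range_two_mul_of_recursion d heven hodd, heven, h0]
  ring

end

theorem vdc_R_invariance_general (d : ℕ → ℚ)
    (h0 : d 0 = 0)
    (heven : ∀ N : ℕ, d (2 * N) = d N)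
    (hodd : ∀ N : ℕ, d (2 * N + 1) = (d N + d (N + 1) + 1) / 2)
    (S' : ℕ → ℚ) (hS' : ∀ N : ℕ, S' N = (∑ k ∈ Finset.Ico 1 N, d k) + d N / 2)
    (R : ℕ → ℝ) (hR : ∀ N : ℕ, R N = (S' N : ℝ) / N - Real.logb 2 N / 4)
    (N : ℕ) :
    R (2 * N) = R N := by
  rcases N.eq_zero_or_pos with rfl | hN
  · rfl
  have hS : (S' (2 * N) : ℝ) = 2 * S' N + N / 2 := by
    rw [hS', hS', sum_Ico_one_add_half_two_mul d h0 heven hodd]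
    push_cast
    ring
  have hN' : (N : ℝ) ≠ 0 := by positivity
  rw [hR, hR, hS, Nat.cast_mul, Nat.cast_ofNat, Real.logb_mul two_ne_zero hN',
    Real.logb_self_eq_one one_lt_two]
  field_simp
  ring

theorem vdc_R_invariance (d : ℕ → ℚ)
    (h0 : d 0 = 0) (h1 : d 1 = 1)
    (heven : ∀ N : ℕ, d (2 * N) = d N)
    (hodd : ∀ N : ℕ, d (2 * N + 1) = (d N + d (N + 1) + 1) / 2)
    (S' : ℕ → ℚ) (hS' : ∀ N : ℕ, S' N = (∑ k ∈ Finset.Ico 1 N, d k) + d N / 2)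
    (R : ℕ → ℝ) (hR : ∀ N : ℕ, R N = (S' N : ℝ) / N - Real.logb 2 N / 4)
    (N : ℕ) (hN : 1 ≤ N) :
    R (2 * N) = R N :=
  vdc_R_invariance_general d h0 heven hodd S' hS' R hR N
end

section
/- There exists a continuous 1-periodic function ψ : ℝ → ℝ such that for all N ≥ 1, (1/N)·S(N) = (log₂ N)/4 + d(N)/(2N) + ψ(log₂ N), where S(N) = d(1) + ⋯ + d(N); moreover ψ is uniquely determined by this property. -/
/-!
Write `‖t‖` for the distance from `t` to the nearest integer. Both `d k` and `∑_{i ≥ 1} ‖k / 2^i‖`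
satisfy the defining recursion, because `‖·‖` is affine between consecutive points of `½ℤ`; hence
they agree. For the same reason the trapezoidal rule on the grid `2^{-i} ℤ` (`i ≥ 1`) is exact
for `‖·‖`, so `S(N) - d(N)/2 = ∑_{i ≥ 1} 2^i ∫₀^{N/2^i} ‖·‖`. Writing `∫₀ˢ ‖·‖ = s/4 + Φ(s)` with
`Φ` periodic, the `i`-th term is `N/4 + 2^i Φ(N/2^i)`, which is `O(N²/2^i)`. Adding the terms
`Φ(2^j N)/(2^j N)`, `j ≥ 0`, which vanish at integers, turns `(S(N) - d(N)/2)/N - log₂ N / 4` into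
the value at `t = N` of a continuous function of `t > 0` invariant under `t ↦ 2t`; `ψ` is this
function in the variable `log₂ t`. Uniqueness holds since `log₂ N` is dense modulo `1`.
-/

open Set Real Int Function Topology

theorem continuousOn_tsum_of_locally_bounded {ι β F : Type*} [TopologicalSpace β]
    [NormedAddCommGroup F] [CompleteSpace F] {f : ι → β → F} {U : Set β} (hU : IsOpen U)
    (hf : ∀ i, ContinuousOn (f i) U)
    (hb : ∀ x ∈ U, ∃ V ∈ 𝓝 x, ∃ u : ι → ℝ, Summable u ∧ ∀ i, ∀ y ∈ V, ‖f i y‖ ≤ u i) :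
    ContinuousOn (fun y => ∑' i, f i y) U := by
  intro x hx
  obtain ⟨V, hV, u, hu, hfu⟩ := hb x hx
  have hcont : ContinuousOn (fun y => ∑' i, f i y) (V ∩ U) :=
    continuousOn_tsum (fun i => (hf i).mono inter_subset_right) hu fun i y hy => hfu i y hy.1
  exact (hcont.continuousAt (Filter.inter_mem hV (hU.mem_nhds hx))).continuousWithinAt

lemma exists_int_le_div_and_add_one_div_le {M : ℕ} (hM : 0 < M) (k : ℕ) :
    ∃ n : ℤ, (n : ℝ) ≤ k / M ∧ ((k : ℝ) + 1) / M ≤ n + 1 := by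
  have hM' : (0 : ℝ) < M := by exact_mod_cast hM
  refine ⟨(k / M : ℕ), ?_, ?_⟩
  · rw [le_div_iff₀ hM']
    exact_mod_cast Nat.div_mul_le_self k M
  · rw [div_le_iff₀ hM']
    have := Nat.lt_mul_div_succ k hM
    push_cast
    exact_mod_cast (by linarith : k + 1 ≤ (k / M + 1) * M)

lemma dense_logb_natCast_sub_natCast :
    Dense {x : ℝ | ∃ N n : ℕ, 0 < N ∧ logb 2 N - n = x} := by
  refine dense_of_exists_between fun a b hab => ?_
  have hgap : 0 < (2 : ℝ) ^ b - 2 ^ a := sub_pos.2 (rpow_lt_rpow_of_exponent_lt one_lt_two hab)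
  obtain ⟨n, hn⟩ := pow_unbounded_of_one_lt ((2 : ℝ) ^ b - 2 ^ a)⁻¹ one_lt_two
  -- `N` is the least integer above `2 ^ (a + n)`, and `2 ^ (b + n) - 2 ^ (a + n) > 1`
  set N := ⌊(2 : ℝ) ^ (a + n)⌋₊ + 1
  have hlow : (2 : ℝ) ^ (a + n) < N := by push_cast [N]; exact Nat.lt_floor_add_one _
  have hN : (0 : ℝ) < N := (rpow_pos_of_pos two_pos _).trans hlow
  have hup : (N : ℝ) < 2 ^ (b + n) := by
    have hgap' : 1 < ((2 : ℝ) ^ b - 2 ^ a) * 2 ^ n := by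
      rw [inv_lt_iff_one_lt_mul₀ hgap, mul_comm] at hn; exact hn
    have hfloor := Nat.floor_le (rpow_pos_of_pos two_pos (a + n)).le
    push_cast [N]
    simp only [rpow_add two_pos, rpow_natCast] at hfloor ⊢
    nlinarith
  refine ⟨logb 2 N - n, ⟨N, n, by exact_mod_cast hN, rfl⟩, ?_, ?_⟩
  · linarith [(lt_logb_iff_rpow_lt one_lt_two hN).2 hlow]
  · linarith [(logb_lt_iff_lt_rpow one_lt_two hN).2 hup]

lemma eq_of_periodic_of_eq_on_logb_natCast {f g : ℝ → ℝ} (hf : Continuous f) (hg : Continuous g)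
    (hfp : Periodic f 1) (hgp : Periodic g 1)
    (h : ∀ N : ℕ, 0 < N → f (logb 2 N) = g (logb 2 N)) : f = g := by
  refine hf.ext_on dense_logb_natCast_sub_natCast hg ?_
  rintro _ ⟨N, n, hN, rfl⟩
  simpa only [mul_one] using
    (hfp.sub_nat_mul_eq n).trans ((h N hN).trans (hgp.sub_nat_mul_eq n).symm)

namespace VanDerCorput

/-- `‖t‖`, the distance from `t` to the nearest integer. -/
noncomputable def tent (t : ℝ) : ℝ := 1 / 2 - |fract t - 1 / 2|

/-- The `1`-periodic primitive of `tent - 1 / 4` vanishing at `0` (`tent` has mean `1 / 4`). -/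
noncomputable def tentPrimitive (t : ℝ) : ℝ :=
  fract t ^ 2 / 2 - fract t / 4 - max (fract t - 1 / 2) 0 ^ 2

lemma tent_nonneg (t : ℝ) : 0 ≤ tent t := by
  have := fract_lt_one t
  have := fract_nonneg t
  rw [tent, sub_nonneg, abs_le]
  constructor <;> linarith

lemma tent_le_self {t : ℝ} (ht : 0 ≤ t) : tent t ≤ t := by
  have : fract t ≤ t := by
    have : (0 : ℝ) ≤ ⌊t⌋ := by exact_mod_cast floor_nonneg.2 ht
    rw [fract]; linarith
  rw [tent]
  linarith [le_abs_self (fract t - 1 / 2), neg_abs_le (fract t - 1 / 2)]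

lemma tent_natCast_add (n : ℕ) (t : ℝ) : tent (n + t) = tent t := by
  simp [tent]

lemma tent_natCast (n : ℕ) : tent n = 0 := by
  simp [tent]

lemma tentPrimitive_natCast (n : ℕ) : tentPrimitive n = 0 := by
  simp [tentPrimitive]

lemma continuous_tentPrimitive : Continuous tentPrimitive :=
  ContinuousOn.comp_fract'' (f := fun u : ℝ => u ^ 2 / 2 - u / 4 - max (u - 1 / 2) 0 ^ 2)
    (by fun_prop) (by norm_num)

lemma abs_tentPrimitive_le (t : ℝ) : |tentPrimitive t| ≤ 1 / 4 := by
  have h₀ := fract_nonneg t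
  have h₁ := fract_lt_one t
  rw [tentPrimitive, abs_le]
  rcases le_total (fract t) (1 / 2) with h | h
  · rw [max_eq_right (by linarith)]
    constructor <;> nlinarith
  · rw [max_eq_left (by linarith)]
    constructor <;> nlinarith

/-- `t / 4 + tentPrimitive t = ∫₀ᵗ tent`, and `0 ≤ tent ≤ id` on `[0, ∞)`. -/
lemma tentPrimitive_add_bounds {t : ℝ} (ht : 0 ≤ t) :
    0 ≤ t / 4 + tentPrimitive t ∧ t / 4 + tentPrimitive t ≤ t ^ 2 / 2 := by
  have h₀ := fract_nonneg t
  have h₁ := fract_lt_one t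
  have hn : (0 : ℝ) ≤ ⌊t⌋ := by exact_mod_cast floor_nonneg.2 ht
  have hnn : (⌊t⌋ : ℝ) ≤ ⌊t⌋ ^ 2 := by
    rcases (floor_nonneg.2 ht).eq_or_lt with h | h
    · rw [← h]; simp
    · have : (1 : ℝ) ≤ ⌊t⌋ := by exact_mod_cast h
      nlinarith
  have ht' : t = ⌊t⌋ + fract t := (floor_add_fract t).symm
  rw [tentPrimitive]
  rcases le_total (fract t) (1 / 2) with h | h
  · rw [max_eq_right (by linarith)]
    constructor <;> nlinarith
  · rw [max_eq_left (by linarith)]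
    constructor <;> nlinarith

lemma tent_tentPrimitive_on_rising_half {p : ℤ} {t : ℝ} (h₁ : (p : ℝ) ≤ t)
    (h₂ : t ≤ p + 1 / 2) :
    tent t = t - p ∧ tentPrimitive t = (t - p) ^ 2 / 2 - (t - p) / 4 := by
  have hf : fract t = t - p := by
    rw [fract, floor_eq_iff.2 ⟨h₁, by linarith⟩]
  rw [tent, tentPrimitive, hf, abs_of_nonpos (by linarith), max_eq_right (by linarith)]
  constructor <;> ring

lemma tent_tentPrimitive_on_falling_half {p : ℤ} {t : ℝ} (h₁ : (p : ℝ) + 1 / 2 ≤ t)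
    (h₂ : t ≤ p + 1) :
    tent t = p + 1 - t ∧ tentPrimitive t = -(t - p) ^ 2 / 2 + 3 * (t - p) / 4 - 1 / 4 := by
  rcases h₂.lt_or_eq with h₂ | rfl
  · have hf : fract t = t - p := by
      rw [fract, floor_eq_iff.2 ⟨by linarith, h₂⟩]
    rw [tent, tentPrimitive, hf, abs_of_nonneg (by linarith), max_eq_left (by linarith)]
    constructor <;> ring
  · have : ((p : ℝ) + 1) = ((p + 1 : ℤ) : ℝ) := by push_cast; ring
    rw [this, tent, tentPrimitive, fract_intCast]
    push_cast
    constructor <;> norm_num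

lemma exists_affine_on_half_period (n : ℤ) :
    ∃ α β γ : ℝ, ∀ t : ℝ, (n : ℝ) ≤ 2 * t → 2 * t ≤ n + 1 →
      tent t = α * t + β ∧ tentPrimitive t = α * t ^ 2 / 2 + (β - 1 / 4) * t + γ := by
  obtain ⟨p, rfl | rfl⟩ := n.even_or_odd'
  · refine ⟨1, -p, p ^ 2 / 2 + p / 4, fun t h₁ h₂ => ?_⟩
    push_cast at h₁ h₂
    obtain ⟨ht, hΦ⟩ :=
      tent_tentPrimitive_on_rising_half (p := p) (t := t) (by linarith) (by linarith)
    rw [ht, hΦ]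
    constructor <;> ring
  · refine ⟨-1, p + 1, -p ^ 2 / 2 - 3 * p / 4 - 1 / 4, fun t h₁ h₂ => ?_⟩
    push_cast at h₁ h₂
    obtain ⟨ht, hΦ⟩ :=
      tent_tentPrimitive_on_falling_half (p := p) (t := t) (by linarith) (by linarith)
    rw [ht, hΦ]
    constructor <;> ring

lemma tent_midpoint {n : ℤ} {a b : ℝ} (ha : (n : ℝ) ≤ 2 * a) (hab : a ≤ b)
    (hb : 2 * b ≤ n + 1) : tent ((a + b) / 2) = (tent a + tent b) / 2 := by
  obtain ⟨α, β, γ, h⟩ := exists_affine_on_half_period n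
  rw [(h _ (by linarith) (by linarith)).1, (h a ha (by linarith)).1, (h b (by linarith) hb).1]
  ring

/-- The trapezoidal rule is exact for the primitive of an affine function. -/
lemma tentPrimitive_sub_eq {n : ℤ} {a b : ℝ} (ha : (n : ℝ) ≤ 2 * a) (hab : a ≤ b)
    (hb : 2 * b ≤ n + 1) :
    tentPrimitive b - tentPrimitive a = (b - a) * ((tent a + tent b) / 2 - 1 / 4) := by
  obtain ⟨α, β, γ, h⟩ := exists_affine_on_half_period n
  obtain ⟨hta, hΦa⟩ := h a ha (by linarith)
  obtain ⟨htb, hΦb⟩ := h b (by linarith) hb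
  rw [hta, hΦa, htb, hΦb]
  ring

lemma tent_two_mul_add_one_div (m i : ℕ) :
    tent ((2 * m + 1) / 2 ^ (i + 2)) =
      (tent (m / 2 ^ (i + 1)) + tent ((m + 1) / 2 ^ (i + 1))) / 2 := by
  obtain ⟨n, hn₁, hn₂⟩ := exists_int_le_div_and_add_one_div_le (M := 2 ^ i) (by positivity) m
  push_cast at hn₁ hn₂
  have hmid : ((2 : ℝ) * m + 1) / 2 ^ (i + 2) =
      (m / 2 ^ (i + 1) + (m + 1) / 2 ^ (i + 1)) / 2 := by
    rw [pow_succ, pow_succ]; field_simp; ring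
  rw [hmid]
  refine tent_midpoint (n := n) ?_ (by gcongr; linarith) ?_
  · convert hn₁ using 1; rw [pow_succ]; field_simp
  · convert hn₂ using 2; rw [pow_succ]; field_simp

lemma tentPrimitive_succ_div_sub {M : ℕ} (hM : 0 < M) (k : ℕ) :
    2 * M * (tentPrimitive ((k + 1) / (2 * M)) - tentPrimitive (k / (2 * M))) =
      (tent (k / (2 * M)) + tent ((k + 1) / (2 * M))) / 2 - 1 / 4 := by
  obtain ⟨n, hn₁, hn₂⟩ := exists_int_le_div_and_add_one_div_le hM k
  have hM' : (0 : ℝ) < M := by exact_mod_cast hM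
  rw [tentPrimitive_sub_eq (n := n) _ (by gcongr; linarith) _]
  · field_simp; ring
  · convert hn₁ using 1; field_simp
  · convert hn₂ using 2; field_simp

lemma sum_tent_div {M : ℕ} (hM : 0 < M) (N : ℕ) :
    ∑ k ∈ Finset.Icc 1 N, tent (k / (2 * M)) =
      N / 4 + 2 * M * tentPrimitive (N / (2 * M)) + tent (N / (2 * M)) / 2 := by
  induction N with
  | zero => simp [tent, tentPrimitive]
  | succ N ih =>
    rw [Finset.sum_Icc_succ_top (by omega), ih]
    have := tentPrimitive_succ_div_sub hM N
    push_cast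
    linarith

noncomputable def tentSum (x : ℝ) : ℝ := ∑' i : ℕ, tent (x / 2 ^ (i + 1))

lemma summable_tent_div_two_pow {x : ℝ} (hx : 0 ≤ x) :
    Summable fun i : ℕ => tent (x / 2 ^ (i + 1)) := by
  refine (summable_geometric_two.mul_left (x / 2)).of_nonneg_of_le (fun i => tent_nonneg _)
    fun i => (tent_le_self (by positivity)).trans_eq ?_
  rw [one_div_pow, pow_succ]; field_simp

structure IsScaledDiscrepancy (f : ℕ → ℝ) : Prop where
  zero : f 0 = 0
  two_mul : ∀ n, f (2 * n) = f n
  two_mul_add_one : ∀ n, f (2 * n + 1) = (f n + f (n + 1) + 1) / 2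

lemma IsScaledDiscrepancy.unique {f g : ℕ → ℝ} (hf : IsScaledDiscrepancy f)
    (hg : IsScaledDiscrepancy g) : f = g := by
  funext k
  induction k using Nat.strong_induction_on with
  | _ k ih =>
    obtain ⟨m, rfl | rfl⟩ := Nat.even_or_odd' k
    · rcases m.eq_zero_or_pos with rfl | hm
      · simp [hf.zero, hg.zero]
      · rw [hf.two_mul, hg.two_mul, ih m (by omega)]
    · rcases m.eq_zero_or_pos with rfl | hm
      · -- the recursion at `n = 0` forces the value `1` at `1`
        have hf₁ := hf.two_mul_add_one 0
        have hg₁ := hg.two_mul_add_one 0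
        simp only [mul_zero, zero_add, hf.zero, hg.zero] at hf₁ hg₁ ⊢
        linarith
      · rw [hf.two_mul_add_one, hg.two_mul_add_one, ih m (by omega), ih (m + 1) (by omega)]

lemma isScaledDiscrepancy_tentSum : IsScaledDiscrepancy fun k => tentSum k where
  zero := by simp [tentSum]
  two_mul n := by
    rw [tentSum, (summable_tent_div_two_pow (by positivity)).tsum_eq_zero_add, tentSum]
    have h : ∀ i : ℕ, ((2 * n : ℕ) : ℝ) / 2 ^ (i + 1 + 1) = n / 2 ^ (i + 1) := fun i => by
      push_cast; rw [pow_succ _ (i + 1)]; field_simp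
    simp only [h]
    push_cast
    rw [pow_one, mul_div_cancel_left₀ _ two_ne_zero, tent_natCast, zero_add]
  two_mul_add_one n := by
    have hn := summable_tent_div_two_pow n.cast_nonneg
    have hn₁ := summable_tent_div_two_pow (n + 1 : ℕ).cast_nonneg
    rw [tentSum, (summable_tent_div_two_pow (by positivity)).tsum_eq_zero_add, tentSum, tentSum]
    push_cast at hn₁ ⊢
    simp only [tent_two_mul_add_one_div, tsum_div_const]
    rw [hn.tsum_add hn₁, show ((2 : ℝ) * n + 1) / 2 ^ (0 + 1) = n + 1 / 2 by ring,
      tent_natCast_add, tent]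
    norm_num
    ring

/-- `(1 / s) ∫₀ˢ (tent - 1 / 4)`. -/
noncomputable def meanDeviation (s : ℝ) : ℝ := tentPrimitive s / s

lemma quarter_add_meanDeviation_bounds {s : ℝ} (hs : 0 < s) :
    0 ≤ 1 / 4 + meanDeviation s ∧ 1 / 4 + meanDeviation s ≤ s / 2 := by
  obtain ⟨h₁, h₂⟩ := tentPrimitive_add_bounds hs.le
  have h : 1 / 4 + meanDeviation s = (s / 4 + tentPrimitive s) / s := by
    rw [meanDeviation]; field_simp
  rw [h, le_div_iff₀ hs, div_le_iff₀ hs]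
  constructor <;> nlinarith

lemma abs_meanDeviation_le {s : ℝ} (hs : 0 < s) : |meanDeviation s| ≤ 1 / (4 * s) := by
  rw [meanDeviation, abs_div, abs_of_pos hs, div_le_div_iff₀ hs (by positivity)]
  nlinarith [abs_tentPrimitive_le s]

lemma continuousOn_meanDeviation : ContinuousOn meanDeviation (Ioi 0) :=
  continuous_tentPrimitive.continuousOn.div continuousOn_id fun _ hs => ne_of_gt hs

lemma norm_quarter_add_meanDeviation_div_le {t T : ℝ} (ht : 0 < t) (hT : t ≤ T) (i : ℕ) :
    ‖1 / 4 + meanDeviation (t / 2 ^ (i + 1))‖ ≤ T * (1 / 2) ^ i := by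
  obtain ⟨h₁, h₂⟩ := quarter_add_meanDeviation_bounds (s := t / 2 ^ (i + 1)) (by positivity)
  rw [norm_of_nonneg h₁]
  refine h₂.trans ?_
  rw [one_div_pow, pow_succ, div_div, div_le_iff₀ (by positivity)]
  field_simp
  nlinarith [pow_pos (two_pos (α := ℝ)) i]

lemma norm_meanDeviation_two_pow_mul_le {t T : ℝ} (hT : 0 < T) (hTt : T ≤ t) (j : ℕ) :
    ‖meanDeviation (2 ^ j * t)‖ ≤ T⁻¹ * (1 / 2) ^ j := by
  have ht : 0 < t := hT.trans_le hTt
  refine (abs_meanDeviation_le (by positivity)).trans ?_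
  rw [one_div_pow, show T⁻¹ * (1 / 2 ^ j) = 1 / (2 ^ j * T) by field_simp]
  apply one_div_le_one_div_of_le (by positivity)
  nlinarith [pow_pos (two_pos (α := ℝ)) j]

noncomputable def fluctuation (t : ℝ) : ℝ :=
  ∑' i : ℕ, (1 / 4 + meanDeviation (t / 2 ^ (i + 1))) + ∑' j : ℕ, meanDeviation (2 ^ j * t) -
    logb 2 t / 4

lemma summable_quarter_add_meanDeviation_div {t : ℝ} (ht : 0 < t) :
    Summable fun i : ℕ => 1 / 4 + meanDeviation (t / 2 ^ (i + 1)) :=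
  .of_norm_bounded (summable_geometric_two.mul_left t)
    (norm_quarter_add_meanDeviation_div_le ht le_rfl)

lemma summable_meanDeviation_two_pow_mul {t : ℝ} (ht : 0 < t) :
    Summable fun j : ℕ => meanDeviation (2 ^ j * t) :=
  .of_norm_bounded (summable_geometric_two.mul_left t⁻¹)
    (norm_meanDeviation_two_pow_mul_le ht le_rfl)

lemma continuousOn_fluctuation : ContinuousOn fluctuation (Ioi 0) := by
  have hlower : ContinuousOn (fun t => ∑' i : ℕ, (1 / 4 + meanDeviation (t / 2 ^ (i + 1))))
      (Ioi 0) := by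
    refine continuousOn_tsum_of_locally_bounded isOpen_Ioi (fun i => ?_) fun t₀ (ht₀ : 0 < t₀) =>
      ⟨Ioo 0 (2 * t₀), Ioo_mem_nhds ht₀ (by linarith), _,
        summable_geometric_two.mul_left (2 * t₀),
        fun i t ht => norm_quarter_add_meanDeviation_div_le ht.1 ht.2.le i⟩
    exact continuousOn_const.add (continuousOn_meanDeviation.comp (continuousOn_id.div_const _)
      fun t (ht : 0 < t) => show 0 < t / 2 ^ (i + 1) by positivity)
  have hupper : ContinuousOn (fun t => ∑' j : ℕ, meanDeviation (2 ^ j * t)) (Ioi 0) := by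
    refine continuousOn_tsum_of_locally_bounded isOpen_Ioi (fun j => ?_) fun t₀ (ht₀ : 0 < t₀) =>
      ⟨Ioi (t₀ / 2), Ioi_mem_nhds (by linarith), _,
        summable_geometric_two.mul_left (t₀ / 2)⁻¹,
        fun j t ht => norm_meanDeviation_two_pow_mul_le (by linarith) ht.le j⟩
    exact continuousOn_meanDeviation.comp (continuousOn_const.mul continuousOn_id)
      fun t (ht : 0 < t) => show 0 < 2 ^ j * t by positivity
  exact (hlower.add hupper).sub ((continuousOn_logb.mono fun t ht => ne_of_gt ht).div_const 4)

lemma fluctuation_two_mul {t : ℝ} (ht : 0 < t) : fluctuation (2 * t) = fluctuation t := by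
  have hlower := (summable_quarter_add_meanDeviation_div (mul_pos two_pos ht)).tsum_eq_zero_add
  have hupper := (summable_meanDeviation_two_pow_mul ht).tsum_eq_zero_add
  have hdiv : ∀ i : ℕ, 2 * t / 2 ^ (i + 1 + 1) = t / 2 ^ (i + 1) := fun i => by
    rw [pow_succ _ (i + 1)]; field_simp
  have hmul : ∀ j : ℕ, (2 : ℝ) ^ (j + 1) * t = 2 ^ j * (2 * t) := fun j => by ring
  rw [fluctuation, fluctuation, hlower, hupper, logb_mul two_ne_zero ht.ne',
    logb_self_eq_one one_lt_two]
  simp only [hdiv, hmul, zero_add, pow_one, pow_zero, one_mul]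
  rw [mul_div_cancel_left₀ t two_ne_zero]
  ring

lemma fluctuation_natCast {N : ℕ} (hN : 0 < N) :
    fluctuation N = ((∑ k ∈ Finset.Icc 1 N, tentSum k) - tentSum N / 2) / N - logb 2 N / 4 := by
  have hsum : ∑ k ∈ Finset.Icc 1 N, tentSum k - tentSum N / 2 =
      ∑' i : ℕ, (N / 4 + 2 ^ (i + 1) * tentPrimitive (N / 2 ^ (i + 1))) := by
    have hs : ∀ k : ℕ, Summable fun i : ℕ => tent (k / 2 ^ (i + 1)) := fun k =>
      summable_tent_div_two_pow k.cast_nonneg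
    simp only [tentSum]
    rw [← Summable.tsum_finsetSum fun k _ => hs k, ← tsum_div_const,
      ← Summable.tsum_sub (summable_sum fun k _ => hs k) ((hs N).div_const 2)]
    congr 1
    funext i
    have h := sum_tent_div (M := 2 ^ i) (by positivity) N
    push_cast at h
    rw [← pow_succ'] at h
    linarith
  have hlower : ∀ i : ℕ, 1 / 4 + meanDeviation (N / 2 ^ (i + 1)) =
      (N / 4 + 2 ^ (i + 1) * tentPrimitive (N / 2 ^ (i + 1))) / N := fun i => by
    rw [meanDeviation]; field_simp
  have hupper : ∀ j : ℕ, meanDeviation (2 ^ j * N) = 0 := fun j => by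
    rw [meanDeviation, show (2 : ℝ) ^ j * N = (2 ^ j * N : ℕ) by push_cast; ring,
      tentPrimitive_natCast, zero_div]
  rw [fluctuation, tsum_congr hlower, tsum_div_const, ← hsum, tsum_congr hupper, tsum_zero,
    add_zero]

noncomputable def psi (x : ℝ) : ℝ := fluctuation (2 ^ x)

lemma continuous_psi : Continuous psi :=
  continuousOn_fluctuation.comp_continuous (continuous_const_rpow two_ne_zero)
    fun x => rpow_pos_of_pos two_pos x

lemma periodic_psi : Periodic psi 1 := fun x => by
  rw [psi, psi, rpow_add_one two_ne_zero, mul_comm,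
    fluctuation_two_mul (rpow_pos_of_pos two_pos x)]

lemma sum_tentSum_div_eq {N : ℕ} (hN : 0 < N) :
    (∑ k ∈ Finset.Icc 1 N, tentSum k) / N =
      logb 2 N / 4 + tentSum N / (2 * N) + psi (logb 2 N) := by
  have hN' : (0 : ℝ) < N := by exact_mod_cast hN
  rw [psi, rpow_logb two_pos one_lt_two.ne' hN', fluctuation_natCast hN]
  field_simp
  ring

end VanDerCorput

theorem vdc_partial_sums_periodic_general (d : ℕ → ℚ)
    (h0 : d 0 = 0)
    (heven : ∀ N : ℕ, d (2 * N) = d N)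
    (hodd : ∀ N : ℕ, d (2 * N + 1) = (d N + d (N + 1) + 1) / 2) :
    ∃! ψ : ℝ → ℝ, Continuous ψ ∧ Function.Periodic ψ 1 ∧
      ∀ N : ℕ, 1 ≤ N →
        (∑ k ∈ Finset.Icc 1 N, (d k : ℝ)) / N
          = Real.logb 2 N / 4 + (d N : ℝ) / (2 * N) + ψ (Real.logb 2 N) := by
  have hd : VanDerCorput.IsScaledDiscrepancy fun k => (d k : ℝ) :=
    ⟨by simp [h0], fun n => by simp [heven], fun n => by simp [hodd]⟩
  have hd_eq : ∀ k, (d k : ℝ) = VanDerCorput.tentSum k :=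
    congrFun (hd.unique VanDerCorput.isScaledDiscrepancy_tentSum)
  simp only [hd_eq]
  refine ⟨VanDerCorput.psi, ⟨VanDerCorput.continuous_psi, VanDerCorput.periodic_psi,
    fun N hN => VanDerCorput.sum_tentSum_div_eq hN⟩, ?_⟩
  rintro ψ ⟨hψ, hψp, hψN⟩
  refine eq_of_periodic_of_eq_on_logb_natCast hψ VanDerCorput.continuous_psi hψp
    VanDerCorput.periodic_psi fun N hN => ?_
  linarith [hψN N hN, VanDerCorput.sum_tentSum_div_eq hN]

theorem vdc_partial_sums_periodic (d : ℕ → ℚ)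
    (h0 : d 0 = 0) (h1 : d 1 = 1)
    (heven : ∀ N : ℕ, d (2 * N) = d N)
    (hodd : ∀ N : ℕ, d (2 * N + 1) = (d N + d (N + 1) + 1) / 2) :
    ∃! ψ : ℝ → ℝ, Continuous ψ ∧ Function.Periodic ψ 1 ∧
      ∀ N : ℕ, 1 ≤ N →
        (∑ k ∈ Finset.Icc 1 N, (d k : ℝ)) / N
          = Real.logb 2 N / 4 + (d N : ℝ) / (2 * N) + ψ (Real.logb 2 N) :=
  vdc_partial_sums_periodic_general d h0 heven hodd
end

section
/- Let α, β, γ be complex numbers, and let x : ℕ≥1 → ℂ be a sequence satisfying x(2n) = x(n) and x(2n+1) = α·x(n) + β·x(n+1) + γ for all n ≥ 1. Then x(n) = x(n^R) for all n ≥ 1, where n^R denotes the integer obtained by reversing the binary digits of n. -/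
/-!
Put `v n = (x n, x (n + 1), 1)`. Appending a binary digit `b` to `n` acts on `v n` by a linear map
`M b`, so `x (2n + 1) = φ (M w (v 1))`, where `w` is the digit word of `n` below its leading one and
`φ p = α p₁ + β p₂ + γ p₃`. Both `M b` are self-adjoint for an explicit symmetric bilinear form `B`,
hence `B (v 1) (M w (v 1)) = B (v 1) (M wᴿ (v 1))`, and `B (v 1) = D • φ` with
`D = x 1 * (α + β - 1) + γ`. If `D ≠ 0` this is `x (2n + 1) = x ((2n + 1)ᴿ)`; if `D = 0` then
`v 1` is a common fixed point of the `M b` and `x` is constant. Trailing zeros are absorbed by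
`x (2n) = x n`.
-/

/-- The binary digit reversal of `n`. -/
def binRev (n : ℕ) : ℕ :=
  ∑ i ∈ Finset.range (Nat.log 2 n + 1),
    if n.testBit (Nat.log 2 n - i) then 2 ^ i else 0

/-- The number whose binary expansion is that of `m` followed by the bits of `w`, where `w` is
read least significant bit first. -/
def appendBits (w : List Bool) (m : ℕ) : ℕ :=
  w.foldr Nat.bit m

@[simp] lemma appendBits_nil (m : ℕ) : appendBits [] m = m := rfl

@[simp] lemma appendBits_cons (b : Bool) (w : List Bool) (m : ℕ) :
    appendBits (b :: w) m = Nat.bit b (appendBits w m) := rfl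

lemma appendBits_append (w w' : List Bool) (m : ℕ) :
    appendBits (w ++ w') m = appendBits w (appendBits w' m) :=
  List.foldr_append

lemma appendBits_ne_zero (w : List Bool) {m : ℕ} (hm : m ≠ 0) : appendBits w m ≠ 0 := by
  induction w with
  | nil => exact hm
  | cons b w ih => exact Nat.bit_ne_zero b ih

lemma exists_appendBits_one {n : ℕ} (hn : n ≠ 0) : ∃ w, appendBits w 1 = n := by
  induction n using Nat.binaryRecFromOne with
  | zero => contradiction
  | one => exact ⟨[], rfl⟩
  | bit b n hn0 ih =>
    obtain ⟨w, rfl⟩ := ih hn0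
    exact ⟨b :: w, rfl⟩

lemma testBit_appendBits_one (w : List Bool) (i : ℕ) :
    (appendBits w 1).testBit i = (w ++ [true]).getD i false := by
  induction w generalizing i with
  | nil => cases i <;> simp [Nat.testBit_add_one]
  | cons b w ih => cases i <;> simp [Nat.testBit_bit_succ, ih]

lemma log_appendBits_one (w : List Bool) : Nat.log 2 (appendBits w 1) = w.length := by
  refine Nat.log_eq_of_pow_le_of_lt_pow ?_ ?_ <;>
  induction w with
  | nil => simp
  | cons b w ih =>
    have := Bool.toNat_le b
    simp only [appendBits_cons, Nat.bit_val, List.length_cons, pow_succ]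
    omega

lemma appendBits_zero_eq_sum (w : List Bool) :
    appendBits w 0 = ∑ i ∈ Finset.range w.length, if w.getD i false then 2 ^ i else 0 := by
  induction w with
  | nil => rfl
  | cons b w ih =>
    rw [List.length_cons, Finset.sum_range_succ']
    simp only [appendBits_cons, Nat.bit_val, ih, List.getD_cons_succ, List.getD_cons_zero, pow_succ,
      Finset.mul_sum]
    cases b <;> simp [mul_comm]

lemma binRev_appendBits_one (w : List Bool) :
    binRev (appendBits w 1) = appendBits (true :: w.reverse) 0 := by
  have hrev : true :: w.reverse = (w ++ [true]).reverse := by simp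
  rw [binRev, log_appendBits_one, appendBits_zero_eq_sum, hrev]
  refine Finset.sum_congr (by simp) fun i hi => ?_
  rw [Finset.mem_range] at hi
  rw [testBit_appendBits_one, List.getD_reverse _ (by simpa using hi)]
  simp

lemma adjoint_foldr {ι M R : Type*} (B : M → M → R) (f : ι → M → M)
    (hf : ∀ i p q, B (f i p) q = B p (f i q)) (w : List ι) (p q : M) :
    B (w.foldr f p) q = B p (w.reverse.foldr f q) := by
  induction w generalizing q with
  | nil => rfl
  | cons i w ih => rw [List.foldr_cons, hf, ih, List.reverse_cons, List.foldr_append]; rfl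

lemma self_adjoint_foldr_reverse {ι M R : Type*} (B : M → M → R) (f : ι → M → M)
    (hB : ∀ p q, B p q = B q p) (hf : ∀ i p q, B (f i p) q = B p (f i q)) (w : List ι) (p : M) :
    B p (w.foldr f p) = B p (w.reverse.foldr f p) := by
  rw [hB, adjoint_foldr B f hf]

section Recurrence

variable {R : Type*} [CommRing R] (α β γ : R)

def recLin (p : R × R × R) : R :=
  α * p.1 + β * p.2.1 + γ * p.2.2

def recStep (b : Bool) (p : R × R × R) : R × R × R :=
  if b then (recLin α β γ p, p.2.1, p.2.2) else (p.1, recLin α β γ p, p.2.2)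

/-- A symmetric form for which both `recStep α β γ b` are self-adjoint (a linear condition on its
coefficients). Since both steps fix the last coordinate, the coefficient of `p.2.2 * q.2.2` is free;
the choice `γ * (γ - c)` makes `recForm c (c, c, 1)` a multiple of `recLin`. -/
def recForm (c : R) (p q : R × R × R) : R :=
  α * (α - 1) * p.1 * q.1 + α * β * (p.1 * q.2.1 + p.2.1 * q.1)
    + α * γ * (p.1 * q.2.2 + p.2.2 * q.1) + β * (β - 1) * p.2.1 * q.2.1
    + β * γ * (p.2.1 * q.2.2 + p.2.2 * q.2.1) + γ * (γ - c) * p.2.2 * q.2.2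

variable {α β γ}

lemma recForm_comm (c : R) (p q : R × R × R) : recForm α β γ c p q = recForm α β γ c q p := by
  unfold recForm; ring

lemma recForm_recStep (c : R) (b : Bool) (p q : R × R × R) :
    recForm α β γ c (recStep α β γ b p) q = recForm α β γ c p (recStep α β γ b q) := by
  cases b <;> simp only [recForm, recStep, recLin, Bool.false_eq_true, if_false, if_true] <;> ring

lemma recForm_diag_left (c : R) (q : R × R × R) :
    recForm α β γ c (c, c, 1) q = (c * (α + β - 1) + γ) * recLin α β γ q := by
  unfold recForm recLin; ring

lemma foldr_recStep_diag {c : R} (hc : c * (α + β - 1) + γ = 0) (w : List Bool) :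
    w.foldr (recStep α β γ) (c, c, 1) = (c, c, 1) := by
  have hlin : recLin α β γ (c, c, 1) = c := by unfold recLin; linear_combination hc
  exact List.foldr_fixed' (fun b => by cases b <;> simp [recStep, hlin]) w

structure IsBinaryRecurrent (α β γ : R) (x : ℕ → R) : Prop where
  two_mul : ∀ n : ℕ, 1 ≤ n → x (2 * n) = x n
  two_mul_add_one : ∀ n : ℕ, 1 ≤ n → x (2 * n + 1) = α * x n + β * x (n + 1) + γ

def stateVec (x : ℕ → R) (n : ℕ) : R × R × R :=
  (x n, x (n + 1), 1)

namespace IsBinaryRecurrent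

variable {x : ℕ → R}

lemma stateVec_one (hx : IsBinaryRecurrent α β γ x) : stateVec x 1 = (x 1, x 1, 1) := by
  simp [stateVec, ← hx.two_mul 1 le_rfl]

lemma stateVec_bit (hx : IsBinaryRecurrent α β γ x) (b : Bool) {n : ℕ} (hn : n ≠ 0) :
    stateVec x (Nat.bit b n) = recStep α β γ b (stateVec x n) := by
  have hn1 : 1 ≤ n := Nat.one_le_iff_ne_zero.mpr hn
  cases b
  · simp [stateVec, recStep, recLin, Nat.bit_false_apply, hx.two_mul n hn1,
      hx.two_mul_add_one n hn1]
  · simp [stateVec, recStep, recLin, Nat.bit_true_apply, hx.two_mul_add_one n hn1,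
      show 2 * n + 1 + 1 = 2 * (n + 1) by ring, hx.two_mul (n + 1) (by omega)]

lemma stateVec_appendBits (hx : IsBinaryRecurrent α β γ x) (w : List Bool) {n : ℕ} (hn : n ≠ 0) :
    stateVec x (appendBits w n) = w.foldr (recStep α β γ) (stateVec x n) := by
  induction w with
  | nil => rfl
  | cons b w ih => rw [appendBits_cons, hx.stateVec_bit b (appendBits_ne_zero w hn), ih]; rfl

lemma apply_two_mul_add_one_reverse [IsDomain R] (hx : IsBinaryRecurrent α β γ x) (w : List Bool) :
    x (2 * appendBits w 1 + 1) = x (2 * appendBits w.reverse 1 + 1) := by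
  have hlin (v : List Bool) :
      x (2 * appendBits v 1 + 1) = recLin α β γ (v.foldr (recStep α β γ) (x 1, x 1, 1)) := by
    rw [hx.two_mul_add_one _ (Nat.one_le_iff_ne_zero.mpr (appendBits_ne_zero v one_ne_zero)),
      ← hx.stateVec_one, ← hx.stateVec_appendBits v one_ne_zero]
    simp [recLin, stateVec]
  rw [hlin, hlin]
  by_cases hD : x 1 * (α + β - 1) + γ = 0
  · rw [foldr_recStep_diag hD, foldr_recStep_diag hD]
  · apply mul_left_cancel₀ hD
    rw [← recForm_diag_left, ← recForm_diag_left]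
    exact self_adjoint_foldr_reverse _ _ (recForm_comm _) (recForm_recStep _) w _

lemma apply_appendBits_one_eq_binRev [IsDomain R] (hx : IsBinaryRecurrent α β γ x)
    (w : List Bool) :
    x (appendBits w 1) = x (binRev (appendBits w 1)) := by
  rw [binRev_appendBits_one]
  induction w with
  | nil => rfl
  | cons b w ih =>
    cases b
    · rw [appendBits_cons, Nat.bit_false_apply,
        hx.two_mul _ (Nat.one_le_iff_ne_zero.mpr (appendBits_ne_zero w one_ne_zero)), ih]
      simp [appendBits_append]
    · simpa [appendBits_append, Nat.bit_true_apply] using hx.apply_two_mul_add_one_reverse w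

end IsBinaryRecurrent

end Recurrence

theorem digit_reversal_invariance (α β γ : ℂ) (x : ℕ → ℂ)
    (heven : ∀ n : ℕ, 1 ≤ n → x (2 * n) = x n)
    (hodd : ∀ n : ℕ, 1 ≤ n → x (2 * n + 1) = α * x n + β * x (n + 1) + γ)
    (n : ℕ) (hn : 1 ≤ n) :
    x n = x (binRev n) := by
  obtain ⟨w, rfl⟩ := exists_appendBits_one (Nat.one_le_iff_ne_zero.mp hn)
  exact IsBinaryRecurrent.apply_appendBits_one_eq_binRev ⟨heven, hodd⟩ w
end

section
/- Define d : ℕ → ℚ by d(0) = 0, d(1) = 1, d(2N) = d(N), d(2N+1) = (d(N) + d(N+1) + 1)/2. Then d(N) = d(N^R) for all N ≥ 1, where N^R is the binary digit reversal of N. -/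
open Finset

section Digits

variable {K : Type*} [Field K]

def dyadicSum (m : ℕ) (b : ℕ → K) : K :=
  ∑ i ∈ range m, b i / 2 ^ i

def pairSum (m : ℕ) (b : ℕ → K) : K :=
  ∑ j ∈ range m, ∑ i ∈ range j, b i * b j / 2 ^ (j - i)

lemma dyadicSum_succ (m : ℕ) (b : ℕ → K) :
    dyadicSum (m + 1) b = b 0 + dyadicSum m (fun i ↦ b (i + 1)) / 2 := by
  simp only [dyadicSum, sum_range_succ', pow_zero, div_one, sum_div, pow_succ, div_div]
  ring

lemma pairSum_succ (m : ℕ) (b : ℕ → K) :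
    pairSum (m + 1) b =
      pairSum m (fun i ↦ b (i + 1)) + b 0 * dyadicSum m (fun i ↦ b (i + 1)) / 2 := by
  simp only [pairSum, dyadicSum, sum_range_succ' _ m, sum_range_zero, add_zero,
    sum_range_succ' (fun i ↦ b i * b (_ + 1) / _), Nat.add_sub_add_right, sum_add_distrib,
    mul_sum, sum_div]
  congr 1
  refine sum_congr rfl fun j _ ↦ ?_
  rw [Nat.sub_zero, pow_succ]
  ring

lemma pairSum_congr {m : ℕ} {b b' : ℕ → K} (h : ∀ i ∈ range m, b i = b' i) :
    pairSum m b = pairSum m b' :=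
  sum_congr rfl fun j hj ↦ sum_congr rfl fun i hi ↦ by
    rw [h j hj, h i (mem_range.2 ((mem_range.1 hi).trans (mem_range.1 hj)))]

lemma pairSum_eq_sum_filter (m : ℕ) (b : ℕ → K) :
    pairSum m b = ∑ p ∈ (range m ×ˢ range m).filter (fun p ↦ p.2 < p.1),
      b p.2 * b p.1 / 2 ^ (p.1 - p.2) := by
  refine (sum_finset_product' (f := fun j i ↦ b i * b j / 2 ^ (j - i)) _ _ _ fun p ↦ ?_).symm
  simp only [mem_filter, mem_product, mem_range]
  omega

lemma pairSum_reflect (ν : ℕ) (b : ℕ → K) :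
    pairSum (ν + 1) (fun i ↦ b (ν - i)) = pairSum (ν + 1) b := by
  rw [pairSum_eq_sum_filter, pairSum_eq_sum_filter]
  let σ : ℕ × ℕ → ℕ × ℕ := fun p ↦ (ν - p.2, ν - p.1)
  refine sum_nbij' σ σ ?_ ?_ ?_ ?_ ?_ <;> intro p hp <;>
    simp only [σ, mem_filter, mem_product, mem_range] at hp ⊢
  · omega
  · omega
  · ext <;> omega
  · ext <;> omega
  · rw [mul_comm, show ν - p.2 - (ν - p.1) = p.1 - p.2 by omega]

def bitSeq (N i : ℕ) : K := if N.testBit i then 1 else 0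

lemma bitSeq_two_mul_zero (M : ℕ) : (bitSeq (2 * M) 0 : K) = 0 := by
  simp [bitSeq, Nat.testBit_zero]

lemma bitSeq_two_mul_add_one_zero (M : ℕ) : (bitSeq (2 * M + 1) 0 : K) = 1 := by
  simp [bitSeq, Nat.testBit_zero]

lemma bitSeq_two_mul_succ (M : ℕ) : (fun i ↦ (bitSeq (2 * M) (i + 1) : K)) = bitSeq M := by
  ext i
  simp [bitSeq, Nat.testBit_add_one]

lemma bitSeq_two_mul_add_one_succ (M : ℕ) :
    (fun i ↦ (bitSeq (2 * M + 1) (i + 1) : K)) = bitSeq M := by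
  ext i
  simp [bitSeq, Nat.testBit_add_one, show (2 * M + 1) / 2 = M by omega]

lemma testBit_binRev {N k : ℕ} :
    (binRev N).testBit k ↔ k ≤ Nat.log 2 N ∧ N.testBit (Nat.log 2 N - k) := by
  rw [binRev, ← sum_filter, ← Nat.mem_bitIndices, ← List.mem_toFinset,
    toFinset_bitIndices_sum_two_pow, mem_filter, mem_range, Nat.lt_succ_iff]

lemma binRev_lt (N : ℕ) : binRev N < 2 ^ (Nat.log 2 N + 1) :=
  Nat.lt_pow_two_of_testBit _ fun i hi ↦ Bool.eq_false_iff.2 fun h ↦ by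
    have := (testBit_binRev.1 h).1
    omega

lemma bitSeq_binRev {N i : ℕ} (hi : i ≤ Nat.log 2 N) :
    (bitSeq (binRev N) i : K) = bitSeq N (Nat.log 2 N - i) := by
  simp only [bitSeq, testBit_binRev, hi, true_and]

end Digits

lemma exists_eq_two_mul_or_two_mul_add_one_of_lt_two_pow_succ {N m : ℕ} (h : N < 2 ^ (m + 1)) :
    ∃ M < 2 ^ m, N = 2 * M ∨ N = 2 * M + 1 := by
  obtain ⟨M, hM | hM⟩ := Nat.even_or_odd' N <;> refine ⟨M, ?_, by omega⟩ <;>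
    rw [pow_succ] at h <;> omega

section Recurrence

variable {d : ℕ → ℚ} (heven : ∀ N : ℕ, d (2 * N) = d N)
  (hodd : ∀ N : ℕ, d (2 * N + 1) = (d N + d (N + 1) + 1) / 2)
include heven hodd

lemma apply_succ_eq_sub_dyadicSum {m N : ℕ} (hN : N < 2 ^ m) :
    d (N + 1) = d N + 1 - dyadicSum m (bitSeq N) := by
  induction m generalizing N with
  | zero =>
    obtain rfl : N = 0 := by simpa using hN
    have := hodd 0
    simp only [dyadicSum, range_zero, sum_empty, mul_zero, zero_add] at this ⊢
    linarith
  | succ m ih =>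
    obtain ⟨M, hM, rfl | rfl⟩ := exists_eq_two_mul_or_two_mul_add_one_of_lt_two_pow_succ hN
    · rw [hodd, heven, ih hM, dyadicSum_succ, bitSeq_two_mul_zero, bitSeq_two_mul_succ]
      ring
    · rw [show 2 * M + 1 + 1 = 2 * (M + 1) by ring, heven, hodd, ih hM, dyadicSum_succ,
        bitSeq_two_mul_add_one_zero, bitSeq_two_mul_add_one_succ]
      ring

lemma apply_eq_add_sum_bitSeq_sub_pairSum {m N : ℕ} (hN : N < 2 ^ m) :
    d N = d 0 + ∑ i ∈ range m, bitSeq N i - pairSum m (bitSeq N) := by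
  induction m generalizing N with
  | zero =>
    obtain rfl : N = 0 := by simpa using hN
    simp [pairSum]
  | succ m ih =>
    obtain ⟨M, hM, rfl | rfl⟩ := exists_eq_two_mul_or_two_mul_add_one_of_lt_two_pow_succ hN
    · rw [heven, ih hM, sum_range_succ', pairSum_succ, bitSeq_two_mul_zero, bitSeq_two_mul_succ]
      ring
    · rw [hodd, apply_succ_eq_sub_dyadicSum heven hodd hM, ih hM, sum_range_succ', pairSum_succ,
        bitSeq_two_mul_add_one_zero, bitSeq_two_mul_add_one_succ]
      ring

end Recurrence

theorem vdc_discrepancy_digit_reversal_general (d : ℕ → ℚ)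
    (heven : ∀ N : ℕ, d (2 * N) = d N)
    (hodd : ∀ N : ℕ, d (2 * N + 1) = (d N + d (N + 1) + 1) / 2)
    (N : ℕ) :
    d N = d (binRev N) := by
  set ν := Nat.log 2 N
  have hN : N < 2 ^ (ν + 1) := Nat.lt_pow_succ_log_self one_lt_two N
  have hbits : ∀ i ∈ range (ν + 1), (bitSeq (binRev N) i : ℚ) = bitSeq N (ν - i) :=
    fun i hi ↦ bitSeq_binRev (Nat.lt_succ_iff.1 (mem_range.1 hi))
  have hsum : ∑ i ∈ range (ν + 1), (bitSeq N (ν - i) : ℚ) = ∑ i ∈ range (ν + 1), bitSeq N i := by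
    simpa using sum_range_reflect (bitSeq N : ℕ → ℚ) (ν + 1)
  rw [apply_eq_add_sum_bitSeq_sub_pairSum heven hodd hN,
    apply_eq_add_sum_bitSeq_sub_pairSum heven hodd (binRev_lt N), sum_congr rfl hbits, hsum,
    pairSum_congr hbits, pairSum_reflect]

theorem vdc_discrepancy_digit_reversal (d : ℕ → ℚ)
    (h0 : d 0 = 0) (h1 : d 1 = 1)
    (heven : ∀ N : ℕ, d (2 * N) = d N)
    (hodd : ∀ N : ℕ, d (2 * N + 1) = (d N + d (N + 1) + 1) / 2)
    (N : ℕ) (hN : 1 ≤ N) :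
    d N = d (binRev N) :=
  vdc_discrepancy_digit_reversal_general d heven hodd N
end

section
/- Define d : ℕ → ℚ by d(0) = 0, d(1) = 1, d(2N) = d(N), d(2N+1) = (d(N) + d(N+1) + 1)/2. Then d(N) ≤ (1/3)·log₂ N + 1 for all N ≥ 1. -/
/-!
Besides `d N ≤ log₂ N / 3 + 1` one proves, by a simultaneous strong induction, the bound
`d N + d (N + 1) ≤ (2/3)·log₂ (2N + 1) + 1` on consecutive pairs, which is what the odd recursion
sees. Each recursion step then reduces to an inequality `8ab ≤ c²` between the arguments of the
logarithms, e.g. `8M(2M + 1) ≤ (4M + 1)²` and `8(2M + 1)(M + 1) ≤ (4M + 3)²`.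
-/

open Real

theorem Real.logb_two_add_logb_two_add_three_le {a b c : ℝ} (ha : 0 < a) (hb : 0 < b)
    (h : 8 * (a * b) ≤ c ^ 2) : logb 2 a + logb 2 b + 3 ≤ 2 * logb 2 c := by
  have hlog8 : logb 2 8 = 3 := by
    rw [show (8 : ℝ) = 2 ^ 3 by norm_num, logb_pow, logb_self_eq_one one_lt_two]
    norm_num
  calc logb 2 a + logb 2 b + 3 = logb 2 (8 * (a * b)) := by
        rw [logb_mul (by norm_num) (by positivity), logb_mul ha.ne' hb.ne', hlog8]; ring
    _ ≤ logb 2 (c ^ 2) := logb_le_logb_of_le one_lt_two (by positivity) h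
    _ = 2 * logb 2 c := by rw [logb_pow]; norm_num

namespace VanDerCorput

def SingleBound (d : ℕ → ℝ) (N : ℕ) : Prop :=
  d N ≤ logb 2 N / 3 + 1

def PairBound (d : ℕ → ℝ) (N : ℕ) : Prop :=
  d N + d (N + 1) ≤ 2 * logb 2 (2 * N + 1) / 3 + 1

variable {d : ℕ → ℝ}

theorem singleBound_two_mul (heven : ∀ N, d (2 * N) = d N) {M : ℕ} (hM : 0 < M)
    (hS : SingleBound d M) : SingleBound d (2 * M) := by
  have hlog : logb 2 ((2 * M : ℕ) : ℝ) = 1 + logb 2 M := by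
    push_cast
    rw [logb_mul two_ne_zero (by positivity), logb_self_eq_one one_lt_two]
  unfold SingleBound at *
  rw [heven, hlog]
  linarith

theorem singleBound_two_mul_add_one (hodd : ∀ N, d (2 * N + 1) = (d N + d (N + 1) + 1) / 2)
    {M : ℕ} (hP : PairBound d M) : SingleBound d (2 * M + 1) := by
  unfold SingleBound PairBound at *
  rw [hodd]
  push_cast
  linarith

theorem pairBound_two_mul (heven : ∀ N, d (2 * N) = d N)
    (hodd : ∀ N, d (2 * N + 1) = (d N + d (N + 1) + 1) / 2) {M : ℕ} (hM : 0 < M)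
    (hS : SingleBound d M) (hP : PairBound d M) : PairBound d (2 * M) := by
  have hlog := logb_two_add_logb_two_add_three_le (a := M) (b := 2 * M + 1) (c := 2 * (2 * M) + 1)
    (by positivity) (by positivity) (by nlinarith)
  unfold SingleBound PairBound at *
  rw [heven, hodd]
  push_cast
  linarith

theorem pairBound_two_mul_add_one (heven : ∀ N, d (2 * N) = d N)
    (hodd : ∀ N, d (2 * N + 1) = (d N + d (N + 1) + 1) / 2) {M : ℕ}
    (hP : PairBound d M) (hS : SingleBound d (M + 1)) : PairBound d (2 * M + 1) := by
  have hlog := logb_two_add_logb_two_add_three_le (a := 2 * M + 1) (b := M + 1)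
    (c := 2 * (2 * M + 1) + 1) (by positivity) (by positivity) (by nlinarith)
  unfold SingleBound PairBound at *
  rw [show 2 * M + 1 + 1 = 2 * (M + 1) by ring, heven, hodd]
  push_cast at *
  linarith

theorem pairBound_and_singleBound_succ (h0 : d 0 = 0) (h1 : d 1 = 1)
    (heven : ∀ N, d (2 * N) = d N)
    (hodd : ∀ N, d (2 * N + 1) = (d N + d (N + 1) + 1) / 2) (N : ℕ) :
    PairBound d N ∧ SingleBound d (N + 1) := by
  induction N using Nat.strong_induction_on with
  | _ N ih =>
    obtain ⟨M, rfl | rfl⟩ := Nat.even_or_odd' N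
    · rcases Nat.eq_zero_or_pos M with rfl | hM
      · simp [PairBound, SingleBound, h0, h1]
      · obtain ⟨hPM, hSM1⟩ := ih M (by omega)
        have hSM : SingleBound d M := by
          simpa [Nat.sub_add_cancel hM] using (ih (M - 1) (by omega)).2
        exact ⟨pairBound_two_mul heven hodd hM hSM hPM, singleBound_two_mul_add_one hodd hPM⟩
    · obtain ⟨hPM, hSM1⟩ := ih M (by omega)
      exact ⟨pairBound_two_mul_add_one heven hodd hPM hSM1,
        singleBound_two_mul heven (Nat.succ_pos M) hSM1⟩

end VanDerCorput

theorem vdc_discrepancy_upper_bound (d : ℕ → ℚ)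
    (h0 : d 0 = 0) (h1 : d 1 = 1)
    (heven : ∀ N : ℕ, d (2 * N) = d N)
    (hodd : ∀ N : ℕ, d (2 * N + 1) = (d N + d (N + 1) + 1) / 2)
    (N : ℕ) (hN : 1 ≤ N) :
    (d N : ℝ) ≤ Real.logb 2 N / 3 + 1 := by
  obtain ⟨K, rfl⟩ : ∃ K, N = K + 1 := ⟨N - 1, by omega⟩
  refine (VanDerCorput.pairBound_and_singleBound_succ (d := fun n => (d n : ℝ))
    (by simp [h0]) (by simp [h1]) (fun M => ?_) (fun M => ?_) K).2
  · simp only [heven]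
  · simp only [hodd]
    push_cast
    ring
end

section
/- Define d : ℕ → ℚ by d(0) = 0, d(1) = 1, d(2N) = d(N), d(2N+1) = (d(N) + d(N+1) + 1)/2. Then limsup_{N→∞} (d(N) − (1/3)·log₂ N) = 4/9 + (1/3)·log₂ 3. -/
open Real Filter

noncomputable def vK : ℝ := 5/3 - Real.logb 2 3

noncomputable def vV (a : ℝ) : ℝ := |a - 1/2|/3 - 1/18

noncomputable def vC (a : ℝ) : ℝ :=
  if a < 1/3 then max 0 (vK*(a+1/3) - 4*a/3)
  else if a < 1/2 then vK*(a-1/3)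
  else if a < 2/3 then max 0 (vK*(a-1/3) - (4*a-2)/3)
  else vK*(a-2/3)

lemma l2pos : 0 < Real.log 2 := Real.log_pos one_lt_two

lemma log3_lb : (19 * Real.log 2 + 7153/531441)/12 ≤ Real.log 3 := by
  have h12 : Real.log (531441/524288) = 12 * Real.log 3 - 19 * Real.log 2 := by
    rw [Real.log_div (by norm_num) (by norm_num),
      show (531441:ℝ) = 3^12 by norm_num, show (524288:ℝ) = 2^19 by norm_num,
      Real.log_pow, Real.log_pow]
    push_cast; ring
  have hlow : (1:ℝ) - 524288/531441 ≤ Real.log (531441/524288) := by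
    have := Real.log_le_sub_one_of_pos (show (0:ℝ) < 524288/531441 by norm_num)
    have heq : Real.log (524288/531441) = - Real.log (531441/524288) := by
      rw [← Real.log_inv]; norm_num
    rw [heq] at this; linarith
  rw [h12] at hlow; nlinarith

lemma log3_ub : Real.log 3 ≤ (19 * Real.log 2 + 7153/524288)/12 := by
  have h12 : Real.log (531441/524288) = 12 * Real.log 3 - 19 * Real.log 2 := by
    rw [Real.log_div (by norm_num) (by norm_num),
      show (531441:ℝ) = 3^12 by norm_num, show (524288:ℝ) = 2^19 by norm_num,
      Real.log_pow, Real.log_pow]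
    push_cast; ring
  have hup := Real.log_le_sub_one_of_pos (show (0:ℝ) < 531441/524288 by norm_num)
  rw [h12] at hup; nlinarith

lemma log3_lb' : (1.0986046:ℝ) < Real.log 3 := by
  have := log3_lb; have := Real.log_two_gt_d9; nlinarith

lemma log3_ub' : Real.log 3 < (1.09862:ℝ) := by
  have := log3_ub; have := Real.log_two_lt_d9; nlinarith

lemma vK_eq : vK = 5/3 - Real.log 3 / Real.log 2 := by rw [vK, Real.logb]

lemma vK_pos : 0 < vK := by
  rw [vK_eq]
  have h2 := Real.log_two_gt_d9
  have h3 := log3_ub'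
  have hl2 := l2pos
  rw [sub_pos, div_lt_iff₀ hl2]
  nlinarith

lemma vK_le : vK ≤ 1/10 := by
  rw [vK_eq]
  have h2 := Real.log_two_lt_d9
  have h3 := log3_lb'
  have hl2 := l2pos
  rw [sub_le_iff_le_add, ← sub_le_iff_le_add', le_div_iff₀ hl2]
  nlinarith

lemma vC_nonneg (a : ℝ) : 0 ≤ vC a := by
  have hk := vK_pos
  rw [vC]
  split_ifs with h1 h2 h3
  · exact le_max_left _ _
  · nlinarith [not_lt.mp h1]
  · exact le_max_left _ _
  · nlinarith [not_lt.mp h3]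

lemma vV_lo {x : ℝ} (h : x ≤ 1/2) : vV x = 1/9 - x/3 := by
  rw [vV, abs_of_nonpos (by linarith)]; ring

lemma vV_hi {x : ℝ} (h : 1/2 ≤ x) : vV x = x/3 - 2/9 := by
  rw [vV, abs_of_nonneg (by linarith)]; ring

lemma vC_mid {x : ℝ} (h1 : 1/3 ≤ x) (h2 : x ≤ 1/2) : vC x = vK*(x-1/3) := by
  rw [vC]
  rcases lt_or_ge x (1/2) with h | h
  · rw [if_neg (by linarith), if_pos h]
  · have hx : x = 1/2 := le_antisymm h2 h
    rw [if_neg (by linarith), if_neg (by linarith), if_pos (by rw [hx]; norm_num), hx]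
    rw [max_eq_right (by nlinarith [vK_pos])]
    ring

lemma vhelper0 (a : ℝ) (h0 : 0 ≤ a) (h1 : a ≤ 1) :
    0 ≤ vV a - vV ((1+a)/2) - (1-a)/2 + 1/3 ∧
    2*vC ((1+a)/2) - vC a ≤ (vV a - vV ((1+a)/2) - (1-a)/2 + 1/3) * (3-a) := by
  have hk0 := vK_pos
  have hk1 := vK_le
  have hV' : vV ((1+a)/2) = (1+a)/6 - 2/9 := by rw [vV_hi (by linarith)]; ring
  rcases lt_or_ge a (1/3) with ha | ha
  · -- a < 1/3 ; a' ∈ [1/2, 2/3)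
    have hVa : vV a = 1/9 - a/3 := vV_lo (by linarith)
    have hCa : vC a = max 0 (vK*(a+1/3) - 4*a/3) := by rw [vC, if_pos ha]
    have hCa' : vC ((1+a)/2) = max 0 ((vK*(a+1/3) - 4*a/3)/2) := by
      rw [vC, if_neg (by linarith), if_neg (by linarith), if_pos (by linarith)]
      congr 1; ring
    constructor
    · rw [hVa, hV']; linarith
    · rw [hVa, hV', hCa, hCa']
      rcases le_total (vK*(a+1/3) - 4*a/3) 0 with h | h
      · rw [max_eq_left h, max_eq_left (by linarith)]; nlinarith
      · rw [max_eq_right h, max_eq_right (by linarith)]; nlinarith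
  · rcases lt_or_ge a (1/2) with hb | hb
    · -- 1/3 ≤ a < 1/2 ; a' ∈ [2/3, 3/4)
      have hVa : vV a = 1/9 - a/3 := vV_lo (by linarith)
      have hCa : vC a = vK*(a-1/3) := by rw [vC, if_neg (by linarith), if_pos hb]
      have hCa' : vC ((1+a)/2) = vK*((1+a)/2-2/3) := by
        rw [vC, if_neg (by linarith), if_neg (by linarith), if_neg (by linarith)]
      constructor
      · rw [hVa, hV']; linarith
      · rw [hVa, hV', hCa, hCa']; nlinarith
    · rcases lt_or_ge a (2/3) with hc | hc
      · -- 1/2 ≤ a < 2/3 ; a' ∈ [3/4, 5/6)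
        have hVa : vV a = a/3 - 2/9 := vV_hi hb
        have hCa : vC a = max 0 (vK*(a-1/3) - (4*a-2)/3) := by
          rw [vC, if_neg (by linarith), if_neg (by linarith), if_pos hc]
        have hCa' : vC ((1+a)/2) = vK*((1+a)/2-2/3) := by
          rw [vC, if_neg (by linarith), if_neg (by linarith), if_neg (by linarith)]
        constructor
        · rw [hVa, hV']; linarith
        · rw [hVa, hV', hCa, hCa']
          rcases le_total (vK*(a-1/3) - (4*a-2)/3) 0 with h | h
          · rw [max_eq_left h]; nlinarith [mul_nonneg (by linarith : (0:ℝ) ≤ 2*a-1) (by linarith : (0:ℝ) ≤ 1-a)]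
          · rw [max_eq_right h]; nlinarith [mul_nonneg (by linarith : (0:ℝ) ≤ 2*a-1) (by linarith : (0:ℝ) ≤ 1-a)]
      · -- 2/3 ≤ a ≤ 1 ; a' ∈ [5/6, 1]
        have hVa : vV a = a/3 - 2/9 := vV_hi hb
        have hCa : vC a = vK*(a-2/3) := by
          rw [vC, if_neg (by linarith), if_neg (by linarith), if_neg (by linarith)]
        have hCa' : vC ((1+a)/2) = vK*((1+a)/2-2/3) := by
          rw [vC, if_neg (by linarith), if_neg (by linarith), if_neg (by linarith)]
        constructor
        · rw [hVa, hV']; linarith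
        · rw [hVa, hV', hCa, hCa']
          nlinarith [mul_nonneg (by linarith : (0:ℝ) ≤ 2*a-1-1/3) (by linarith : (0:ℝ) ≤ 3-a-2)]

lemma vhelper1 (a : ℝ) (h0 : 0 ≤ a) (h1 : a ≤ 1) :
    0 ≤ vV a - vV (a/2) - a/2 + 1/3 ∧
    2*vC (a/2) - vC a ≤ (vV a - vV (a/2) - a/2 + 1/3) * (4-a) := by
  have hk0 := vK_pos
  have hk1 := vK_le
  have hV' : vV (a/2) = 1/9 - a/6 := by rw [vV_lo (by linarith)]; ring
  rcases lt_or_ge a (1/3) with ha | ha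
  · -- a < 1/3 ; a/2 < 1/6
    have hVa : vV a = 1/9 - a/3 := vV_lo (by linarith)
    have hCa : vC a = max 0 (vK*(a+1/3) - 4*a/3) := by rw [vC, if_pos ha]
    have hCa' : vC (a/2) = max 0 (vK*(a/2+1/3) - 2*a/3) := by
      rw [vC, if_pos (by linarith)]
      congr 1; ring
    constructor
    · rw [hVa, hV']; linarith
    · rw [hVa, hV', hCa, hCa']
      rcases le_total (vK*(a/2+1/3) - 2*a/3) 0 with h | h
      · rw [max_eq_left h]
        have : (0:ℝ) ≤ max 0 (vK*(a+1/3) - 4*a/3) := le_max_left _ _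
        nlinarith [mul_nonneg (by linarith : (0:ℝ) ≤ 1-2*a) (by linarith : (0:ℝ) ≤ 4-a)]
      · rw [max_eq_right h]
        have h2 : vK*(a+1/3) - 4*a/3 ≤ max 0 (vK*(a+1/3) - 4*a/3) := le_max_right _ _
        nlinarith [mul_nonneg (by linarith : (0:ℝ) ≤ 1-2*a-1/3) (by linarith : (0:ℝ) ≤ 4-a-11/3)]
  · rcases lt_or_ge a (1/2) with hb | hb
    · -- 1/3 ≤ a < 1/2 ; a/2 ∈ [1/6, 1/4)
      have hVa : vV a = 1/9 - a/3 := vV_lo (by linarith)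
      have hCa : vC a = vK*(a-1/3) := by rw [vC, if_neg (by linarith), if_pos hb]
      have hCa' : vC (a/2) = max 0 (vK*(a/2+1/3) - 2*a/3) := by
        rw [vC, if_pos (by linarith)]
        congr 1; ring
      constructor
      · rw [hVa, hV']; linarith
      · rw [hVa, hV', hCa, hCa']
        rcases le_total (vK*(a/2+1/3) - 2*a/3) 0 with h | h
        · rw [max_eq_left h]
          nlinarith [mul_nonneg (by linarith : (0:ℝ) ≤ 1-2*a) (by linarith : (0:ℝ) ≤ 4-a)]
        · exfalso; nlinarith
    · rcases lt_or_ge a (2/3) with hc | hc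
      · -- 1/2 ≤ a < 2/3 ; a/2 ∈ [1/4, 1/3)
        have hVa : vV a = a/3 - 2/9 := vV_hi hb
        have hCa0 : (0:ℝ) ≤ vC a := by
          rw [vC, if_neg (by linarith), if_neg (by linarith), if_pos hc]
          exact le_max_left _ _
        have hCa' : vC (a/2) = max 0 (vK*(a/2+1/3) - 2*a/3) := by
          rw [vC, if_pos (by linarith)]
          congr 1; ring
        constructor
        · rw [hVa, hV']; linarith
        · rw [hVa, hV', hCa']
          rcases le_total (vK*(a/2+1/3) - 2*a/3) 0 with h | h
          · rw [max_eq_left h]; nlinarith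
          · exfalso; nlinarith
      · -- 2/3 ≤ a ≤ 1 ; a/2 ∈ [1/3, 1/2]
        have hVa : vV a = a/3 - 2/9 := vV_hi hb
        have hCa : vC a = vK*(a-2/3) := by
          rw [vC, if_neg (by linarith), if_neg (by linarith), if_neg (by linarith)]
        have hCa' : vC (a/2) = vK*(a/2-1/3) := vC_mid (by linarith) (by linarith)
        constructor
        · rw [hVa, hV']; linarith
        · rw [hVa, hV', hCa, hCa']; nlinarith

-- tangent lower bound for log
lemma ltangent {t z : ℝ} (ht : 0 < t) (hz : 0 < z) :
    z * Real.log t + z - t ≤ z * Real.log z := by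
  have h := Real.log_le_sub_one_of_pos (div_pos ht hz)
  rw [Real.log_div (ne_of_gt ht) (ne_of_gt hz)] at h
  have h2 : z * (Real.log t - Real.log z) ≤ z * (t/z - 1) :=
    mul_le_mul_of_nonneg_left h (le_of_lt hz)
  have h3 : z * (t/z - 1) = t - z := by field_simp
  nlinarith

lemma l12_19 : 19 * Real.log 2 ≤ 12 * Real.log 3 := by
  have h := Real.log_le_log (by norm_num : (0:ℝ) < 2^19)
    (by norm_num : (2:ℝ)^19 ≤ 3^12)
  rw [Real.log_pow, Real.log_pow] at h
  push_cast at h; linarith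

-- the key quadratic estimate on [1,4/3]
lemma keyT {z : ℝ} (hz1 : 1 ≤ z) (hz2 : z ≤ 4/3) :
    0 ≤ z * Real.log z - Real.log 2 * z^2 + z*(4*Real.log 3 - (17/3)*Real.log 2)
      + (20/3)*Real.log 2 - 4*Real.log 3 := by
  set l2 := Real.log 2 with hl2def
  set l3 := Real.log 3 with hl3def
  have h2a := Real.log_two_gt_d9
  have h2b := Real.log_two_lt_d9
  have h3a := log3_lb'
  have h3b := log3_ub'
  have hzpos : (0:ℝ) < z := by linarith
  rcases le_total z (256/243) with hc1 | hc1
  · -- tangent at 1 : log z ≥ (z-1)/z , i.e. z log z ≥ z - 1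
    have ht := ltangent (show (0:ℝ) < 1 by norm_num) hzpos
    rw [Real.log_one] at ht
    nlinarith [mul_nonneg (by linarith : (0:ℝ) ≤ z - 1) (by linarith : (0:ℝ) ≤ 256/243 - z)]
  · rcases le_total z (9/8) with hc2 | hc2
    · -- tangent at 256/243
      have hlt : Real.log (256/243) = 8*l2 - 5*l3 := by
        rw [Real.log_div (by norm_num) (by norm_num),
          show (256:ℝ) = 2^8 by norm_num, show (243:ℝ) = 3^5 by norm_num,
          Real.log_pow, Real.log_pow]
        push_cast; ring
      have ht := ltangent (show (0:ℝ) < 256/243 by norm_num) hzpos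
      rw [hlt] at ht
      nlinarith [mul_nonneg (by linarith : (0:ℝ) ≤ z - 256/243) (by linarith : (0:ℝ) ≤ 9/8 - z)]
    · rcases le_total z (32/27) with hc3 | hc3
      · -- tangent at 9/8
        have hlt : Real.log (9/8) = 2*l3 - 3*l2 := by
          rw [Real.log_div (by norm_num) (by norm_num),
            show (9:ℝ) = 3^2 by norm_num, show (8:ℝ) = 2^3 by norm_num,
            Real.log_pow, Real.log_pow]
          push_cast; ring
        have ht := ltangent (show (0:ℝ) < 9/8 by norm_num) hzpos
        rw [hlt] at ht
        nlinarith [mul_nonneg (by linarith : (0:ℝ) ≤ z - 9/8) (by linarith : (0:ℝ) ≤ 32/27 - z)]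
      · rcases le_total z (81/64) with hc4 | hc4
        · -- tangent at 81/64
          have hlt : Real.log (81/64) = 4*l3 - 6*l2 := by
            rw [Real.log_div (by norm_num) (by norm_num),
              show (81:ℝ) = 3^4 by norm_num, show (64:ℝ) = 2^6 by norm_num,
              Real.log_pow, Real.log_pow]
            push_cast; ring
          have ht := ltangent (show (0:ℝ) < 81/64 by norm_num) hzpos
          rw [hlt] at ht
          nlinarith [mul_nonneg (by linarith : (0:ℝ) ≤ z - 32/27) (by linarith : (0:ℝ) ≤ 81/64 - z)]
        · -- tangent at 4/3
          have hlt : Real.log (4/3) = 2*l2 - l3 := by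
            rw [Real.log_div (by norm_num) (by norm_num),
              show (4:ℝ) = 2^2 by norm_num, Real.log_pow]
            push_cast; ring
          have ht := ltangent (show (0:ℝ) < 4/3 by norm_num) hzpos
          rw [hlt] at ht
          nlinarith [mul_nonneg (by linarith : (0:ℝ) ≤ z - 81/64) (by linarith : (0:ℝ) ≤ 4/3 - z)]

lemma hrw_gen (l2 l3 w z : ℝ) (hl2 : l2 ≠ 0) (hz : z ≠ 0) :
    (l2 + l3 + w)/l2/3 + ((2-z)/3 - 2/9) + (5/3 - l3/l2)*((2-z)-2/3)/z - 1
    = (z*w - l2*z^2 + z*(4*l3-(17/3)*l2) + (20/3)*l2 - 4*l3)/(3*l2*z) := by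
  field_simp
  ring

set_option maxHeartbeats 2000000 in
lemma vbase (a : ℝ) (h0 : 0 ≤ a) (h1 : a ≤ 1) :
    1 ≤ Real.logb 2 (6*(2-a))/3 + vV a + vC a/(2-a) := by
  have hl2 := l2pos
  have h2a := Real.log_two_gt_d9
  have h2b := Real.log_two_lt_d9
  have h3a := log3_lb'
  have h3b := log3_ub'
  have hzpos : (0:ℝ) < 2 - a := by linarith
  have hCpos : 0 ≤ vC a / (2-a) := div_nonneg (vC_nonneg a) (le_of_lt hzpos)
  rcases lt_or_ge a (1/2) with hb | hb
  · -- easy regions: suffices log(6(2-a)) ≥ (8/3+a) log 2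
    have hV : vV a = 1/9 - a/3 := vV_lo (by linarith)
    have hlog : (8/3 + a) * Real.log 2 ≤ Real.log (6*(2-a)) := by
      rcases lt_or_ge a (1/3) with ha | ha
      · have h8 : Real.log 8 ≤ Real.log (6*(2-a)) :=
          Real.log_le_log (by norm_num) (by nlinarith)
        rw [show (8:ℝ) = 2^3 by norm_num, Real.log_pow] at h8
        push_cast at h8; nlinarith
      · have h9 : Real.log 9 ≤ Real.log (6*(2-a)) :=
          Real.log_le_log (by norm_num) (by nlinarith)
        rw [show (9:ℝ) = 3^2 by norm_num, Real.log_pow] at h9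
        push_cast at h9
        have := l12_19
        nlinarith
    rw [Real.logb, hV]
    have hq : (8/3 + a) ≤ Real.log (6*(2-a)) / Real.log 2 := by
      rw [le_div_iff₀ hl2]; linarith
    linarith
  · rcases lt_or_ge a (2/3) with hc | hc
    · -- region [1/2,2/3): need log(12-6a) ≥ (11/3 - a) log 2 ; x = 12-6a ∈ (8,9]
      have hV : vV a = a/3 - 2/9 := vV_hi hb
      set x : ℝ := 6*(2-a) with hxdef
      have hx8 : 8 < x := by rw [hxdef]; nlinarith
      have hx9 : x ≤ 9 := by rw [hxdef]; nlinarith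
      have hxpos : (0:ℝ) < x := by linarith
      have hlog : (5/3 + x/6) * Real.log 2 ≤ Real.log x := by
        rcases le_total x (17/2) with hm | hm
        · have ht := ltangent (show (0:ℝ) < 8 by norm_num) hxpos
          rw [show (8:ℝ) = 2^3 by norm_num, Real.log_pow] at ht
          push_cast at ht
          nlinarith [mul_nonneg (by linarith : (0:ℝ) ≤ x - 8) (by linarith : (0:ℝ) ≤ 17/2 - x)]
        · have ht := ltangent (show (0:ℝ) < 9 by norm_num) hxpos
          rw [show (9:ℝ) = 3^2 by norm_num, Real.log_pow] at ht
          push_cast at ht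
          nlinarith [mul_nonneg (by linarith : (0:ℝ) ≤ x - 17/2) (by linarith : (0:ℝ) ≤ 9 - x)]
      rw [Real.logb, hV]
      have hq : (5/3 + x/6) ≤ Real.log x / Real.log 2 := by
        rw [le_div_iff₀ hl2]; linarith
      have hxa : x/6 = 2 - a := by rw [hxdef]; ring
      nlinarith
    · -- main region [2/3,1]
      have hV : vV a = a/3 - 2/9 := vV_hi hb
      have hCa : vC a = vK*(a-2/3) := by
        rw [vC, if_neg (by linarith), if_neg (by linarith), if_neg (by linarith)]
      set z : ℝ := 2 - a with hzdef
      clear_value z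
      have hz1 : 1 ≤ z := by rw [hzdef]; linarith
      have hz2 : z ≤ 4/3 := by rw [hzdef]; linarith
      have hT := keyT hz1 hz2
      have hzp : (0:ℝ) < z := by linarith
      have hlog6 : Real.log (6*z) = Real.log 2 + Real.log 3 + Real.log z := by
        rw [show (6:ℝ)*z = 2*(3*z) by ring, Real.log_mul (by norm_num) (by positivity),
          Real.log_mul (by norm_num) (by positivity)]
        ring
      rw [Real.logb, hV, hCa, vK_eq]
      rw [hlog6]
      have ha_z : a = 2 - z := by rw [hzdef]; ring
      rw [ha_z]
      have hrw := hrw_gen (Real.log 2) (Real.log 3) (Real.log z) z (ne_of_gt hl2) (ne_of_gt hzp)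
      clear hCpos hCa hV hlog6
      have h9 : 0 ≤ (z * Real.log z - Real.log 2 * z^2 + z*(4*Real.log 3 - (17/3)*Real.log 2)
          + (20/3)*Real.log 2 - 4*Real.log 3) / (3 * Real.log 2 * z) :=
        div_nonneg hT (by positivity)
      clear hT
      linarith [hrw, h9]

lemma vmain (d : ℕ → ℚ) (h1 : d 1 = 1)
    (heven : ∀ N : ℕ, d (2 * N) = d N)
    (hodd : ∀ N : ℕ, d (2 * N + 1) = (d N + d (N + 1) + 1) / 2) :
    ∀ N : ℕ, 1 ≤ N → ∀ a : ℝ, 0 ≤ a → a ≤ 1 →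
      a * (d N : ℝ) + (1-a) * (d (N+1) : ℝ) ≤
        Real.logb 2 (6*((N:ℝ)+1-a))/3 + vV a + vC a/((N:ℝ)+1-a) := by
  intro N
  induction N using Nat.strong_induction_on with
  | _ N IH =>
    intro hN a ha0 ha1
    rcases lt_or_ge N 2 with hsmall | hbig
    · -- N = 1
      have hN1 : N = 1 := by omega
      subst hN1
      have hd2 : d 2 = 1 := by have := heven 1; rwa [h1] at this
      rw [h1, hd2]
      push_cast
      have := vbase a ha0 ha1
      calc a * 1 + (1-a) * 1 = 1 := by ring
        _ ≤ _ := by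
          rw [show ((1:ℝ)+1-a) = 2-a by ring] at *
          convert this using 3 <;> norm_num
    · rcases Nat.even_or_odd N with ⟨M, hM⟩ | ⟨M, hM⟩
      · -- N = 2M
        have hM2 : N = 2*M := by omega
        have hM1 : 1 ≤ M := by omega
        set a' : ℝ := (1+a)/2 with ha'def
        clear_value a'
        have ha'0 : 0 ≤ a' := by rw [ha'def]; linarith
        have ha'1 : a' ≤ 1 := by rw [ha'def]; linarith
        have hIH := IH M (by omega) hM1 a' ha'0 ha'1
        have hdN : (d N : ℝ) = (d M : ℝ) := by
          rw [hM2]; exact_mod_cast heven M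
        have hdN1 : (d (N+1) : ℝ) = ((d M : ℝ) + (d (M+1) : ℝ) + 1)/2 := by
          rw [show N+1 = 2*M+1 by omega]
          have := hodd M
          push_cast [this]; ring
        have hxpos : (0:ℝ) < (M:ℝ)+1-a' := by
          have : (1:ℝ) ≤ (M:ℝ) := by exact_mod_cast hM1
          rw [ha'def]; linarith
        have hypos : (0:ℝ) < (N:ℝ)+1-a := by
          have : (2:ℝ) ≤ (N:ℝ) := by exact_mod_cast hbig
          linarith
        have hlog : Real.logb 2 (6*((N:ℝ)+1-a)) = 1 + Real.logb 2 (6*((M:ℝ)+1-a')) := by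
          have hNM : (N:ℝ) = 2*(M:ℝ) := by rw [hM2]; push_cast; ring
          rw [show (6:ℝ)*((N:ℝ)+1-a) = 2*(6*((M:ℝ)+1-a')) by rw [hNM, ha'def]; ring,
            Real.logb_mul (by norm_num) (by positivity), Real.logb_self_eq_one] <;> norm_num
        have hfrac : ((N:ℝ)+1-a) = 2*((M:ℝ)+1-a') := by
          rw [show (N:ℝ) = 2*(M:ℝ) by rw [hM2]; push_cast; ring, ha'def]; ring
        have hs := vhelper0 a ha0 ha1
        rw [← ha'def] at hs
        -- combine
        have hCdiv : 2*vC a' / ((N:ℝ)+1-a) - vC a / ((N:ℝ)+1-a) ≤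
            vV a - vV a' - (1-a)/2 + 1/3 := by
          rw [div_sub_div_same, div_le_iff₀ hypos]
          calc 2*vC a' - vC a ≤ (vV a - vV a' - (1-a)/2 + 1/3) * (3-a) := hs.2
            _ ≤ (vV a - vV a' - (1-a)/2 + 1/3) * ((N:ℝ)+1-a) := by
              apply mul_le_mul_of_nonneg_left _ hs.1
              have : (2:ℝ) ≤ (N:ℝ) := by exact_mod_cast hbig
              linarith
        have hrw2 : vC a' / ((M:ℝ)+1-a') = 2*vC a' / ((N:ℝ)+1-a) := by
          rw [hfrac, show (2:ℝ)*vC a' / (2*((M:ℝ)+1-a')) = vC a'/((M:ℝ)+1-a') from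
            mul_div_mul_left _ _ two_ne_zero]
        calc a * (d N : ℝ) + (1-a) * (d (N+1) : ℝ)
            = a' * (d M : ℝ) + (1-a') * (d (M+1) : ℝ) + (1-a)/2 := by
              rw [hdN, hdN1, ha'def]; ring
          _ ≤ Real.logb 2 (6*((M:ℝ)+1-a'))/3 + vV a' + vC a'/((M:ℝ)+1-a') + (1-a)/2 := by
              linarith [hIH]
          _ ≤ Real.logb 2 (6*((N:ℝ)+1-a))/3 + vV a + vC a/((N:ℝ)+1-a) := by
              rw [hlog, hrw2]; linarith [hCdiv]
      · -- N = 2M+1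
        have hM1 : 1 ≤ M := by omega
        set a' : ℝ := a/2 with ha'def
        clear_value a'
        have ha'0 : 0 ≤ a' := by rw [ha'def]; linarith
        have ha'1 : a' ≤ 1 := by rw [ha'def]; linarith
        have hIH := IH M (by omega) hM1 a' ha'0 ha'1
        have hdN : (d N : ℝ) = ((d M : ℝ) + (d (M+1) : ℝ) + 1)/2 := by
          rw [hM]
          have := hodd M
          push_cast [this]; ring
        have hdN1 : (d (N+1) : ℝ) = (d (M+1) : ℝ) := by
          rw [show N+1 = 2*(M+1) by omega]
          exact_mod_cast heven (M+1)
        have hxpos : (0:ℝ) < (M:ℝ)+1-a' := by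
          have : (1:ℝ) ≤ (M:ℝ) := by exact_mod_cast hM1
          rw [ha'def]; linarith
        have hypos : (0:ℝ) < (N:ℝ)+1-a := by
          have : (2:ℝ) ≤ (N:ℝ) := by exact_mod_cast hbig
          linarith
        have hNM : (N:ℝ) = 2*(M:ℝ)+1 := by rw [hM]; push_cast; ring
        have hlog : Real.logb 2 (6*((N:ℝ)+1-a)) = 1 + Real.logb 2 (6*((M:ℝ)+1-a')) := by
          rw [show (6:ℝ)*((N:ℝ)+1-a) = 2*(6*((M:ℝ)+1-a')) by rw [hNM, ha'def]; ring,
            Real.logb_mul (by norm_num) (by positivity), Real.logb_self_eq_one] <;> norm_num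
        have hfrac : ((N:ℝ)+1-a) = 2*((M:ℝ)+1-a') := by rw [hNM, ha'def]; ring
        have hs := vhelper1 a ha0 ha1
        rw [← ha'def] at hs
        have hCdiv : 2*vC a' / ((N:ℝ)+1-a) - vC a / ((N:ℝ)+1-a) ≤
            vV a - vV a' - a' + 1/3 := by
          rw [div_sub_div_same, div_le_iff₀ hypos]
          calc 2*vC a' - vC a ≤ (vV a - vV a' - a' + 1/3) * (4-a) := hs.2
            _ ≤ (vV a - vV a' - a' + 1/3) * ((N:ℝ)+1-a) := by
              apply mul_le_mul_of_nonneg_left _ hs.1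
              have : (3:ℝ) ≤ (N:ℝ) := by
                have : 3 ≤ N := by omega
                exact_mod_cast this
              linarith
        have hrw2 : vC a' / ((M:ℝ)+1-a') = 2*vC a' / ((N:ℝ)+1-a) := by
          rw [hfrac, show (2:ℝ)*vC a' / (2*((M:ℝ)+1-a')) = vC a'/((M:ℝ)+1-a') from
            mul_div_mul_left _ _ two_ne_zero]
        calc a * (d N : ℝ) + (1-a) * (d (N+1) : ℝ)
            = a' * (d M : ℝ) + (1-a') * (d (M+1) : ℝ) + a/2 := by
              rw [hdN, hdN1, ha'def]; ring
          _ ≤ Real.logb 2 (6*((M:ℝ)+1-a'))/3 + vV a' + vC a'/((M:ℝ)+1-a') + a/2 := by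
              linarith [hIH]
          _ ≤ Real.logb 2 (6*((N:ℝ)+1-a))/3 + vV a + vC a/((N:ℝ)+1-a) := by
              rw [hlog, hrw2]
              have ha2 : a' = a/2 := ha'def
              linarith [hCdiv]

def vA : ℕ → ℕ
  | 0 => 1
  | m+1 => 4 * vA m + 1

lemma vA_ge (m : ℕ) : m + 1 ≤ vA m := by
  induction m with
  | zero => simp [vA]
  | succ n ih => rw [vA]; omega

lemma vA_pow (m : ℕ) : 3 * vA m + 1 = 4^(m+1) := by
  induction m with
  | zero => rfl
  | succ n ih => rw [vA, pow_succ]; omega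

lemma vA_d (d : ℕ → ℚ) (h1 : d 1 = 1)
    (heven : ∀ N : ℕ, d (2 * N) = d N)
    (hodd : ∀ N : ℕ, d (2 * N + 1) = (d N + d (N + 1) + 1) / 2) :
    ∀ m : ℕ, d (vA m) = (2*m)/3 + 10/9 - (1/9)*(1/4)^m ∧
      d (vA m + 1) = (2*m)/3 + 7/9 + (2/9)*(1/4)^m := by
  intro m
  induction m with
  | zero =>
    have hd2 : d 2 = 1 := by have := heven 1; rwa [h1] at this
    constructor
    · show d 1 = _; rw [h1]; norm_num
    · show d 2 = _; rw [hd2]; norm_num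
  | succ n ih =>
    obtain ⟨ih1, ih2⟩ := ih
    set K := vA n with hK
    have hstep : vA (n+1) = 4*K + 1 := by rw [vA]
    have e2K : d (2*K) = d K := heven K
    have e2K1 : d (2*K+1) = (d K + d (K+1) + 1)/2 := hodd K
    have e1 : d (4*K+1) = (d (2*K) + d (2*K+1) + 1)/2 := by
      have := hodd (2*K)
      rwa [show 2*(2*K)+1 = 4*K+1 by ring] at this
    have e2 : d (4*K+2) = d (2*K+1) := by
      have := heven (2*K+1)
      rwa [show 2*(2*K+1) = 4*K+2 by ring] at this
    constructor
    · rw [hstep, e1, e2K, e2K1, ih1, ih2, pow_succ]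
      push_cast
      ring
    · rw [show vA (n+1) + 1 = 4*K+2 by rw [hstep], e2, e2K1, ih1, ih2, pow_succ]
      push_cast
      ring

theorem vdc_discrepancy_limsup (d : ℕ → ℚ)
    (h0 : d 0 = 0) (h1 : d 1 = 1)
    (heven : ∀ N : ℕ, d (2 * N) = d N)
    (hodd : ∀ N : ℕ, d (2 * N + 1) = (d N + d (N + 1) + 1) / 2) :
    Filter.limsup (fun N : ℕ => (d N : ℝ) - Real.logb 2 N / 3) Filter.atTop
      = 4 / 9 + Real.logb 2 3 / 3 := by
  set L : ℝ := 4/9 + Real.logb 2 3/3 with hL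
  set g : ℕ → ℝ := fun N => (d N : ℝ) - Real.logb 2 N / 3 with hg
  -- upper pointwise bound
  have hupper : ∀ N : ℕ, 1 ≤ N → g N ≤ L + (vK/3) * (1/(N:ℝ)) := by
    intro N hN
    have hNpos : (0:ℝ) < (N:ℝ) := by exact_mod_cast hN
    have hm := vmain d h1 heven hodd N hN 1 (by norm_num) (le_refl 1)
    have hV1 : vV 1 = 1/9 := by
      rw [vV, show |(1:ℝ)-1/2| = 1/2 by rw [abs_of_nonneg] <;> norm_num]
      norm_num
    have hC1 : vC 1 = vK/3 := by
      rw [vC, if_neg (by norm_num), if_neg (by norm_num), if_neg (by norm_num)]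
      ring
    rw [hV1, hC1, show ((N:ℝ)+1-1) = (N:ℝ) by ring] at hm
    have hlog6 : Real.logb 2 (6*(N:ℝ)) = 1 + Real.logb 2 3 + Real.logb 2 (N:ℝ) := by
      rw [show (6:ℝ)*(N:ℝ) = 2*(3*(N:ℝ)) by ring,
        Real.logb_mul (by norm_num) (by positivity),
        Real.logb_mul (by norm_num) (by positivity),
        show Real.logb 2 2 = 1 by simp]
      ring
    rw [hlog6] at hm
    have : (d N : ℝ) ≤ (1 + Real.logb 2 3 + Real.logb 2 (N:ℝ))/3 + 1/9 + (vK/3)/(N:ℝ) := by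
      linarith
    have hgN : g N = (d N : ℝ) - Real.logb 2 (N:ℝ)/3 := rfl
    rw [hgN, hL]
    have hdiv : (vK/3)/(N:ℝ) = (vK/3)*(1/(N:ℝ)) := by ring
    linarith [this, hdiv.le, hdiv.ge]
  -- frequent lower bound
  have hlower : ∀ m : ℕ, L - (1/9)*(1/4)^m ≤ g (vA m) := by
    intro m
    have hd := (vA_d d h1 heven hodd m).1
    have hApos : (0:ℝ) < (vA m : ℝ) := by
      have h := vA_ge m
      have : 0 < vA m := by omega
      exact_mod_cast this
    have hA4 : ((vA m : ℝ)) ≤ (4:ℝ)^(m+1)/3 := by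
      have hp := vA_pow m
      have hp2 : (3:ℝ) * (vA m : ℝ) + 1 = (4:ℝ)^(m+1) := by exact_mod_cast hp
      linarith
    have hlog : Real.logb 2 (vA m : ℝ) ≤ 2*(m+1) - Real.logb 2 3 := by
      have h1' : Real.logb 2 (vA m : ℝ) ≤ Real.logb 2 ((4:ℝ)^(m+1)/3) := by
        apply Real.logb_le_logb_of_le (by norm_num) hApos hA4
      have h2' : Real.logb 2 ((4:ℝ)^(m+1)/3) = 2*(m+1) - Real.logb 2 3 := by
        rw [Real.logb_div (by positivity) (by norm_num), Real.logb_pow,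
          show (4:ℝ) = 2^2 by norm_num, Real.logb_pow,
          show Real.logb 2 2 = 1 by simp]
        push_cast; ring
      linarith
    have hgN : g (vA m) = (d (vA m) : ℝ) - Real.logb 2 (vA m : ℝ)/3 := rfl
    rw [hgN]
    have hdR : (d (vA m) : ℝ) = (2*m)/3 + 10/9 - (1/9)*(1/4)^m := by
      rw [hd]; push_cast; ring
    rw [hdR, hL]
    have h4 : ((1:ℝ)/4)^m = 1/(4:ℝ)^m := by
      rw [div_pow]; norm_num
    linarith [hlog]
  clear_value L g
  -- boundedness above
  have hbdd : IsBoundedUnder (· ≤ ·) atTop g := by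
    apply isBoundedUnder_of_eventually_le (a := L + vK/3)
    filter_upwards [eventually_ge_atTop 1] with N hN
    have hu := hupper N hN
    have hNpos : (0:ℝ) < (N:ℝ) := by exact_mod_cast hN
    have h1N : (1:ℝ)/(N:ℝ) ≤ 1 := by
      rw [div_le_one hNpos]; exact_mod_cast hN
    nlinarith [vK_pos, vK_le]
  -- frequent lower bound
  have hfreq : ∀ ε : ℝ, 0 < ε → ∃ᶠ N in atTop, L - ε ≤ g N := by
    intro ε hε
    obtain ⟨n₀, hn₀⟩ := exists_pow_lt_of_lt_one hε (show (1:ℝ)/4 < 1 by norm_num)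
    rw [frequently_atTop]
    intro b
    refine ⟨vA (max n₀ b), ?_, ?_⟩
    · have h := vA_ge (max n₀ b)
      have : b ≤ max n₀ b := le_max_right _ _
      omega
    · have hm := hlower (max n₀ b)
      have hpow : ((1:ℝ)/4)^(max n₀ b) ≤ ((1:ℝ)/4)^n₀ :=
        pow_le_pow_of_le_one (by norm_num) (by norm_num) (le_max_left _ _)
      have hnn : (0:ℝ) ≤ ((1:ℝ)/4)^(max n₀ b) := by positivity
      have hnn0 : (0:ℝ) ≤ ((1:ℝ)/4)^n₀ := by positivity
      have hsml : (1:ℝ)/9*((1:ℝ)/4)^(max n₀ b) < ε := by linarith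
      linarith [hm, hsml]
  have hcobdd : IsCoboundedUnder (· ≤ ·) atTop g :=
    IsCoboundedUnder.of_frequently_ge (hfreq 1 one_pos)
  have hle : limsup g atTop ≤ L := by
    have h0 : Tendsto (fun N : ℕ => (1:ℝ)/(N:ℝ)) atTop (nhds 0) :=
      tendsto_one_div_atTop_nhds_zero_nat
    have h1 : Tendsto (fun N : ℕ => L + (vK/3)*(1/(N:ℝ))) atTop (nhds L) := by
      have h2 := (h0.const_mul (vK/3)).const_add L
      simpa using h2
    have hev : g ≤ᶠ[atTop] fun N : ℕ => L + (vK/3)*(1/(N:ℝ)) := by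
      filter_upwards [eventually_ge_atTop 1] with N hN using hupper N hN
    calc limsup g atTop ≤ limsup (fun N : ℕ => L + (vK/3)*(1/(N:ℝ))) atTop :=
          limsup_le_limsup hev hcobdd h1.isBoundedUnder_le
      _ = L := h1.limsup_eq
  have hge : L ≤ limsup g atTop := by
    refine le_of_forall_pos_le_add fun ε hε => ?_
    have hh := le_limsup_of_frequently_le (hfreq ε hε) hbdd
    linarith
  exact le_antisymm hle hge
end

section
/- Let s : ℕ≥1 → ℕ be Stern's diatomic sequence: s(1) = 1, s(2n) = s(n), s(2n+1) = s(n) + s(n+1). Define S'(N) = s(1) + ⋯ + s(N−1) + s(N)/2 (as a rational number). Then S'(2N) = 3·S'(N) for all N ≥ 1. -/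
/-!
For `T M = f 1 + ⋯ + f (M - 1) + f M / 2` one has `T (M + 1) - T M = (f M + f (M + 1)) / 2`, so going
from `T (2n)` to `T (2n + 2)` adds `(f (2n) + 2 f (2n + 1) + f (2n + 2)) / 2`. The Stern recurrences
turn this into `3 (f n + f (n + 1)) / 2 = 3 (T (n + 1) - T n)`, and induction on `n` gives
`T (2n) = 3 T n`.
-/

open Finset

def trapezoidSum {K : Type*} [Field K] (f : ℕ → K) (M : ℕ) : K :=
  ∑ k ∈ Ico 1 M, f k + f M / 2

variable {K : Type*} [Field K] [NeZero (2 : K)]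

theorem trapezoidSum_succ (f : ℕ → K) {M : ℕ} (hM : 1 ≤ M) :
    trapezoidSum f (M + 1) = trapezoidSum f M + (f M + f (M + 1)) / 2 := by
  simp only [trapezoidSum, sum_Ico_succ_top hM]
  field_simp
  ring

theorem trapezoidSum_two_mul (f : ℕ → K)
    (heven : ∀ n, 1 ≤ n → f (2 * n) = f n)
    (hodd : ∀ n, 1 ≤ n → f (2 * n + 1) = f n + f (n + 1))
    {N : ℕ} (hN : 1 ≤ N) :
    trapezoidSum f (2 * N) = 3 * trapezoidSum f N := by
  induction N, hN using Nat.le_induction with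
  | base =>
    have h2 : f 2 = f 1 := heven 1 le_rfl
    simp only [trapezoidSum, Nat.reduceMul, Ico_self, sum_empty, Nat.Ico_succ_singleton,
      sum_singleton, h2]
    field_simp
    ring
  | succ n hn ih =>
    have hfar : f (2 * n + 1 + 1) = f (n + 1) := heven (n + 1) (by omega)
    calc trapezoidSum f (2 * n + 1 + 1)
        = trapezoidSum f (2 * n) + (f (2 * n) + 2 * f (2 * n + 1) + f (2 * n + 1 + 1)) / 2 := by
          rw [trapezoidSum_succ f (by omega), trapezoidSum_succ f (by omega)]
          ring
      _ = 3 * trapezoidSum f n + 3 * ((f n + f (n + 1)) / 2) := by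
          rw [ih, heven n hn, hodd n hn, hfar]
          ring
      _ = 3 * trapezoidSum f (n + 1) := by
          rw [trapezoidSum_succ f hn]
          ring

theorem stern_partial_sum_recurrence_general (s : ℕ → ℕ)
    (heven : ∀ n : ℕ, 1 ≤ n → s (2 * n) = s n)
    (hodd : ∀ n : ℕ, 1 ≤ n → s (2 * n + 1) = s n + s (n + 1))
    (S' : ℕ → ℚ) (hS' : ∀ N : ℕ, S' N = (∑ k ∈ Finset.Ico 1 N, (s k : ℚ)) + (s N : ℚ) / 2)
    (N : ℕ) (hN : 1 ≤ N) :
    S' (2 * N) = 3 * S' N := by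
  obtain rfl : S' = trapezoidSum (fun k ↦ (s k : ℚ)) := funext hS'
  exact trapezoidSum_two_mul _ (fun n hn ↦ by simp [heven n hn])
    (fun n hn ↦ by simp [hodd n hn]) hN

theorem stern_partial_sum_recurrence (s : ℕ → ℕ)
    (h1 : s 1 = 1)
    (heven : ∀ n : ℕ, 1 ≤ n → s (2 * n) = s n)
    (hodd : ∀ n : ℕ, 1 ≤ n → s (2 * n + 1) = s n + s (n + 1))
    (S' : ℕ → ℚ) (hS' : ∀ N : ℕ, S' N = (∑ k ∈ Finset.Ico 1 N, (s k : ℚ)) + (s N : ℚ) / 2)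
    (N : ℕ) (hN : 1 ≤ N) :
    S' (2 * N) = 3 * S' N :=
  stern_partial_sum_recurrence_general s heven hodd S' hS' N hN
end

section
/- Let s : ℕ≥1 → ℕ be Stern's diatomic sequence. For every k ≥ 0, the maximum of s(n) over n in [2^k, 2^{k+1}) equals the Fibonacci number F(k+2), where F(1) = F(2) = 1. -/
theorem stern_max_eq_fib (s : ℕ → ℕ)
    (h1 : s 1 = 1)
    (heven : ∀ n : ℕ, 1 ≤ n → s (2 * n) = s n)
    (hodd : ∀ n : ℕ, 1 ≤ n → s (2 * n + 1) = s n + s (n + 1))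
    (k : ℕ) :
    (Finset.Ico (2 ^ k) (2 ^ (k + 1))).sup s = Nat.fib (k + 2) := by
  have h2 : s 2 = 1 := by have := heven 1 le_rfl; simpa [h1] using this
  -- Upper bound, by induction on rows
  have key : ∀ k : ℕ, ∀ n : ℕ, 2 ^ k ≤ n → n < 2 ^ (k + 1) →
      s n ≤ Nat.fib (k + 2) ∧ s (n + 1) ≤ Nat.fib (k + 2) ∧
        s n + s (n + 1) ≤ Nat.fib (k + 3) := by
    intro k
    induction k with
    | zero =>
      intro n hlo hhi
      interval_cases n
      have h2' : s (1 + 1) = 1 := h2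
      have f2 : Nat.fib (0 + 2) = 1 := rfl
      have f3 : Nat.fib (0 + 3) = 2 := rfl
      refine ⟨by omega, by omega, by omega⟩
    | succ k ih =>
      intro n hlo hhi
      have hp : 2 ^ (k + 1) = 2 * 2 ^ k := by ring
      have hp2 : 2 ^ (k + 2) = 2 * (2 * 2 ^ k) := by ring
      have hposk : 1 ≤ 2 ^ k := Nat.one_le_two_pow
      set m := n / 2 with hm
      have hm1 : 2 ^ k ≤ m := by omega
      have hm2 : m < 2 ^ (k + 1) := by omega
      have hmpos : 1 ≤ m := le_trans hposk hm1
      obtain ⟨hb1, hb2, hb3⟩ := ih m hm1 hm2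
      have hf3 : Nat.fib (k + 3) = Nat.fib (k + 1) + Nat.fib (k + 2) :=
        Nat.fib_add_two
      have hf4 : Nat.fib (k + 4) = Nat.fib (k + 2) + Nat.fib (k + 3) :=
        Nat.fib_add_two
      have hfmono : Nat.fib (k + 2) ≤ Nat.fib (k + 3) := by omega
      have eq1 : Nat.fib (k + 1 + 2) = Nat.fib (k + 3) := rfl
      have eq2 : Nat.fib (k + 1 + 3) = Nat.fib (k + 4) := rfl
      rcases Nat.even_or_odd n with he | ho
      · have hne : n = 2 * m := by
          obtain ⟨t, ht⟩ := he; omega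
        have e1 : s n = s m := by rw [hne]; exact heven m hmpos
        have e2 : s (n + 1) = s m + s (m + 1) := by
          have : n + 1 = 2 * m + 1 := by omega
          rw [this]; exact hodd m hmpos
        refine ⟨?_, ?_, ?_⟩ <;> omega
      · have hno : n = 2 * m + 1 := by
          obtain ⟨t, ht⟩ := ho; omega
        have e1 : s n = s m + s (m + 1) := by rw [hno]; exact hodd m hmpos
        have e2 : s (n + 1) = s (m + 1) := by
          have : n + 1 = 2 * (m + 1) := by omega
          rw [this]; exact heven (m + 1) (by omega)
        refine ⟨?_, ?_, ?_⟩ <;> omega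
  -- Existence of an element achieving fib (k+2)
  have exist : ∀ k : ℕ, ∃ n, 2 ^ k ≤ n ∧
      ((n < 2 ^ (k + 1) ∧ s n = Nat.fib (k + 2) ∧ s (n + 1) = Nat.fib (k + 1)) ∨
       (n + 1 < 2 ^ (k + 1) ∧ s n = Nat.fib (k + 1) ∧ s (n + 1) = Nat.fib (k + 2))) := by
    intro k
    induction k with
    | zero =>
      exact ⟨1, le_rfl, Or.inl ⟨by norm_num, by simp [h1], by simp [h2]⟩⟩
    | succ k ih =>
      obtain ⟨n, hn, hcase⟩ := ih
      have hp : 2 ^ (k + 1) = 2 * 2 ^ k := by ring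
      have hp2 : 2 ^ (k + 2) = 2 * (2 * 2 ^ k) := by ring
      have hposk : 1 ≤ 2 ^ k := Nat.one_le_two_pow
      have hnpos : 1 ≤ n := le_trans hposk hn
      have hf3 : Nat.fib (k + 3) = Nat.fib (k + 1) + Nat.fib (k + 2) :=
        Nat.fib_add_two
      have eq1 : Nat.fib (k + 1 + 1) = Nat.fib (k + 2) := rfl
      have eq2 : Nat.fib (k + 1 + 2) = Nat.fib (k + 3) := rfl
      rcases hcase with ⟨hlt, hv1, hv2⟩ | ⟨hlt, hv1, hv2⟩
      · -- descending state: go to 2n, new ascending state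
        refine ⟨2 * n, by omega, Or.inr ⟨by omega, ?_, ?_⟩⟩
        · rw [heven n hnpos, hv1]
        · rw [hodd n hnpos, hv1, hv2]; omega
      · -- ascending state: go to 2n+1, new descending state
        refine ⟨2 * n + 1, by omega, Or.inl ⟨by omega, ?_, ?_⟩⟩
        · rw [hodd n hnpos, hv1, hv2]; omega
        · have : 2 * n + 1 + 1 = 2 * (n + 1) := by ring
          rw [this, heven (n + 1) (by omega), hv2]
  apply le_antisymm
  · apply Finset.sup_le
    intro n hn
    rw [Finset.mem_Ico] at hn
    exact (key k n hn.1 hn.2).1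
  · obtain ⟨n, hn, hcase⟩ := exist k
    rcases hcase with ⟨hlt, hv1, _⟩ | ⟨hlt, _, hv2⟩
    · calc Nat.fib (k + 2) = s n := hv1.symm
        _ ≤ _ := Finset.le_sup (Finset.mem_Ico.mpr ⟨hn, hlt⟩)
    · calc Nat.fib (k + 2) = s (n + 1) := hv2.symm
        _ ≤ _ := Finset.le_sup (Finset.mem_Ico.mpr ⟨by omega, hlt⟩)
end

section
/- There exists a continuous 1-periodic function ψ : ℝ → ℝ such that for all N ≥ 1, Σ_{k=1}^{N} s(k) = N^{log₂ 3}·ψ(log₂ N) + s(N)/2, where s is Stern's diatomic sequence. -/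
/-!
Put `f n = ∑_{k ≤ n} s k - s n / 2`. The recursion gives `f (2n) = 3 f n`, and `f` is
nondecreasing with increments `(s n + s (n+1)) / 2 ≤ n + 1`. Hence `Φ t = lim f ⌊t 2ⁿ⌋ / 3ⁿ`
exists, is monotone and satisfies `Φ (2t) = 3 Φ t` and `Φ N = f N`. On `[0, m]` the values of `Φ`
at consecutive points of `2⁻ⁿℤ` differ by at most `m (2/3)ⁿ`, so `Φ` has no jumps and is
continuous. Then `ψ x = Φ (2^x) / 3^x` is continuous, `1`-periodic, and
`f N = N ^ log₂ 3 · ψ (log₂ N)`.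
-/

open Filter Topology Finset

theorem exists_apply_mem_Icc_of_step_le {g : ℕ → ℝ} {y δ : ℝ} {K : ℕ} (h0 : g 0 < y)
    (hK : y ≤ g K) (hstep : ∀ k < K, g (k + 1) ≤ g k + δ) : ∃ k, g k ∈ Set.Icc y (y + δ) := by
  induction K with
  | zero => exact absurd hK (not_le.2 h0)
  | succ K ih =>
    by_cases hyK : y ≤ g K
    · exact ih hyK fun k hk => hstep k (by omega)
    · exact ⟨K + 1, hK, by linarith [hstep K (by omega)]⟩

theorem Real.rpow_logb_comm {a b t : ℝ} (ha : 0 < a) (ha1 : a ≠ 1) (hb : 0 < b) (ht : 0 < t) :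
    t ^ Real.logb a b = b ^ Real.logb a t := by
  conv_lhs => rw [← Real.rpow_logb ha ha1 ht]
  rw [← Real.rpow_mul ha.le, mul_comm, Real.rpow_mul ha.le, Real.rpow_logb ha ha1 hb]

section Scaling

variable {a : ℕ} {b : ℝ} {f : ℕ → ℝ}

noncomputable def scaledApprox (a : ℕ) (b : ℝ) (f : ℕ → ℝ) (t : ℝ) (n : ℕ) : ℝ :=
  f ⌊t * a ^ n⌋₊ / b ^ n

/-- The limit of the nondecreasing sequence `scaledApprox a b f t`: it extends `f` to `ℝ` and
multiplies by `b` when `t` is multiplied by `a`. -/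
noncomputable def scaledLimit (a : ℕ) (b : ℝ) (f : ℕ → ℝ) (t : ℝ) : ℝ :=
  ⨆ n, scaledApprox a b f t n

theorem apply_pow_mul (hscale : ∀ n, f (a * n) = b * f n) (k M : ℕ) :
    f (a ^ k * M) = b ^ k * f M := by
  induction k with
  | zero => simp
  | succ k ih => rw [pow_succ', mul_assoc, hscale, ih, pow_succ', mul_assoc]

theorem apply_zero_of_scale (hscale : ∀ n, f (a * n) = b * f n) (hb : b ≠ 1) : f 0 = 0 := by
  have h := hscale 0
  rw [mul_zero] at h
  have : (b - 1) * f 0 = 0 := by linarith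
  exact (mul_eq_zero.1 this).resolve_left (sub_ne_zero.2 hb)

theorem mul_floor_le_floor_mul (x : ℝ) : a * ⌊x⌋₊ ≤ ⌊a * x⌋₊ := by
  rcases le_or_gt x 0 with hx | hx
  · simp [Nat.floor_of_nonpos hx]
  · exact Nat.le_floor (by push_cast; gcongr; exact Nat.floor_le hx.le)

theorem scaledApprox_mono (hb : 0 < b) (hmono : Monotone f) (hscale : ∀ n, f (a * n) = b * f n)
    (t : ℝ) : Monotone (scaledApprox a b f t) := by
  refine monotone_nat_of_le_succ fun n => ?_
  have h : a * ⌊t * a ^ n⌋₊ ≤ ⌊t * a ^ (n + 1)⌋₊ := by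
    rw [pow_succ, ← mul_assoc, mul_comm _ (a : ℝ)]
    exact mul_floor_le_floor_mul _
  have := hmono h
  rw [hscale] at this
  rw [scaledApprox, scaledApprox, pow_succ b, div_le_div_iff₀ (by positivity) (by positivity)]
  nlinarith [pow_pos hb n]

theorem scaledApprox_le_ceil (hb : 0 < b) (hmono : Monotone f)
    (hscale : ∀ n, f (a * n) = b * f n) (t : ℝ) (n : ℕ) :
    scaledApprox a b f t n ≤ f ⌈t⌉₊ := by
  have h : ⌊t * a ^ n⌋₊ ≤ a ^ n * ⌈t⌉₊ := Nat.floor_le_of_le (by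
    push_cast
    rw [mul_comm]
    gcongr
    exact Nat.le_ceil t)
  have := hmono h
  rw [apply_pow_mul hscale] at this
  rw [scaledApprox, div_le_iff₀ (by positivity)]
  linarith

theorem tendsto_scaledApprox (hb : 0 < b) (hmono : Monotone f)
    (hscale : ∀ n, f (a * n) = b * f n) (t : ℝ) :
    Tendsto (scaledApprox a b f t) atTop (𝓝 (scaledLimit a b f t)) :=
  tendsto_atTop_ciSup (scaledApprox_mono hb hmono hscale t)
    ⟨f ⌈t⌉₊, by rintro _ ⟨n, rfl⟩; exact scaledApprox_le_ceil hb hmono hscale t n⟩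

theorem scaledLimit_div_pow (ha : a ≠ 0) (hb : 0 < b) (hmono : Monotone f)
    (hscale : ∀ n, f (a * n) = b * f n) (M n : ℕ) :
    scaledLimit a b f (M / a ^ n) = f M / b ^ n := by
  have hconst : ∀ k, scaledApprox a b f (M / a ^ n) (k + n) = f M / b ^ n := by
    intro k
    have : (M : ℝ) / a ^ n * a ^ (k + n) = (a ^ k * M : ℕ) := by
      push_cast
      field_simp
      ring
    rw [scaledApprox, this, Nat.floor_natCast, apply_pow_mul hscale, pow_add]
    field_simp
  refine tendsto_nhds_unique ((tendsto_scaledApprox hb hmono hscale _).comp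
    (tendsto_add_atTop_nat n)) ?_
  simp only [Function.comp_def, hconst, tendsto_const_nhds]

theorem scaledLimit_natCast (ha : a ≠ 0) (hb : 0 < b) (hmono : Monotone f)
    (hscale : ∀ n, f (a * n) = b * f n) (M : ℕ) : scaledLimit a b f M = f M := by
  simpa using scaledLimit_div_pow ha hb hmono hscale M 0

theorem scaledLimit_mul (hb : 0 < b) (hmono : Monotone f) (hscale : ∀ n, f (a * n) = b * f n)
    (t : ℝ) : scaledLimit a b f (a * t) = b * scaledLimit a b f t := by
  have hshift : ∀ n, scaledApprox a b f (a * t) n = b * scaledApprox a b f t (n + 1) := by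
    intro n
    rw [scaledApprox, scaledApprox, pow_succ, pow_succ]
    field_simp
  refine tendsto_nhds_unique (tendsto_scaledApprox hb hmono hscale _) ?_
  rw [funext hshift]
  exact ((tendsto_scaledApprox hb hmono hscale t).comp (tendsto_add_atTop_nat 1)).const_mul b

theorem scaledLimit_mono (hb : 0 < b) (hmono : Monotone f) (hscale : ∀ n, f (a * n) = b * f n) :
    Monotone (scaledLimit a b f) := fun t u htu =>
  ciSup_mono ⟨f ⌈u⌉₊, by rintro _ ⟨n, rfl⟩; exact scaledApprox_le_ceil hb hmono hscale u n⟩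
    fun n => div_le_div_of_nonneg_right (hmono (Nat.floor_le_floor (by gcongr))) (by positivity)

theorem scaledLimit_of_nonpos (hf0 : f 0 = 0) {t : ℝ} (ht : t ≤ 0) : scaledLimit a b f t = 0 := by
  have : ∀ n, scaledApprox a b f t n = 0 := fun n => by
    rw [scaledApprox, Nat.floor_of_nonpos (mul_nonpos_of_nonpos_of_nonneg ht (by positivity)),
      hf0, zero_div]
  simp [scaledLimit, this]

theorem scaledLimit_succ_div_pow_le (ha : a ≠ 0) (hb : 0 < b) (hmono : Monotone f)
    (hscale : ∀ n, f (a * n) = b * f n) (hstep : ∀ n, f (n + 1) ≤ f n + (n + 1)) (k n : ℕ) :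
    scaledLimit a b f ((k + 1 : ℕ) / a ^ n) ≤ scaledLimit a b f (k / a ^ n) + (k + 1) / b ^ n := by
  rw [scaledLimit_div_pow ha hb hmono hscale, scaledLimit_div_pow ha hb hmono hscale, ← add_div,
    div_le_div_iff_of_pos_right (by positivity)]
  exact hstep k

/-- Adding `t` makes the range dense also below `0`, where `scaledLimit` vanishes. -/
theorem denseRange_scaledLimit_add_id (ha : 1 < a) (hab : (a : ℝ) < b) (hmono : Monotone f)
    (hscale : ∀ n, f (a * n) = b * f n) (hstep : ∀ n, f (n + 1) ≤ f n + (n + 1)) :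
    DenseRange fun t => scaledLimit a b f t + t := by
  have ha' : (1 : ℝ) < a := by exact_mod_cast ha
  have hb : 0 < b := by linarith
  have hf0 : f 0 = 0 := apply_zero_of_scale hscale (by linarith)
  rw [Metric.denseRange_iff]
  intro y r hr
  rcases le_or_gt y 0 with hy | hy
  · exact ⟨y, by simpa [scaledLimit_of_nonpos hf0 hy] using hr⟩
  set m := ⌈y⌉₊
  -- on `[0, m]`, the grid `a⁻ⁿ ℕ` has mesh `a⁻ⁿ` and `scaledLimit` grows by at most `m (a / b)ⁿ`
  -- from one grid point to the next
  have hδ : Tendsto (fun n : ℕ => m * ((a : ℝ) / b) ^ n + (a : ℝ)⁻¹ ^ n) atTop (𝓝 0) := by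
    have h1 := tendsto_pow_atTop_nhds_zero_of_lt_one (by positivity : 0 ≤ (a : ℝ) / b)
      ((div_lt_one hb).2 hab)
    have h2 := tendsto_pow_atTop_nhds_zero_of_lt_one (by positivity : 0 ≤ (a : ℝ)⁻¹)
      (inv_lt_one_of_one_lt₀ ha')
    simpa using (h1.const_mul (m : ℝ)).add h2
  obtain ⟨n, hn⟩ := (hδ.eventually (gt_mem_nhds hr)).exists
  set g : ℕ → ℝ := fun k => scaledLimit a b f (k / a ^ n) + k / a ^ n
  have hg0 : g 0 < y := by simpa [g, scaledLimit_of_nonpos hf0] using hy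
  have hgK : y ≤ g (m * a ^ n) := by
    have hm : ((m * a ^ n : ℕ) : ℝ) / a ^ n = m := by push_cast; field_simp
    have := scaledLimit_mono hb hmono hscale (Nat.cast_nonneg m)
    simp only [g, hm, scaledLimit_of_nonpos hf0 le_rfl] at this ⊢
    linarith [Nat.le_ceil y]
  have hgstep : ∀ k < m * a ^ n, g (k + 1) ≤ g k + (m * ((a : ℝ) / b) ^ n + (a : ℝ)⁻¹ ^ n) := by
    intro k hk
    have hk' : (k : ℝ) + 1 ≤ m * a ^ n := by exact_mod_cast hk
    have hΦ := scaledLimit_succ_div_pow_le (by omega) hb hmono hscale hstep k n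
    have hmesh : ((k + 1 : ℕ) : ℝ) / a ^ n = k / a ^ n + (a : ℝ)⁻¹ ^ n := by
      push_cast; rw [inv_pow]; ring
    have hgrowth : ((k : ℝ) + 1) / b ^ n ≤ m * ((a : ℝ) / b) ^ n := by
      rw [div_pow, ← mul_div_assoc]; gcongr
    simp only [g, hmesh] at hΦ ⊢
    linarith
  obtain ⟨k, hyk, hky⟩ := exists_apply_mem_Icc_of_step_le hg0 hgK hgstep
  refine ⟨k / a ^ n, ?_⟩
  rw [Real.dist_eq, abs_lt]
  constructor <;> linarith

theorem continuous_scaledLimit (ha : 1 < a) (hab : (a : ℝ) < b) (hmono : Monotone f)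
    (hscale : ∀ n, f (a * n) = b * f n) (hstep : ∀ n, f (n + 1) ≤ f n + (n + 1)) :
    Continuous (scaledLimit a b f) := by
  have hb : 0 < b := by linarith [(by exact_mod_cast ha.le : (1 : ℝ) ≤ a)]
  have hG := ((scaledLimit_mono hb hmono hscale).add monotone_id).continuous_of_denseRange
    (denseRange_scaledLimit_add_id ha hab hmono hscale hstep)
  exact (hG.sub continuous_id).congr fun t => by simp

theorem exists_periodic_of_apply_mul (ha : 1 < a) (hab : (a : ℝ) < b) (hmono : Monotone f)
    (hscale : ∀ n, f (a * n) = b * f n) (hstep : ∀ n, f (n + 1) ≤ f n + (n + 1)) :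
    ∃ ψ : ℝ → ℝ, Continuous ψ ∧ Function.Periodic ψ 1 ∧
      ∀ N : ℕ, 1 ≤ N → f N = (N : ℝ) ^ Real.logb a b * ψ (Real.logb a N) := by
  have ha' : (1 : ℝ) < a := by exact_mod_cast ha
  have hb : 0 < b := by linarith
  refine ⟨fun x => scaledLimit a b f ((a : ℝ) ^ x) / b ^ x, ?_, fun x => ?_, fun N hN => ?_⟩
  · have hΦ := continuous_scaledLimit ha hab hmono hscale hstep
    have hapos : (0 : ℝ) < a := by linarith
    exact (hΦ.comp (Real.continuous_const_rpow hapos.ne')).div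
      (Real.continuous_const_rpow hb.ne') fun x => (Real.rpow_pos_of_pos hb x).ne'
  · dsimp only
    rw [Real.rpow_add_one (by positivity), Real.rpow_add_one hb.ne', mul_comm _ (a : ℝ),
      scaledLimit_mul hb hmono hscale]
    field_simp
  · have hN : (0 : ℝ) < N := by exact_mod_cast hN
    have hbN := (Real.rpow_pos_of_pos hb (Real.logb a N)).ne'
    dsimp only
    rw [Real.rpow_logb_comm (by positivity) ha'.ne' hb hN,
      Real.rpow_logb (by positivity) ha'.ne' hN, scaledLimit_natCast (by omega) hb hmono hscale]
    field_simp

end Scaling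

structure IsStern (s : ℕ → ℕ) : Prop where
  one : s 1 = 1
  two_mul : ∀ n, 1 ≤ n → s (2 * n) = s n
  two_mul_add_one : ∀ n, 1 ≤ n → s (2 * n + 1) = s n + s (n + 1)

/-- Set to `0` at `n = 0`, since `s 0` is left unconstrained. -/
noncomputable def correctedPartialSum (s : ℕ → ℕ) (n : ℕ) : ℝ :=
  if n = 0 then 0 else ∑ k ∈ Icc 1 n, (s k : ℝ) - s n / 2

section CorrectedPartialSum

variable {s : ℕ → ℕ}

theorem correctedPartialSum_of_ne_zero {n : ℕ} (hn : n ≠ 0) :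
    correctedPartialSum s n = ∑ k ∈ Icc 1 n, (s k : ℝ) - s n / 2 := if_neg hn

theorem correctedPartialSum_succ {n : ℕ} (hn : 1 ≤ n) :
    correctedPartialSum s (n + 1) = correctedPartialSum s n + (s n + s (n + 1)) / 2 := by
  rw [correctedPartialSum_of_ne_zero (by omega), correctedPartialSum_of_ne_zero (by omega),
    sum_Icc_succ_top (by omega)]
  ring

theorem monotone_correctedPartialSum : Monotone (correctedPartialSum s) := by
  refine monotone_nat_of_le_succ fun n => ?_
  rcases Nat.eq_zero_or_pos n with rfl | hn
  · simp [correctedPartialSum]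
  · rw [correctedPartialSum_succ hn]
    linarith [(by positivity : (0 : ℝ) ≤ (s n + s (n + 1)) / 2)]

end CorrectedPartialSum

namespace IsStern

variable {s : ℕ → ℕ}

theorem le_self (hs : IsStern s) {n : ℕ} (hn : 1 ≤ n) : s n ≤ n := by
  induction n using Nat.strong_induction_on with
  | _ n ih =>
    obtain ⟨k, rfl | rfl⟩ := Nat.even_or_odd' n
    · rw [hs.two_mul k (by omega)]
      have := ih k (by omega) (by omega)
      omega
    · rcases Nat.eq_zero_or_pos k with rfl | hk
      · simp [hs.one]
      · rw [hs.two_mul_add_one k hk]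
        have := ih k (by omega) hk
        have := ih (k + 1) (by omega) (by omega)
        omega

theorem sum_Icc_two_mul_add (hs : IsStern s) {n : ℕ} (hn : 1 ≤ n) :
    ∑ k ∈ Icc 1 (2 * n), s k + s n = 3 * ∑ k ∈ Icc 1 n, s k := by
  induction n, hn using Nat.le_induction with
  | base =>
    have h2 := hs.two_mul 1 le_rfl
    simp only [mul_one] at h2
    simp [show Icc 1 2 = {1, 2} by decide, hs.one, h2]
  | succ n hn ih =>
    rw [show 2 * (n + 1) = 2 * n + 1 + 1 by ring, sum_Icc_succ_top (by omega),
      sum_Icc_succ_top (by omega), sum_Icc_succ_top (by omega), hs.two_mul_add_one n hn,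
      show 2 * n + 1 + 1 = 2 * (n + 1) by ring, hs.two_mul (n + 1) (by omega)]
    omega

theorem correctedPartialSum_two_mul (hs : IsStern s) (n : ℕ) :
    correctedPartialSum s (2 * n) = 3 * correctedPartialSum s n := by
  rcases Nat.eq_zero_or_pos n with rfl | hn
  · simp [correctedPartialSum]
  have h : ∑ k ∈ Icc 1 (2 * n), (s k : ℝ) + s n = 3 * ∑ k ∈ Icc 1 n, (s k : ℝ) := by
    exact_mod_cast hs.sum_Icc_two_mul_add hn
  rw [correctedPartialSum_of_ne_zero (by omega), correctedPartialSum_of_ne_zero (by omega),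
    hs.two_mul n hn]
  linarith

theorem correctedPartialSum_succ_le (hs : IsStern s) (n : ℕ) :
    correctedPartialSum s (n + 1) ≤ correctedPartialSum s n + (n + 1) := by
  rcases Nat.eq_zero_or_pos n with rfl | hn
  · norm_num [correctedPartialSum, hs.one]
  · have hsn : (s n : ℝ) ≤ n := by exact_mod_cast hs.le_self hn
    have hsn1 : (s (n + 1) : ℝ) ≤ n + 1 := by exact_mod_cast hs.le_self (by omega : 1 ≤ n + 1)
    rw [correctedPartialSum_succ hn]
    linarith

end IsStern

theorem stern_partial_sums_periodic (s : ℕ → ℕ)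
    (h1 : s 1 = 1)
    (heven : ∀ n : ℕ, 1 ≤ n → s (2 * n) = s n)
    (hodd : ∀ n : ℕ, 1 ≤ n → s (2 * n + 1) = s n + s (n + 1)) :
    ∃ ψ : ℝ → ℝ, Continuous ψ ∧ Function.Periodic ψ 1 ∧
      ∀ N : ℕ, 1 ≤ N →
        (∑ k ∈ Finset.Icc 1 N, (s k : ℝ))
          = (N : ℝ) ^ (Real.logb 2 3) * ψ (Real.logb 2 N) + (s N : ℝ) / 2 := by
  have hs : IsStern s := ⟨h1, heven, hodd⟩
  obtain ⟨ψ, hψ, hperiodic, hf⟩ := exists_periodic_of_apply_mul (a := 2) (b := 3) one_lt_two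
    (by norm_num) monotone_correctedPartialSum hs.correctedPartialSum_two_mul
    hs.correctedPartialSum_succ_le
  refine ⟨ψ, hψ, hperiodic, fun N hN => ?_⟩
  have h := hf N hN
  rw [correctedPartialSum_of_ne_zero (by omega)] at h
  push_cast at h
  linarith
end

section
/- Let α, β, γ be complex numbers and set A = [[1,0,0],[α,β,γ],[0,0,1]], B = [[α,β,γ],[0,1,0],[0,0,1]], v = (α, β, γ) (a row vector). Then the following identities hold: v·A·A·A = (β²+β+1)·v·A + (−β²−β)·v, v·A·A·B = (β+1)·v·A·B + (−β)·v·B, v·A·B·A = (β+1)·v·B·A + (−β)·v, v·A·B·B = (α+1)·v·A·B + (−α)·v·A, v·B·A·A = (β+1)·v·B·A + (−β)·v·B, v·B·A·B = (α+1)·v·A·B + (−α)·v, v·B·B·A = (α+1)·v·B·A + (−α)·v·A, and v·B·B·B = (α²+α+1)·v·B + (−α²−α)·v. -/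
set_option maxHeartbeats 1000000

theorem matrix_identities (α β γ : ℂ) :
    let A : Matrix (Fin 3) (Fin 3) ℂ := !![1, 0, 0; α, β, γ; 0, 0, 1]
    let B : Matrix (Fin 3) (Fin 3) ℂ := !![α, β, γ; 0, 1, 0; 0, 0, 1]
    let v : Matrix (Fin 1) (Fin 3) ℂ := !![α, β, γ]
    v * A * A * A = (β ^ 2 + β + 1) • (v * A) + (-β ^ 2 - β) • v ∧
    v * A * A * B = (β + 1) • (v * A * B) + (-β) • (v * B) ∧
    v * A * B * A = (β + 1) • (v * B * A) + (-β) • v ∧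
    v * A * B * B = (α + 1) • (v * A * B) + (-α) • (v * A) ∧
    v * B * A * A = (β + 1) • (v * B * A) + (-β) • (v * B) ∧
    v * B * A * B = (α + 1) • (v * A * B) + (-α) • v ∧
    v * B * B * A = (α + 1) • (v * B * A) + (-α) • (v * A) ∧
    v * B * B * B = (α ^ 2 + α + 1) • (v * B) + (-α ^ 2 - α) • v := by
  refine ⟨?_, ?_, ?_, ?_, ?_, ?_, ?_, ?_⟩ <;>
    · ext i j
      fin_cases i <;> fin_cases j <;>
        simp [Matrix.mul_apply, Fin.sum_univ_three, Matrix.vecHead, Matrix.vecTail] <;> ring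
end

section
/- Let α, β, γ be complex numbers, A = [[1,0,0],[α,β,γ],[0,0,1]], B = [[α,β,γ],[0,1,0],[0,0,1]], v = (α,β,γ) a row vector, w = (1,1,1)ᵀ a column vector. Then for every ν ≥ 1 and every finite word (ε_1, …, ε_{ν−1}) over {0,1}, writing A(0) = A and A(1) = B: v·A(ε_1)⋯A(ε_{ν−1})·w = (1,1,1)·A(ε_1)ᵀ⋯A(ε_{ν−1})ᵀ·(α,β,γ)ᵀ. -/
open Matrix

private lemma intertwine_prod {n : ℕ} (M : Matrix (Fin n) (Fin n) ℂ)
    (A : Bool → Matrix (Fin n) (Fin n) ℂ)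
    (h : ∀ b, M * A b = (A b)ᵀ * M) (L : List Bool) :
    M * (L.map A).prod = (L.map fun b => (A b)ᵀ).prod * M := by
  induction L with
  | nil => simp
  | cons b L ih =>
      simp only [List.map_cons, List.prod_cons, ← Matrix.mul_assoc, h b]
      rw [Matrix.mul_assoc, ih, Matrix.mul_assoc]

private lemma fix_right {n : ℕ} (w : Matrix (Fin n) (Fin 1) ℂ)
    (A : Bool → Matrix (Fin n) (Fin n) ℂ)
    (h : ∀ b, A b * w = w) (L : List Bool) :
    (L.map A).prod * w = w := by
  induction L with
  | nil => simp
  | cons b L ih => simp [Matrix.mul_assoc, ih, h b]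

private lemma fix_left {n : ℕ} (u : Matrix (Fin 1) (Fin n) ℂ)
    (A : Bool → Matrix (Fin n) (Fin n) ℂ)
    (h : ∀ b, u * A b = u) (L : List Bool) :
    u * (L.map A).prod = u := by
  induction L with
  | nil => simp
  | cons b L ih => simp [← Matrix.mul_assoc, h b, ih]

open Matrix
theorem matrix_product_digit_reversal (α β γ : ℂ)
    (A : Bool → Matrix (Fin 3) (Fin 3) ℂ)
    (hA0 : A false = !![1, 0, 0; α, β, γ; 0, 0, 1])
    (hA1 : A true = !![α, β, γ; 0, 1, 0; 0, 0, 1])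
    (L : List Bool) :
    !![α, β, γ] * (L.map A).prod * !![(1 : ℂ); 1; 1]
      = !![(1 : ℂ), 1, 1] * (L.map fun b => (A b)ᵀ).prod * !![α; β; γ] := by
  by_cases hs : α + β + γ = 1
  · -- degenerate case: w is fixed by A b, and ones is fixed by (A b)ᵀ on the left
    have h1 : ∀ b, A b * !![(1 : ℂ); 1; 1] = !![(1 : ℂ); 1; 1] := by
      intro b
      cases b <;> simp only [hA0, hA1] <;>
      · ext i j
        fin_cases i <;> fin_cases j <;>
          simp [Matrix.mul_apply, Fin.sum_univ_succ, Matrix.vecHead, Matrix.vecTail] <;>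
          linear_combination hs
    have h2 : ∀ b, !![(1 : ℂ), 1, 1] * (A b)ᵀ = !![(1 : ℂ), 1, 1] := by
      intro b
      cases b <;> simp only [hA0, hA1] <;>
      · ext i j
        fin_cases i <;> fin_cases j <;>
          simp [Matrix.mul_apply, Fin.sum_univ_succ, Matrix.vecHead, Matrix.vecTail,
            Matrix.transpose_apply] <;>
          linear_combination hs
    rw [Matrix.mul_assoc, fix_right _ A h1, fix_left _ _ h2]
    ext i j
    fin_cases i <;> fin_cases j <;>
      simp [Matrix.mul_apply, Fin.sum_univ_succ, Matrix.vecHead, Matrix.vecTail] <;>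
      linear_combination hs
  · set M : Matrix (Fin 3) (Fin 3) ℂ :=
      !![α*α-α, α*β, α*γ; α*β, β*β-β, β*γ; α*γ, β*γ, γ*γ-γ] with hM
    have hint : ∀ b, M * A b = (A b)ᵀ * M := by
      intro b
      cases b <;> simp only [hA0, hA1] <;>
      · ext i j
        fin_cases i <;> fin_cases j <;>
          simp [hM, Matrix.mul_apply, Fin.sum_univ_succ, Matrix.vecHead, Matrix.vecTail,
            Matrix.transpose_apply] <;>
          ring
    have hleft : !![(1 : ℂ), 1, 1] * M = (α + β + γ - 1) • !![α, β, γ] := by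
      ext i j
      fin_cases i <;> fin_cases j <;>
        simp [hM, Matrix.mul_apply, Fin.sum_univ_succ, Matrix.vecHead, Matrix.vecTail] <;>
        ring
    have hright : M * !![(1 : ℂ); 1; 1] = (α + β + γ - 1) • !![α; β; γ] := by
      ext i j
      fin_cases i <;> fin_cases j <;>
        simp [hM, Matrix.mul_apply, Fin.sum_univ_succ, Matrix.vecHead, Matrix.vecTail] <;>
        ring
    have hcomm := intertwine_prod M A hint L
    have key : (α + β + γ - 1) •
        (!![α, β, γ] * (L.map A).prod * !![(1 : ℂ); 1; 1])
        = (α + β + γ - 1) •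
        (!![(1 : ℂ), 1, 1] * (L.map fun b => (A b)ᵀ).prod * !![α; β; γ]) := by
      have e1 : !![(1 : ℂ), 1, 1] * (M * (L.map A).prod) * !![(1 : ℂ); 1; 1]
          = (α + β + γ - 1) •
            (!![α, β, γ] * (L.map A).prod * !![(1 : ℂ); 1; 1]) := by
        rw [← Matrix.mul_assoc, hleft, Matrix.smul_mul, Matrix.smul_mul]
      have e2 : !![(1 : ℂ), 1, 1] * ((L.map fun b => (A b)ᵀ).prod * M) * !![(1 : ℂ); 1; 1]
          = (α + β + γ - 1) •
            (!![(1 : ℂ), 1, 1] * (L.map fun b => (A b)ᵀ).prod * !![α; β; γ]) := by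
        rw [Matrix.mul_assoc, Matrix.mul_assoc, hright, Matrix.mul_smul, Matrix.mul_smul,
          ← Matrix.mul_assoc]
      rw [← e1, ← e2, hcomm]
    have hne : (α + β + γ - 1) ≠ 0 := sub_ne_zero.mpr hs
    exact smul_right_injective _ hne key
end
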